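/- arXiv:1901.00989 — 12 statements merged into one kernel-verified Lean document; each statement's English description precedes it below -/
import Mathlib

section
/- For every integer n ≥ 3, the identity map i ↦ i on {0, 1, …, n} is a lambda colouring of 𝔾_n, and the lambda chromatic number of 𝔾_n equals n. -/
/-- A lambda colouring (`L(2,1)`-colouring) of a simple graph: adjacent vertices get
values at least 2 apart, and vertices at distance 2 get distinct values. -/
def IsLambdaColoring {V : Type*} (G : SimpleGraph V) (c : V → ℕ) : Prop :=
  (∀ u v, G.Adj u v → 2 ≤ Nat.dist (c u) (c v)) ∧
  (∀ u v, G.dist u v = 2 → c u ≠ c v)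

/-- The lambda chromatic number: the minimum over all lambda colourings of the
maximum assigned value. -/
noncomputable def lambdaChromatic {V : Type*} [Fintype V] (G : SimpleGraph V) : ℕ :=
  sInf {t : ℕ | ∃ c : V → ℕ, IsLambdaColoring G c ∧ ∀ v, c v ≤ t}

/-- The graph `𝔾ₙ` on vertex set `{0, 1, …, n}` in which distinct vertices `i` and `j`
are adjacent iff `|i − j| ≥ 2`. -/
def Gn (n : ℕ) : SimpleGraph (Fin (n + 1)) where
  Adj i j := 2 ≤ Nat.dist i.val j.val
  symm := by constructor; intro i j h; rwa [Nat.dist_comm]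
  loopless := by constructor; intro i h; simp [Nat.dist_self] at h

lemma gn_dist_two {n : ℕ} (i j k : Fin (n+1)) (hne : i ≠ j)
    (hnadj : ¬ (Gn n).Adj i j)
    (h1 : (Gn n).Adj i k) (h2 : (Gn n).Adj k j) : (Gn n).dist i j = 2 := by
  have hle : (Gn n).dist i j ≤ 2 := by
    have := SimpleGraph.dist_le (SimpleGraph.Walk.cons h1 (SimpleGraph.Walk.cons h2 SimpleGraph.Walk.nil))
    simpa using this
  have hr : (Gn n).Reachable i j :=
    ⟨SimpleGraph.Walk.cons h1 (SimpleGraph.Walk.cons h2 SimpleGraph.Walk.nil)⟩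
  have h0 : (Gn n).dist i j ≠ 0 := fun h => hne (hr.dist_eq_zero_iff.mp h)
  have h1' : (Gn n).dist i j ≠ 1 := fun h => hnadj (SimpleGraph.dist_eq_one_iff_adj.mp h)
  omega

/-- For every `n ≥ 3`, the identity map `i ↦ i` is a lambda colouring of `𝔾ₙ`, and
the lambda chromatic number of `𝔾ₙ` equals `n`. -/
theorem stmt_1 (n : ℕ) (hn : 3 ≤ n) :
    IsLambdaColoring (Gn n) (fun i => i.val) ∧ lambdaChromatic (Gn n) = n := by
  have hcol : IsLambdaColoring (Gn n) (fun i => i.val) := by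
    constructor
    · intro u v h; exact h
    · intro u v h hne
      have : u = v := Fin.ext hne
      subst this
      simp [SimpleGraph.dist_self] at h
  refine ⟨hcol, ?_⟩
  have hub : lambdaChromatic (Gn n) ≤ n :=
    Nat.sInf_le ⟨fun i => i.val, hcol, fun v => Fin.is_le v⟩
  have hlb : n ≤ lambdaChromatic (Gn n) := by
    refine le_csInf ⟨n, fun i => i.val, hcol, fun v => Fin.is_le v⟩ ?_
    rintro t ⟨c, ⟨hadj, hdist⟩, hle⟩
    by_contra hlt
    push_neg at hlt
    rcases Nat.lt_or_ge n 4 with h4 | h4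
    · -- n = 3
      interval_cases n
      have h02 := hadj 0 2 (show 2 ≤ Nat.dist (0:Fin 4).val (2:Fin 4).val by decide)
      have h03 := hadj 0 3 (show 2 ≤ Nat.dist (0:Fin 4).val (3:Fin 4).val by decide)
      have h13 := hadj 1 3 (show 2 ≤ Nat.dist (1:Fin 4).val (3:Fin 4).val by decide)
      have h23 : c 2 ≠ c 3 := by
        apply hdist
        refine gn_dist_two 2 3 0 (by decide) ?_ ?_ ?_
        · show ¬ 2 ≤ Nat.dist (2:Fin 4).val (3:Fin 4).val; decide
        · show 2 ≤ Nat.dist (2:Fin 4).val (0:Fin 4).val; decide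
        · show 2 ≤ Nat.dist (0:Fin 4).val (3:Fin 4).val; decide
      have l0 := hle 0
      have l1 := hle 1
      have l2 := hle 2
      have l3 := hle 3
      simp [Nat.dist] at h02 h03 h13
      omega
    · -- n ≥ 4: c injective
      have hinj : Function.Injective c := by
        intro a b hab
        by_contra hne
        have hv : a.val ≠ b.val := fun h => hne (Fin.ext h)
        rcases le_or_gt 2 (Nat.dist a.val b.val) with h | h
        · have := hadj a b h
          rw [hab] at this
          simp [Nat.dist_self] at this
        · have hav : a.val ≤ n := Fin.is_le a
          have hbv : b.val ≤ n := Fin.is_le b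
          obtain ⟨m, hmn, hm⟩ : ∃ m, m + 1 ≤ n ∧
              ((a.val = m ∧ b.val = m+1) ∨ (a.val = m+1 ∧ b.val = m)) := by
            simp [Nat.dist] at h
            rcases Nat.lt_or_ge a.val b.val with h' | h'
            · exact ⟨a.val, by omega, Or.inl ⟨rfl, by omega⟩⟩
            · exact ⟨b.val, by omega, Or.inr ⟨by omega, rfl⟩⟩
          obtain ⟨kv, hkn, hk1, hk2⟩ : ∃ kv, kv ≤ n ∧
              2 ≤ Nat.dist a.val kv ∧ 2 ≤ Nat.dist kv b.val := by
            rcases Nat.lt_or_ge m 2 with hm2 | hm2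
            · exact ⟨m + 3, by omega, by simp [Nat.dist]; omega, by simp [Nat.dist]; omega⟩
            · exact ⟨m - 2, by omega, by simp [Nat.dist]; omega, by simp [Nat.dist]; omega⟩
          have hd2 : (Gn n).dist a b = 2 := by
            refine gn_dist_two a b ⟨kv, by omega⟩ hne ?_ ?_ ?_
            · show ¬ 2 ≤ Nat.dist a.val b.val; omega
            · show 2 ≤ Nat.dist a.val kv; exact hk1
            · show 2 ≤ Nat.dist kv b.val; exact hk2
          exact hdist a b hd2 hab
      have hcard : (Finset.univ.image c).card = n + 1 := by
        rw [Finset.card_image_of_injective _ hinj, Finset.card_univ, Fintype.card_fin]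
      have hsub : Finset.univ.image c ⊆ Finset.range (t+1) := by
        intro x hx
        simp only [Finset.mem_image, Finset.mem_univ, true_and] at hx
        obtain ⟨v, hv⟩ := hx
        rw [Finset.mem_range]
        have := hle v
        omega
      have h2 := Finset.card_le_card hsub
      rw [Finset.card_range] at h2
      omega
  omega
end

section
/- Let t ≥ 3 and l ≥ 1 be integers and let G be a member of the family 𝖦(t,l) with partition classes V_0, …, V_t. Then the map that sends every vertex of V_m to the integer m (for each 0 ≤ m ≤ t) is a lambda colouring of G. -/
/-- `G` is a member of the family `𝖦(t,l)` with partition `part : V → {0,…,t}`: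
each class has size `l`; edges only join classes `m, p` with `|m − p| ≥ 2`; and between
any two such classes, the edges form a perfect matching. -/
def MemGFamily {V : Type*} (G : SimpleGraph V) (t l : ℕ) (part : V → ℕ) : Prop :=
  (∀ v, part v ≤ t) ∧
  (∀ m ≤ t, {v | part v = m}.ncard = l) ∧
  (∀ u v, G.Adj u v → 2 ≤ Nat.dist (part u) (part v)) ∧
  (∀ m p, m ≤ t → p ≤ t → 2 ≤ Nat.dist m p →
    ∀ x, part x = m → ∃! y, part y = p ∧ G.Adj x y)

/-! A vertex at distance two from `u` is reached through a common neighbour `w`; if both ends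
lay in the same class `V_m`, then `w` would have two neighbours in `V_m`, contradicting that the
edges between the class of `w` and `V_m` form a perfect matching. -/

namespace SimpleGraph

variable {V : Type*} {G : SimpleGraph V} {u v : V}

lemma edist_eq_two_of_dist_eq_two (h : G.dist u v = 2) : G.edist u v = 2 := by
  rw [dist, ENat.toNat_eq_iff two_ne_zero] at h
  exact_mod_cast h

lemma ne_of_dist_eq_two_of_injOn_neighborSet {α : Type*} {c : V → α}
    (hc : ∀ w, Set.InjOn c (G.neighborSet w)) (h : G.dist u v = 2) : c u ≠ c v := by
  obtain ⟨huv, -, w, hw⟩ := edist_eq_two_iff.mp (edist_eq_two_of_dist_eq_two h)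
  rw [mem_commonNeighbors] at hw
  exact fun hcuv => huv (hc w hw.1.symm hw.2.symm hcuv)

end SimpleGraph

lemma MemGFamily.injOn_neighborSet {V : Type*} {G : SimpleGraph V} {t l : ℕ} {part : V → ℕ}
    (hG : MemGFamily G t l part) (w : V) : Set.InjOn part (G.neighborSet w) := by
  obtain ⟨hle, -, hadj, hmatch⟩ := hG
  intro u hu v hv huv
  obtain ⟨y, -, hy⟩ := hmatch (part w) (part u) (hle w) (hle u) (hadj w u hu) w rfl
  exact (hy u ⟨rfl, hu⟩).trans (hy v ⟨huv.symm, hv⟩).symm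

theorem stmt_2_general {V : Type*} (G : SimpleGraph V) (t l : ℕ)
    (part : V → ℕ) (hG : MemGFamily G t l part) :
    IsLambdaColoring G part :=
  ⟨hG.2.2.1, fun _ _ => SimpleGraph.ne_of_dist_eq_two_of_injOn_neighborSet hG.injOn_neighborSet⟩

/-- For a member `G` of `𝖦(t,l)` with partition classes `V_0, …, V_t`, the map sending
every vertex of `V_m` to `m` is a lambda colouring of `G`. -/
theorem stmt_2 {V : Type*} [Fintype V] (G : SimpleGraph V) (t l : ℕ)
    (ht : 3 ≤ t) (hl : 1 ≤ l) (part : V → ℕ) (hG : MemGFamily G t l part) :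
    IsLambdaColoring G part :=
  stmt_2_general G t l part hG
end

section
/- Let t ≥ 3 and l ≥ 1 be integers. Then every member graph G of the family 𝖦(t,l) has lambda chromatic number exactly t. -/
namespace SimpleGraph

variable {V : Type*} {G : SimpleGraph V} {u v : V}

theorem dist_eq_two_iff :
    G.dist u v = 2 ↔ u ≠ v ∧ ¬G.Adj u v ∧ (G.commonNeighbors u v).Nonempty := by
  rw [SimpleGraph.dist, ENat.toNat_eq_iff two_ne_zero]
  exact G.edist_eq_two_iff

end SimpleGraph

open SimpleGraph

section LambdaColoring

variable {V : Type*} {G : SimpleGraph V} {c : V → ℕ}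

theorem IsLambdaColoring.ne_of_adj_of_adj (hc : IsLambdaColoring G c) {x u v : V}
    (hu : G.Adj x u) (hv : G.Adj x v) (huv : u ≠ v) : c u ≠ c v := by
  by_cases hadj : G.Adj u v
  · intro h
    have := hc.1 u v hadj
    rw [h, Nat.dist_self] at this
    omega
  · exact hc.2 u v (dist_eq_two_iff.2 ⟨huv, hadj, x, hu.symm, hv.symm⟩)

/-- The Griggs–Yeh bound `λ ≥ Δ + 1`: the neighbours of `u` get pairwise distinct colours,
none equal to `c u` or to a value `a` next to it. -/
theorem IsLambdaColoring.degree_add_one_le (hc : IsLambdaColoring G c) {s : ℕ}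
    (hs : ∀ v, c v ≤ s) {u : V} [Fintype (G.neighborSet u)] (hu : 0 < G.degree u) :
    G.degree u + 1 ≤ s := by
  classical
  obtain ⟨w, hw⟩ := (G.degree_pos_iff_exists_adj u).1 hu
  obtain ⟨a, has, hua⟩ : ∃ a ≤ s, Nat.dist (c u) a = 1 := by
    have := hc.1 u w hw
    have := hs u
    have := hs w
    unfold Nat.dist at *
    rcases Nat.eq_zero_or_pos (c u) with h | h
    · exact ⟨1, by omega, by omega⟩
    · exact ⟨c u - 1, by omega, by omega⟩
  have hmaps : Set.MapsTo c (G.neighborFinset u) ↑(Finset.range (s + 1) \ {c u, a}) := by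
    intro v hv
    have hcv := hc.1 u v ((G.mem_neighborFinset u v).1 hv)
    have := hs v
    simp only [Finset.coe_sdiff, Set.mem_sdiff, Finset.mem_coe, Finset.mem_range,
      Finset.coe_insert, Finset.coe_singleton, Set.mem_insert_iff, Set.mem_singleton_iff]
    unfold Nat.dist at hcv hua
    omega
  have hinj : Set.InjOn c (G.neighborFinset u) := fun v hv v' hv' h => by
    by_contra hne
    simp only [Finset.mem_coe, mem_neighborFinset] at hv hv'
    exact hc.ne_of_adj_of_adj hv hv' hne h
  have hpair : ({c u, a} : Finset ℕ) ⊆ Finset.range (s + 1) := by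
    simp [Finset.insert_subset_iff, hs u, has]
  have hcard := Finset.card_le_card_of_injOn c hmaps hinj
  rw [card_neighborFinset_eq_degree, Finset.card_sdiff_of_subset hpair, Finset.card_range,
    Finset.card_pair (by unfold Nat.dist at hua; omega)] at hcard
  omega

end LambdaColoring

theorem lambdaChromatic_eq_of_forall_le {V : Type*} [Fintype V] {G : SimpleGraph V} {t : ℕ}
    {c₀ : V → ℕ} (hc₀ : IsLambdaColoring G c₀) (hc₀t : ∀ v, c₀ v ≤ t)
    (hmin : ∀ c s, IsLambdaColoring G c → (∀ v, c v ≤ s) → t ≤ s) :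
    lambdaChromatic G = t :=
  IsLeast.csInf_eq ⟨⟨c₀, hc₀, hc₀t⟩, fun s ⟨c, hc, hcs⟩ => hmin c s hc hcs⟩

namespace MemGFamily

variable {V : Type*} {G : SimpleGraph V} {t l : ℕ} {part : V → ℕ}

theorem exists_part_eq (hG : MemGFamily G t l part) (hl : 1 ≤ l) {m : ℕ} (hm : m ≤ t) :
    ∃ v, part v = m :=
  Set.nonempty_of_ncard_ne_zero (s := {v | part v = m}) (by rw [hG.2.1 m hm]; omega)

theorem eq_of_adj_of_adj (hG : MemGFamily G t l part) {x u v : V} (hu : G.Adj x u)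
    (hv : G.Adj x v) (huv : part u = part v) : u = v := by
  have hxu : 2 ≤ Nat.dist (part x) (part u) := hG.2.2.1 x u hu
  obtain ⟨y, -, hy⟩ := hG.2.2.2 _ _ (hG.1 x) (hG.1 u) hxu x rfl
  exact (hy u ⟨rfl, hu⟩).trans (hy v ⟨huv.symm, hv⟩).symm

theorem isLambdaColoring_part (hG : MemGFamily G t l part) : IsLambdaColoring G part := by
  refine ⟨hG.2.2.1, fun u v huv hpart => ?_⟩
  obtain ⟨hne, -, x, hxu, hxv⟩ := dist_eq_two_iff.1 huv
  exact hne (hG.eq_of_adj_of_adj hxu.symm hxv.symm hpart)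

theorem sub_one_le_degree (hG : MemGFamily G t l part) {u : V} [Fintype (G.neighborSet u)]
    (hu : part u = 0) : t - 1 ≤ G.degree u := by
  classical
  have hsurj : Set.SurjOn part (G.neighborFinset u) (Finset.Icc 2 t) := by
    intro p hp
    simp only [Finset.coe_Icc, Set.mem_Icc] at hp
    obtain ⟨y, ⟨hy, hadj⟩, -⟩ :=
      hG.2.2.2 0 p (Nat.zero_le t) hp.2 (by unfold Nat.dist; omega) u hu
    exact ⟨y, (G.mem_neighborFinset u y).2 hadj, hy⟩
  have := Finset.card_le_card_of_surjOn part hsurj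
  rw [Nat.card_Icc, card_neighborFinset_eq_degree] at this
  omega

end MemGFamily

/-- Every member graph `G` of the family `𝖦(t,l)` (for `t ≥ 3`, `l ≥ 1`) has lambda
chromatic number exactly `t`. -/
theorem stmt_3 {V : Type*} [Fintype V] (G : SimpleGraph V) (t l : ℕ)
    (ht : 3 ≤ t) (hl : 1 ≤ l) (part : V → ℕ) (hG : MemGFamily G t l part) :
    lambdaChromatic G = t := by
  classical
  refine lambdaChromatic_eq_of_forall_le hG.isLambdaColoring_part hG.1 fun c s hc hcs => ?_
  obtain ⟨u, hu⟩ := hG.exists_part_eq hl (Nat.zero_le t)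
  have hdeg := hG.sub_one_le_degree hu
  have hbound := hc.degree_add_one_le hcs (u := u) (by omega)
  omega
end

section
/- Let t ≥ 3, let G be a graph with lambda chromatic number t, let c be an optimal lambda colouring of G with colour classes C_m = {u ∈ V(G) : c(u) = m} for 0 ≤ m ≤ t, and set l = max_{0 ≤ m ≤ t} |C_m|. Then there exists a member graph G* of the family 𝖦(t,l) with partition classes V_0, …, V_t and an injective map φ : V(G) → V(G*) such that φ maps each C_m into V_m and whenever u and v are adjacent in G, φ(u) and φ(v) are adjacent in G*; that is, G is isomorphic to a subgraph of G*. -/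
/-- Extend a partial bijection (given as a functional and co-functional relation)
on a finite type to a permutation. -/
lemma perm_of_partial {α : Type*} [Fintype α] (R : α → α → Prop)
    (hfun : ∀ i j j', R i j → R i j' → j = j')
    (hinj : ∀ i i' j, R i j → R i' j → i = i') :
    ∃ σ : Equiv.Perm α, ∀ i j, R i j → σ i = j := by
  classical
  set P : α → Prop := fun i => ∃ j, R i j with hP
  set Q : α → Prop := fun j => ∃ i, R i j with hQ
  have hchoose : ∀ (i : α) (h : P i), R i h.choose := fun i h => h.choose_spec
  let F : {i // P i} → {j // Q j} := fun i => ⟨i.2.choose, ⟨i.1, i.2.choose_spec⟩⟩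
  have hbij : Function.Bijective F := by
    constructor
    · rintro ⟨i₁, h₁⟩ ⟨i₂, h₂⟩ hF
      have : h₁.choose = h₂.choose := congrArg Subtype.val hF
      exact Subtype.ext (hinj _ _ _ (h₁.choose_spec) (this ▸ h₂.choose_spec))
    · rintro ⟨j, i, hij⟩
      have hPi : P i := ⟨j, hij⟩
      refine ⟨⟨i, hPi⟩, Subtype.ext ?_⟩
      exact hfun i _ j hPi.choose_spec hij
  let e := Equiv.ofBijective F hbij
  refine ⟨e.extendSubtype, fun i j hij => ?_⟩
  have hPi : P i := ⟨j, hij⟩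
  rw [e.extendSubtype_apply_of_mem i hPi]
  show (F ⟨i, hPi⟩ : α) = j
  exact hfun i _ j hPi.choose_spec hij

/-- In a lambda colouring, a vertex cannot have two distinct neighbours with equal colours. -/
lemma nbr_unique {V : Type*} (G : SimpleGraph V) (c : V → ℕ) (hc : IsLambdaColoring G c)
    {u v w : V} (huv : G.Adj u v) (huw : G.Adj u w) (hcc : c v = c w) : v = w := by
  by_contra hne
  have hnadj : ¬ G.Adj v w := by
    intro h
    have := hc.1 v w h
    rw [hcc, Nat.dist_self] at this
    omega
  have hreach : G.Reachable v w := ⟨(huv.symm.toWalk.append huw.toWalk)⟩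
  have hle : G.dist v w ≤ 2 := by
    have := SimpleGraph.dist_le (huv.symm.toWalk.append huw.toWalk)
    simpa using this
  have h0 : 0 < G.dist v w := hreach.pos_dist_of_ne hne
  have h1 : G.dist v w ≠ 1 := fun h => hnadj (SimpleGraph.dist_eq_one_iff_adj.mp h)
  have h2 : G.dist v w = 2 := by omega
  exact hc.2 v w h2 hcc

lemma exists_sigma {V : Type} [Fintype V] (G : SimpleGraph V) (c : V → ℕ)
    (hc : IsLambdaColoring G c) (l : ℕ) (emb : ∀ m : ℕ, {u : V // c u = m} ↪ Fin l)
    (m p : ℕ) :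
    ∃ σ : Equiv.Perm (Fin l), ∀ (u v : V) (hu : c u = m) (hv : c v = p),
      G.Adj u v → σ (emb m ⟨u, hu⟩) = emb p ⟨v, hv⟩ := by
  classical
  set R : Fin l → Fin l → Prop := fun i j =>
    ∃ (u v : V) (hu : c u = m) (hv : c v = p),
      G.Adj u v ∧ emb m ⟨u, hu⟩ = i ∧ emb p ⟨v, hv⟩ = j with hR
  have hfun : ∀ i j j', R i j → R i j' → j = j' := by
    rintro i j j' ⟨u, v, hu, hv, hadj, hi, hj⟩ ⟨u', v', hu', hv', hadj', hi', hj'⟩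
    have huu : u = u' := by
      have := (emb m).injective (hi.trans hi'.symm)
      exact congrArg Subtype.val this
    subst huu
    have hvv : v = v' := nbr_unique G c hc hadj hadj' (hv.trans hv'.symm)
    subst hvv
    exact hj.symm.trans hj'
  have hinj : ∀ i i' j, R i j → R i' j → i = i' := by
    rintro i i' j ⟨u, v, hu, hv, hadj, hi, hj⟩ ⟨u', v', hu', hv', hadj', hi', hj'⟩
    have hvv : v = v' := by
      have := (emb p).injective (hj.trans hj'.symm)
      exact congrArg Subtype.val this
    subst hvv
    have huu : u = u' := nbr_unique G c hc hadj.symm hadj'.symm (hu.trans hu'.symm)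
    subst huu
    exact hi.symm.trans hi'
  obtain ⟨σ, hσ⟩ := perm_of_partial R hfun hinj
  exact ⟨σ, fun u v hu hv hadj => hσ _ _ ⟨u, v, hu, hv, hadj, rfl, rfl⟩⟩

/-- Universality: every graph `G` with lambda chromatic number `t ≥ 3`, coloured
optimally by `c` with colour classes `C_m = {u | c u = m}` and
`l = max_m |C_m|`, embeds (preserving colour classes and edges) into some member
graph `G*` of the family `𝖦(t,l)`. -/
theorem stmt_5 {V : Type} [Fintype V] (G : SimpleGraph V) (t : ℕ) (ht : 3 ≤ t)
    (hG : lambdaChromatic G = t) (c : V → ℕ) (hc : IsLambdaColoring G c)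
    (hopt : Finset.univ.sup c = t)
    (l : ℕ) (hl : l = (Finset.range (t + 1)).sup (fun m => {u | c u = m}.ncard)) :
    ∃ (W : Type) (_ : Fintype W) (Gstar : SimpleGraph W) (part : W → ℕ),
      MemGFamily Gstar t l part ∧
      ∃ φ : V → W, Function.Injective φ ∧
        (∀ u, part (φ u) = c u) ∧
        (∀ u v, G.Adj u v → Gstar.Adj (φ u) (φ v)) := by
  
  classical
  have hct : ∀ u, c u ≤ t := fun u => hopt ▸ Finset.le_sup (Finset.mem_univ u)
  have hemb : ∀ m : ℕ, Nonempty ({u : V // c u = m} ↪ Fin l) := by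
    intro m
    by_cases hm : m ≤ t
    · refine Function.Embedding.nonempty_of_card_le ?_
      rw [Fintype.card_fin]
      have h1 : Fintype.card {u : V // c u = m} = {u : V | c u = m}.ncard := by
        rw [← Nat.card_coe_set_eq, Nat.card_eq_fintype_card]
        exact Fintype.card_congr (Equiv.refl _)
      have hmem : m ∈ Finset.range (t + 1) := Finset.mem_range.mpr (by omega)
      rw [h1, hl]
      exact Finset.le_sup (f := fun m => {u : V | c u = m}.ncard) hmem
    · have : IsEmpty {u : V // c u = m} :=
        ⟨fun ⟨u, hu⟩ => hm (hu ▸ hct u)⟩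
      exact ⟨Function.Embedding.ofIsEmpty⟩
  let emb : ∀ m : ℕ, {u : V // c u = m} ↪ Fin l := fun m => (hemb m).some
  choose σ hσ using fun m p => exists_sigma G c hc l emb m p
  let Gstar : SimpleGraph (Fin (t + 1) × Fin l) :=
    { Adj := fun x y =>
        ((x.1 : ℕ) + 2 ≤ (y.1 : ℕ) ∧ σ (x.1 : ℕ) (y.1 : ℕ) x.2 = y.2) ∨
        ((y.1 : ℕ) + 2 ≤ (x.1 : ℕ) ∧ σ (y.1 : ℕ) (x.1 : ℕ) y.2 = x.2)
      symm := by
        constructor; rintro x y (⟨h1, h2⟩ | ⟨h1, h2⟩)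
        · exact Or.inr ⟨h1, h2⟩
        · exact Or.inl ⟨h1, h2⟩
      loopless := by
        constructor; rintro x (⟨h1, _⟩ | ⟨h1, _⟩) <;> omega }
  have hAdjD : ∀ x y : Fin (t + 1) × Fin l, Gstar.Adj x y ↔
      (((x.1 : ℕ) + 2 ≤ (y.1 : ℕ) ∧ σ (x.1 : ℕ) (y.1 : ℕ) x.2 = y.2) ∨
        ((y.1 : ℕ) + 2 ≤ (x.1 : ℕ) ∧ σ (y.1 : ℕ) (x.1 : ℕ) y.2 = x.2)) := fun _ _ => Iff.rfl
  refine ⟨Fin (t + 1) × Fin l, inferInstance, Gstar, fun w => (w.1 : ℕ), ?_, ?_⟩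
  · refine ⟨fun w => Nat.lt_succ_iff.mp w.1.isLt, ?_, ?_, ?_⟩
    · -- class sizes
      intro m hm
      have hset : {v : Fin (t + 1) × Fin l | ((v.1 : ℕ) = m)} =
          Prod.mk (⟨m, by omega⟩ : Fin (t + 1)) '' Set.univ := by
        ext ⟨a, b⟩
        simp only [Set.mem_setOf_eq, Set.image_univ, Set.mem_range, Prod.mk.injEq]
        constructor
        · intro h
          exact ⟨b, Fin.ext h.symm, rfl⟩
        · rintro ⟨j, h1, h2⟩
          rw [← h1]
      rw [hset, Set.ncard_image_of_injective _ (Prod.mk_right_injective _), Set.ncard_univ,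
        Nat.card_eq_fintype_card, Fintype.card_fin]
    · -- adjacency implies distance ≥ 2
      rintro x y (⟨h1, _⟩ | ⟨h1, _⟩) <;> simp only [Nat.dist] <;> omega
    · -- perfect matchings
      rintro m p hm hp hd ⟨x1, x2⟩ hx
      simp only at hx
      have hd' : m + 2 ≤ p ∨ p + 2 ≤ m := by
        simp only [Nat.dist] at hd; omega
      rcases hd' with h | h
      · refine ⟨(⟨p, by omega⟩, σ m p x2), ⟨rfl, Or.inl ⟨?_, ?_⟩⟩, ?_⟩
        · show (x1 : ℕ) + 2 ≤ ((⟨p, by omega⟩ : Fin (t + 1)) : ℕ); simp; omega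
        · show σ (x1 : ℕ) ((⟨p, by omega⟩ : Fin (t + 1)) : ℕ) x2 = σ m p x2
          rw [hx]
        · rintro ⟨q, j⟩ ⟨hq, hadj⟩
          simp only at hq
          rw [hAdjD] at hadj
          dsimp only at hadj
          rcases hadj with ⟨h1, h2⟩ | ⟨h1, h2⟩
          · rw [hx, hq] at h2
            refine Prod.ext (Fin.ext ?_) ?_
            · simpa using hq
            · simp only
              rw [← h2]
          · omega
      · refine ⟨(⟨p, by omega⟩, (σ p m).symm x2), ⟨rfl, Or.inr ⟨?_, ?_⟩⟩, ?_⟩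
        · show ((⟨p, by omega⟩ : Fin (t + 1)) : ℕ) + 2 ≤ (x1 : ℕ); simp; omega
        · show σ ((⟨p, by omega⟩ : Fin (t + 1)) : ℕ) (x1 : ℕ) ((σ p m).symm x2) = x2
          rw [hx]
          exact (σ p m).apply_symm_apply x2
        · rintro ⟨q, j⟩ ⟨hq, hadj⟩
          simp only at hq
          rw [hAdjD] at hadj
          dsimp only at hadj
          rcases hadj with ⟨h1, h2⟩ | ⟨h1, h2⟩
          · omega
          · rw [hx, hq] at h2
            refine Prod.ext (Fin.ext ?_) ?_
            · simpa using hq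
            · simp only
              rw [← h2, Equiv.symm_apply_apply]
  · -- the embedding
    have key : ∀ (m p : ℕ) (h : m = p) (x : V) (hx : c x = m),
        (emb m ⟨x, hx⟩ : Fin l) = (Fin.cast rfl (emb p ⟨x, h ▸ hx⟩) : Fin l) := by
      rintro m p rfl x hx; rfl
    refine ⟨fun u => (⟨c u, Nat.lt_succ_iff.mpr (hct u)⟩, emb (c u) ⟨u, rfl⟩), ?_,
      fun u => rfl, ?_⟩
    · intro u v huv
      have h1 : c u = c v := congrArg (fun w => ((w.1 : Fin (t + 1)) : ℕ)) huv
      have h2 : emb (c u) ⟨u, rfl⟩ = emb (c v) ⟨v, rfl⟩ := congrArg Prod.snd huv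
      have h3 : emb (c v) (⟨v, rfl⟩ : {x // c x = c v}) = emb (c u) ⟨v, h1.symm⟩ :=
        key (c v) (c u) h1.symm v rfl
      rw [h3] at h2
      exact congrArg Subtype.val ((emb (c u)).injective h2)
    · intro u v hadj
      have hd := hc.1 u v hadj
      have hd' : c u + 2 ≤ c v ∨ c v + 2 ≤ c u := by simp only [Nat.dist] at hd; omega
      rcases hd' with h | h
      · exact Or.inl ⟨h, hσ (c u) (c v) u v rfl rfl hadj⟩
      · exact Or.inr ⟨h, hσ (c v) (c u) v u rfl rfl hadj.symm⟩
end

section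
/- Let G be a finite simple graph with lambda chromatic number t, let c be an optimal lambda colouring of G taking values in {0, …, t}, and let C_m = {u ∈ V(G) : c(u) = m} for 0 ≤ m ≤ t. Then the number of edges of G satisfies |E(G)| ≤ Σ_{i=0}^{t−2} Σ_{j=i+2}^{t} min(|C_i|, |C_j|). -/
private theorem stmt_8' {V : Type*} [Fintype V] (G : SimpleGraph V) (t : ℕ)
    (c : V → ℕ) (hc : (∀ u v, G.Adj u v → 2 ≤ Nat.dist (c u) (c v)) ∧
  (∀ u v, G.dist u v = 2 → c u ≠ c v))
    (hopt : Finset.univ.sup c = t) :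
    G.edgeSet.ncard ≤
      ∑ i ∈ Finset.range (t - 1), ∑ j ∈ Finset.Icc (i + 2) t,
        min {u | c u = i}.ncard {u | c u = j}.ncard := by
  classical
  have hle : ∀ v, c v ≤ t := fun v => hopt ▸ Finset.le_sup (Finset.mem_univ v)
  have hdist : ∀ u v, G.Adj u v → c u < c v ∨ c v < c u := by
    intro u v h
    have := hc.1 u v h
    simp [Nat.dist] at this
    omega
  set D : Finset (V × V) :=
    Finset.univ.filter (fun p => G.Adj p.1 p.2 ∧ c p.1 + 2 ≤ c p.2) with hD
  -- step 1: edges inject into D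
  have h1 : G.edgeSet.ncard ≤ D.card := by
    rw [← Set.ncard_coe_finset D]
    apply Set.ncard_le_ncard_of_injOn
      (fun e => if c (Quot.out e).1 < c (Quot.out e).2 then Quot.out e else (Quot.out e).swap)
    · intro e he
      have hout : Sym2.mk (Quot.out e).1 (Quot.out e).2 = e := Quot.out_eq e
      have hadj : G.Adj (Quot.out e).1 (Quot.out e).2 := by
        rw [← SimpleGraph.mem_edgeSet]
        convert he using 1
      have h2 := hc.1 _ _ hadj
      simp only [Nat.dist] at h2
      beta_reduce
      rw [Finset.mem_coe, hD, Finset.mem_filter]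
      refine ⟨Finset.mem_univ _, ?_⟩
      by_cases hlt : c (Quot.out e).1 < c (Quot.out e).2
      · rw [if_pos hlt]; exact ⟨hadj, by omega⟩
      · rw [if_neg hlt, Prod.fst_swap, Prod.snd_swap]; exact ⟨hadj.symm, by omega⟩
    · intro e he e' he' h
      have key : ∀ x : Sym2 V,
          Function.uncurry Sym2.mk (if c (Quot.out x).1 < c (Quot.out x).2 then Quot.out x else (Quot.out x).swap) = x := by
        intro x
        by_cases hlt : c (Quot.out x).1 < c (Quot.out x).2
        · simp [hlt, Quot.out_eq]
          exact Quot.out_eq x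
        · rw [if_neg hlt]
          exact Sym2.eq_swap.trans (Quot.out_eq x)
      exact (key e).symm.trans ((congrArg (Function.uncurry Sym2.mk) h).trans (key e'))
  refine h1.trans ?_
  -- step 2: partition D by colour pairs
  set S : Finset ((_ : ℕ) × ℕ) := (Finset.range (t-1)).sigma (fun i => Finset.Icc (i+2) t) with hS
  have h2 : D.card = ∑ x ∈ S, (D.filter (fun p => (⟨c p.1, c p.2⟩ : (_ : ℕ) × ℕ) = x)).card := by
    apply Finset.card_eq_sum_card_fiberwise
    intro p hp
    simp only [hD, Finset.mem_coe, Finset.mem_filter, Finset.mem_univ, true_and] at hp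
    obtain ⟨hadj, hlt⟩ := hp
    have := hle p.2
    simp only [hS, Finset.mem_coe, Finset.mem_sigma, Finset.mem_range, Finset.mem_Icc]
    omega
  rw [h2, Finset.sum_sigma]
  apply Finset.sum_le_sum
  intro i hi
  apply Finset.sum_le_sum
  intro j hj
  -- step 3: fiber bound
  set F := D.filter (fun p => (⟨c p.1, c p.2⟩ : (_ : ℕ) × ℕ) = ⟨i, j⟩) with hF
  have hFmem : ∀ p ∈ F, G.Adj p.1 p.2 ∧ c p.1 = i ∧ c p.2 = j := by
    intro p hp
    simp only [hF, hD, Finset.mem_filter, Finset.mem_univ, true_and, Sigma.mk.inj_iff,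
      heq_eq_eq] at hp
    exact ⟨hp.1.1, hp.2.1, hp.2.2⟩
  -- common claim: two vertices with same colour adjacent to a common vertex are equal
  have hcommon : ∀ x a b, G.Adj x a → G.Adj x b → c a = c b → a = b := by
    intro x a b ha hb hcab
    by_contra hne
    have hnadj : ¬ G.Adj a b := by
      intro h
      have := hc.1 a b h
      simp [Nat.dist, hcab] at this
    have hwalk : G.dist a b ≤ 2 := by
      have := SimpleGraph.dist_le (SimpleGraph.Walk.cons ha.symm (SimpleGraph.Walk.cons hb SimpleGraph.Walk.nil))
      simpa using this
    have hreach : G.Reachable a b := ⟨SimpleGraph.Walk.cons ha.symm (SimpleGraph.Walk.cons hb SimpleGraph.Walk.nil)⟩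
    have h0 : G.dist a b ≠ 0 := by
      intro h
      rcases (SimpleGraph.dist_eq_zero_iff_eq_or_not_reachable).1 h with h' | h'
      · exact hne h'
      · exact h' hreach
    have h1' : G.dist a b ≠ 1 := by
      intro h
      exact hnadj ((G.dist_eq_one_iff_adj).1 h)
    have : G.dist a b = 2 := by omega
    exact hc.2 a b this hcab
  have hb1 : F.card ≤ {u | c u = i}.ncard := by
    have : {u | c u = i} = ↑(Finset.univ.filter (fun u => c u = i)) := by
      ext u; simp
    rw [this, Set.ncard_coe_finset]
    apply Finset.card_le_card_of_injOn (fun p => p.1)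
    · intro p hp
      simp only [Finset.mem_coe, Finset.mem_filter, Finset.mem_univ, true_and]
      exact (hFmem p hp).2.1
    · intro p hp q hq hpq
      obtain ⟨hap, hip, hjp⟩ := hFmem p hp
      obtain ⟨haq, hiq, hjq⟩ := hFmem q hq
      have hpq' : p.1 = q.1 := hpq
      have : p.2 = q.2 := hcommon p.1 p.2 q.2 hap (by rw [hpq']; exact haq) (by omega)
      exact Prod.ext hpq' this
  have hb2 : F.card ≤ {u | c u = j}.ncard := by
    have : {u | c u = j} = ↑(Finset.univ.filter (fun u => c u = j)) := by
      ext u; simp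
    rw [this, Set.ncard_coe_finset]
    apply Finset.card_le_card_of_injOn (fun p => p.2)
    · intro p hp
      simp only [Finset.mem_coe, Finset.mem_filter, Finset.mem_univ, true_and]
      exact (hFmem p hp).2.2
    · intro p hp q hq hpq
      obtain ⟨hap, hip, hjp⟩ := hFmem p hp
      obtain ⟨haq, hiq, hjq⟩ := hFmem q hq
      have hpq' : p.2 = q.2 := hpq
      have : p.1 = q.1 := hcommon p.2 p.1 q.1 hap.symm (by rw [hpq']; exact haq.symm) (by omega)
      exact Prod.ext this hpq' 
  exact le_min hb1 hb2


/-- For a finite graph `G` with lambda chromatic number `t` and an optimal lambda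
colouring `c` with colour classes `C_m = {u | c u = m}`, the number of edges of `G`
is at most `Σ_{i=0}^{t−2} Σ_{j=i+2}^{t} min(|C_i|, |C_j|)`. -/
theorem stmt_8 {V : Type*} [Fintype V] (G : SimpleGraph V) (t : ℕ)
    (hG : lambdaChromatic G = t) (c : V → ℕ) (hc : IsLambdaColoring G c)
    (hopt : Finset.univ.sup c = t) :
    G.edgeSet.ncard ≤
      ∑ i ∈ Finset.range (t - 1), ∑ j ∈ Finset.Icc (i + 2) t,
        min {u | c u = i}.ncard {u | c u = j}.ncard :=
  stmt_8' G t c hc hopt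
end

section
/- Let G be a finite simple graph with lambda chromatic number t, let c be an optimal lambda colouring of G taking values in {0, …, t}, and let C_m = {u ∈ V(G) : c(u) = m} for 0 ≤ m ≤ t. Then |E(G)| = Σ_{i=0}^{t−2} Σ_{j=i+2}^{t} min(|C_i|, |C_j|) if and only if for all indices i, j with 0 ≤ i, j ≤ t, |i − j| ≥ 2 and 0 < |C_i| ≤ |C_j|, every vertex x ∈ C_i has exactly one neighbour in C_j. -/
open Finset
set_option linter.unusedSectionVars false


lemma dist_two_iff {i j : ℕ} : 2 ≤ Nat.dist i j ↔ i + 2 ≤ j ∨ j + 2 ≤ i := by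
  simp [Nat.dist]; omega

lemma card_eq_one_iff_eu {α : Type*} (s : Finset α) : s.card = 1 ↔ ∃! a, a ∈ s := by
  rw [Finset.card_eq_one]
  constructor
  · rintro ⟨a, rfl⟩; exact ⟨a, Finset.mem_singleton_self a, fun b hb => Finset.mem_singleton.1 hb⟩
  · rintro ⟨a, ha, hu⟩
    exact ⟨a, Finset.ext fun b => ⟨fun hb => Finset.mem_singleton.2 (hu b hb),
      fun hb => (Finset.mem_singleton.1 hb) ▸ ha⟩⟩

section aux
variable {V : Type*} [Fintype V] [DecidableEq V] (G : SimpleGraph V) [DecidableRel G.Adj]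
  (c : V → ℕ)

def CC (i : ℕ) : Finset V := univ.filter fun u => c u = i

def Dnb (x : V) (j : ℕ) : Finset V := univ.filter fun y => c y = j ∧ G.Adj x y

def Pij (i j : ℕ) : Finset (V × V) := univ.filter fun p => c p.1 = i ∧ c p.2 = j ∧ G.Adj p.1 p.2

/-- each vertex has at most one neighbour in a given colour class -/
lemma card_Dnb_le_one (hc : IsLambdaColoring G c) (x : V) (j : ℕ) :
    (Dnb G c x j).card ≤ 1 := by
  rw [Finset.card_le_one]
  intro y hy z hz
  simp only [Dnb, mem_filter, mem_univ, true_and] at hy hz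
  by_contra hne
  have hna : ¬ G.Adj y z := by
    intro h
    have := hc.1 y z h
    rw [hy.1, hz.1] at this
    simp [Nat.dist_self] at this
  have hd2 : G.dist y z = 2 := by
    let w : G.Walk y z := SimpleGraph.Walk.cons hy.2.symm (SimpleGraph.Walk.cons hz.2 SimpleGraph.Walk.nil)
    have hle : G.dist y z ≤ 2 := SimpleGraph.dist_le w
    have h0 : G.dist y z ≠ 0 := (SimpleGraph.Reachable.pos_dist_of_ne w.reachable hne).ne'
    have h1 : G.dist y z ≠ 1 := fun h => hna (SimpleGraph.dist_eq_one_iff_adj.1 h)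
    omega
  exact hc.2 y z hd2 (hy.1.trans hz.1.symm)

lemma Pij_card_eq_sum (i j : ℕ) :
    (Pij G c i j).card = ∑ x ∈ CC c i, (Dnb G c x j).card := by
  rw [Finset.card_eq_sum_card_fiberwise (f := Prod.fst) (t := CC c i)
    (fun p hp => by have hp : p ∈ Pij G c i j := hp; simp only [Pij, mem_filter] at hp; simp [CC, hp.2.1])]
  refine Finset.sum_congr rfl fun x hx => ?_
  apply Finset.card_bij (fun p _ => p.2)
  · intro p hp
    simp only [Pij, mem_filter, mem_univ, true_and] at hp
    simp only [Dnb, mem_filter, mem_univ, true_and]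
    exact ⟨hp.1.2.1, hp.2 ▸ hp.1.2.2⟩
  · intro p hp q hq h
    simp only [mem_filter] at hp hq
    exact Prod.ext (hp.2.trans hq.2.symm) h
  · intro y hy
    simp only [Dnb, mem_filter, mem_univ, true_and] at hy
    exact ⟨(x, y), by simp [Pij, mem_filter, hy.1, hy.2, (by simp [CC] at hx; exact hx : c x = i)], rfl⟩

lemma Pij_card_symm (i j : ℕ) : (Pij G c i j).card = (Pij G c j i).card := by
  apply Finset.card_bij (fun p _ => (p.2, p.1))
  · intro p hp; simp only [Pij, mem_filter, mem_univ, true_and] at hp ⊢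
    exact ⟨hp.2.1, hp.1, hp.2.2.symm⟩
  · intro p hp q hq h
    exact Prod.ext (congrArg Prod.snd h) (congrArg Prod.fst h)
  · intro p hp
    simp only [Pij, mem_filter, mem_univ, true_and] at hp
    exact ⟨(p.2, p.1), by simp [Pij, hp.1, hp.2.1, hp.2.2.symm], rfl⟩

end aux

section aux2
open Finset
variable {V : Type*} [Fintype V] [DecidableEq V] (G : SimpleGraph V) [DecidableRel G.Adj]
  (c : V → ℕ)

def keyS (c : V → ℕ) : Sym2 V → (_ : ℕ) × ℕ :=
  Sym2.lift ⟨fun u v => ⟨min (c u) (c v), max (c u) (c v)⟩,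
    fun u v => by simp [min_comm, max_comm]⟩

@[simp] lemma keyS_mk (u v : V) :
    keyS c s(u, v) = ⟨min (c u) (c v), max (c u) (c v)⟩ := rfl

lemma fiber_card [Fintype G.edgeSet] (i j : ℕ) (hij : i < j) :
    (G.edgeFinset.filter fun e => keyS c e = ⟨i, j⟩).card = (Pij G c i j).card := by
  symm
  apply Finset.card_bij (fun p _ => s(p.1, p.2))
  · intro p hp
    simp only [Pij, mem_filter, mem_univ, true_and] at hp
    simp only [mem_filter, SimpleGraph.mem_edgeFinset, SimpleGraph.mem_edgeSet, keyS_mk,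
      hp.1, hp.2.1]
    exact ⟨hp.2.2, by rw [min_eq_left hij.le, max_eq_right hij.le]⟩
  · intro p hp q hq h
    simp only [Pij, mem_filter, mem_univ, true_and] at hp hq
    rw [Sym2.eq_iff] at h
    rcases h with ⟨h1, h2⟩ | ⟨h1, h2⟩
    · exact Prod.ext h1 h2
    · exfalso
      have : i = j := by rw [← hp.1, h1, hq.2.1]
      exact hij.ne this
  · intro e he
    induction e using Sym2.ind with
    | _ u v =>
      simp only [mem_filter, SimpleGraph.mem_edgeFinset, SimpleGraph.mem_edgeSet, keyS_mk] at he
      obtain ⟨hadj, hkey⟩ := he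
      have hmin : min (c u) (c v) = i := congrArg Sigma.fst hkey
      have hmax : max (c u) (c v) = j := congrArg (fun p => p.2) hkey
      rcases le_total (c u) (c v) with h | h
      · refine ⟨(u, v), ?_, rfl⟩
        simp only [Pij, mem_filter, mem_univ, true_and]
        exact ⟨by rw [← hmin, min_eq_left h], by rw [← hmax, max_eq_right h], hadj⟩
      · refine ⟨(v, u), ?_, Sym2.eq_swap⟩
        simp only [Pij, mem_filter, mem_univ, true_and]
        exact ⟨by rw [← hmin, min_eq_right h], by rw [← hmax, max_eq_left h], hadj.symm⟩

end aux2

section aux3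
open Finset
variable {V : Type*} [Fintype V] [DecidableEq V] (G : SimpleGraph V) [DecidableRel G.Adj]
  (c : V → ℕ)

lemma Dnb_card_one_iff (x : V) (j : ℕ) :
    (Dnb G c x j).card = 1 ↔ ∃! y, c y = j ∧ G.Adj x y := by
  rw [card_eq_one_iff_eu]
  exact existsUnique_congr fun y => by simp [Dnb]

lemma Pij_le (hc : IsLambdaColoring G c) (i j : ℕ) :
    (Pij G c i j).card ≤ (CC c i).card := by
  rw [Pij_card_eq_sum]
  calc ∑ x ∈ CC c i, (Dnb G c x j).card ≤ ∑ _x ∈ CC c i, 1 :=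
        Finset.sum_le_sum fun x _ => card_Dnb_le_one G c hc x j
    _ = (CC c i).card := by simp

lemma keyS_mem (hc : IsLambdaColoring G c) {t : ℕ} (hct : ∀ v, c v ≤ t) :
    ∀ e ∈ G.edgeFinset, keyS c e ∈ (range (t - 1)).sigma (fun i => Icc (i + 2) t) := by
  intro e he
  induction e using Sym2.ind with
  | _ u v =>
    rw [SimpleGraph.mem_edgeFinset, SimpleGraph.mem_edgeSet] at he
    have hd := dist_two_iff.1 (hc.1 u v he)
    have h1 := hct u; have h2 := hct v
    simp only [keyS_mk, mem_sigma, mem_range, mem_Icc]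
    rcases le_total (c u) (c v) with h | h
    · rw [min_eq_left h, max_eq_right h]; omega
    · rw [min_eq_right h, max_eq_left h]; omega

lemma key1 (i j : ℕ) (h : ∀ x ∈ CC c i, (Dnb G c x j).card = 1) :
    (Pij G c i j).card = (CC c i).card := by
  rw [Pij_card_eq_sum, Finset.sum_congr rfl h]; simp

lemma key2 (hc : IsLambdaColoring G c) (i j : ℕ)
    (h : (Pij G c i j).card = (CC c i).card) :
    ∀ x ∈ CC c i, (Dnb G c x j).card = 1 := by
  have hsum : ∑ x ∈ CC c i, (Dnb G c x j).card = ∑ _x ∈ CC c i, 1 := by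
    rw [← Pij_card_eq_sum, h]; simp
  exact (Finset.sum_eq_sum_iff_of_le fun x _ => card_Dnb_le_one G c hc x j).1 hsum

end aux3


/-- Equality case: `|E(G)| = Σ_{i=0}^{t−2} Σ_{j=i+2}^{t} min(|C_i|, |C_j|)` holds iff
for all `i, j ≤ t` with `|i − j| ≥ 2` and `0 < |C_i| ≤ |C_j|`, every vertex of `C_i`
has exactly one neighbour in `C_j`. -/
theorem stmt_9 {V : Type*} [Fintype V] (G : SimpleGraph V) (t : ℕ)
    (hG : lambdaChromatic G = t) (c : V → ℕ) (hc : IsLambdaColoring G c)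
    (hopt : Finset.univ.sup c = t) :
    (G.edgeSet.ncard =
      ∑ i ∈ Finset.range (t - 1), ∑ j ∈ Finset.Icc (i + 2) t,
        min {u | c u = i}.ncard {u | c u = j}.ncard) ↔
    (∀ i j, i ≤ t → j ≤ t → 2 ≤ Nat.dist i j →
      0 < {u | c u = i}.ncard → {u | c u = i}.ncard ≤ {u | c u = j}.ncard →
      ∀ x, c x = i → ∃! y, c y = j ∧ G.Adj x y) := by
  classical
  have hct : ∀ v, c v ≤ t := fun v => hopt ▸ Finset.le_sup (Finset.mem_univ v)
  have hCC : ∀ i, {u | c u = i}.ncard = (CC c i).card := by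
    intro i
    rw [show {u | c u = i} = ↑(CC c i) by ext u; simp [CC], Set.ncard_coe_finset]
  have hE : G.edgeSet.ncard = G.edgeFinset.card := by
    rw [← SimpleGraph.coe_edgeFinset, Set.ncard_coe_finset]
  simp only [hCC, hE]
  have hb1 : ∀ i j, (Pij G c i j).card ≤ (CC c i).card := fun i j => Pij_le G c hc i j
  rw [Finset.card_eq_sum_card_fiberwise (keyS_mem G c hc hct), Finset.sum_sigma']
  have hle' : ∀ p ∈ (Finset.range (t - 1)).sigma (fun i => Finset.Icc (i + 2) t),
      (G.edgeFinset.filter fun e => keyS c e = p).card ≤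
        min ((CC c p.1).card) ((CC c p.2).card) := by
    rintro ⟨i, j⟩ hp
    simp only [Finset.mem_sigma, Finset.mem_range, Finset.mem_Icc] at hp
    rw [fiber_card G c i j (by omega)]
    exact le_min (hb1 i j) ((Pij_card_symm G c i j) ▸ hb1 j i)
  rw [Finset.sum_eq_sum_iff_of_le hle']
  constructor
  · intro h i j hi hj hdist hpos hlecc x hx
    have hx' : x ∈ CC c i := by simp [CC, hx]
    rcases dist_two_iff.1 hdist with hij | hji
    · have hpS : (⟨i, j⟩ : Σ _ : ℕ, ℕ) ∈
          (Finset.range (t - 1)).sigma (fun i => Finset.Icc (i + 2) t) := by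
        simp only [Finset.mem_sigma, Finset.mem_range, Finset.mem_Icc]; omega
      have heq := h ⟨i, j⟩ hpS
      rw [fiber_card G c i j (by omega), min_eq_left hlecc] at heq
      exact (Dnb_card_one_iff G c x j).1 (key2 G c hc i j heq x hx')
    · have hpS : (⟨j, i⟩ : Σ _ : ℕ, ℕ) ∈
          (Finset.range (t - 1)).sigma (fun i => Finset.Icc (i + 2) t) := by
        simp only [Finset.mem_sigma, Finset.mem_range, Finset.mem_Icc]; omega
      have heq := h ⟨j, i⟩ hpS
      rw [fiber_card G c j i (by omega), min_eq_right hlecc, Pij_card_symm G c j i] at heq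
      exact (Dnb_card_one_iff G c x j).1 (key2 G c hc i j heq x hx')
  · rintro h ⟨i, j⟩ hp
    simp only [Finset.mem_sigma, Finset.mem_range, Finset.mem_Icc] at hp
    rw [fiber_card G c i j (by omega)]
    rcases le_or_gt ((CC c i).card) ((CC c j).card) with hlecc | hlt
    · rw [min_eq_left hlecc]
      rcases Nat.eq_zero_or_pos ((CC c i).card) with h0 | hpos
      · rw [h0]
        exact Nat.le_zero.1 (h0 ▸ hb1 i j)
      · refine key1 G c i j fun x hx => ?_
        have hcx : c x = i := by simpa [CC] using hx
        exact (Dnb_card_one_iff G c x j).2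
          (h i j (by omega) (by omega) (dist_two_iff.2 (Or.inl hp.2.1)) hpos hlecc x hcx)
    · rw [min_eq_right hlt.le, Pij_card_symm G c i j]
      rcases Nat.eq_zero_or_pos ((CC c j).card) with h0 | hpos
      · rw [h0]
        exact Nat.le_zero.1 (h0 ▸ hb1 j i)
      · refine key1 G c j i fun x hx => ?_
        have hcx : c x = j := by simpa [CC] using hx
        exact (Dnb_card_one_iff G c x i).2
          (h j i (by omega) (by omega) (dist_two_iff.2 (Or.inr hp.2.1)) hpos hlt.le x hcx)
end

section
/- Let t ≥ 3, let G be a finite simple graph with lambda chromatic number t, let c be an optimal lambda colouring of G taking values in {0, …, t} with colour classes C_m = {u : c(u) = m}, and define a : {0,…,t} → ℕ by a(m) = |C_m|. Then the projection map (m,i) ↦ m is an optimal lambda colouring of the standard graph S(a); in particular the lambda chromatic number of S(a) equals t, and moreover |E(S(a))| ≥ |E(G)|. -/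
/-- The standard graph `S(a)`: vertex set `{(m,i) : 0 ≤ m ≤ t, i < a(m)}`, with `(m,i)`
adjacent to `(p,j)` iff `i = j` and `|m − p| ≥ 2`. -/
def StdGraph (t : ℕ) (a : ℕ → ℕ) : SimpleGraph ((m : Fin (t + 1)) × Fin (a m.val)) where
  Adj u v := u.2.val = v.2.val ∧ 2 ≤ Nat.dist u.1.val v.1.val
  symm := by
    constructor
    rintro u v ⟨h1, h2⟩
    exact ⟨h1.symm, by rwa [Nat.dist_comm]⟩
  loopless := by
    constructor
    rintro u ⟨-, h2⟩
    simp [Nat.dist_self] at h2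

-- general midpoint lemma
lemma mid_of_dist_two {W : Type*} (H : SimpleGraph W) (u v : W) (hd : H.dist u v = 2) :
    ∃ w, H.Adj u w ∧ H.Adj w v := by
  obtain ⟨p, hp⟩ := SimpleGraph.exists_walk_of_dist_ne_zero (by omega : H.dist u v ≠ 0)
  rw [hd] at hp
  cases p with
  | nil => simp at hp
  | cons h q =>
    cases q with
    | nil => simp at hp
    | cons h' q' =>
      cases q' with
      | nil => exact ⟨_, h, h'⟩
      | cons h'' q'' => simp [SimpleGraph.Walk.length_cons] at hp


/-- Edge standardisation: if `G` has lambda chromatic number `t ≥ 3` with optimal lambda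
colouring `c` and class sizes `a(m) = |C_m|`, then the projection `(m,i) ↦ m` is an
optimal lambda colouring of the standard graph `S(a)` (whose lambda chromatic number is
`t`), and `S(a)` has at least as many edges as `G`. -/
theorem stmt_10 {V : Type*} [Fintype V] (G : SimpleGraph V) (t : ℕ) (ht : 3 ≤ t)
    (hG : lambdaChromatic G = t) (c : V → ℕ) (hc : IsLambdaColoring G c)
    (hopt : Finset.univ.sup c = t)
    (a : ℕ → ℕ) (ha : ∀ m, a m = {u | c u = m}.ncard) :
    IsLambdaColoring (StdGraph t a) (fun v => v.1.val) ∧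
    Finset.univ.sup (fun v : (m : Fin (t + 1)) × Fin (a m.val) => v.1.val) = t ∧
    lambdaChromatic (StdGraph t a) = t ∧
    G.edgeSet.ncard ≤ (StdGraph t a).edgeSet.ncard := by
  classical
  obtain ⟨hc1, hc2⟩ := hc
  have hcle : ∀ u, c u ≤ t := fun u => hopt ▸ Finset.le_sup (Finset.mem_univ u)
  have hlt : ∀ u, c u < t + 1 := fun u => Nat.lt_succ_of_le (hcle u)
  have hpos : ∀ u : V, 0 < a (c u) := by
    intro u
    rw [ha]
    rw [Set.ncard_pos (Set.toFinite _)]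
    exact ⟨u, rfl⟩
  have cne : ∀ x y, G.Adj x y → c x ≠ c y := by
    intro x y h he
    have := hc1 x y h
    rw [he, Nat.dist_self] at this
    omega
  -- Part 1
  have part1 : IsLambdaColoring (StdGraph t a) (fun v => v.1.val) := by
    constructor
    · intro u v huv
      exact huv.2
    · intro u v hd heq
      obtain ⟨w, h1, h2⟩ := mid_of_dist_two _ u v hd
      obtain ⟨u1, u2⟩ := u
      obtain ⟨v1, v2⟩ := v
      have e1 : u1 = v1 := Fin.ext heq
      subst e1
      have e2 : u2 = v2 := Fin.ext (h1.1.trans h2.1)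
      subst e2
      rw [SimpleGraph.dist_self] at hd
      omega
  -- nonempty top class
  haveI hVne : Nonempty V := by
    by_contra h
    rw [not_nonempty_iff] at h
    rw [Finset.univ_eq_empty, Finset.sup_empty] at hopt
    simp only [Nat.bot_eq_zero] at hopt
    omega
  obtain ⟨u0, hu0⟩ : ∃ u : V, c u = t := by
    obtain ⟨b, -, hb⟩ := Finset.exists_mem_eq_sup Finset.univ Finset.univ_nonempty c
    exact ⟨b, by rw [← hopt, hb]⟩
  have hat : 0 < a t := hu0 ▸ hpos u0
  let vt : (m : Fin (t + 1)) × Fin (a m.val) := ⟨⟨t, Nat.lt_succ_self t⟩, ⟨0, hat⟩⟩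
  -- Part 2
  have part2 : Finset.univ.sup (fun v : (m : Fin (t + 1)) × Fin (a m.val) => v.1.val) = t := by
    apply le_antisymm
    · exact Finset.sup_le fun v _ => v.1.is_le
    · exact Finset.le_sup (f := fun v : (m : Fin (t + 1)) × Fin (a m.val) => v.1.val)
        (Finset.mem_univ vt)
  -- Part 3
  have upper : t ∈ {s : ℕ | ∃ c', IsLambdaColoring (StdGraph t a) c' ∧ ∀ v, c' v ≤ s} :=
    ⟨_, part1, fun v => v.1.is_le⟩
  have lower : ∀ s ∈ {s : ℕ | ∃ c', IsLambdaColoring (StdGraph t a) c' ∧ ∀ v, c' v ≤ s},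
      t ≤ s := by
    rintro s ⟨c', hc', hb⟩
    have hdc : IsLambdaColoring G (fun u => c' ⟨⟨c u, hlt u⟩, ⟨0, hpos u⟩⟩) := by
      constructor
      · intro u v huv
        exact hc'.1 _ _ ⟨rfl, hc1 u v huv⟩
      · intro u v hduv
        have hne : c u ≠ c v := hc2 u v hduv
        obtain ⟨w, hw1, hw2⟩ := mid_of_dist_two G u v hduv
        set x : (m : Fin (t + 1)) × Fin (a m.val) := ⟨⟨c u, hlt u⟩, ⟨0, hpos u⟩⟩ with hx
        set y : (m : Fin (t + 1)) × Fin (a m.val) := ⟨⟨c v, hlt v⟩, ⟨0, hpos v⟩⟩ with hy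
        set z : (m : Fin (t + 1)) × Fin (a m.val) := ⟨⟨c w, hlt w⟩, ⟨0, hpos w⟩⟩ with hz
        have hxz : (StdGraph t a).Adj x z := ⟨rfl, hc1 u w hw1⟩
        have hzy : (StdGraph t a).Adj z y := ⟨rfl, hc1 w v hw2⟩
        by_cases hmp : 2 ≤ Nat.dist (c u) (c v)
        · have h2 := hc'.1 x y ⟨rfl, hmp⟩
          intro h
          rw [show c' x = c' y from h, Nat.dist_self] at h2
          omega
        · have hxy : x ≠ y := by
            intro h
            exact hne (congrArg (fun w => w.1.val) h)
          have hnadj : ¬ (StdGraph t a).Adj x y := fun h => hmp h.2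
          have hdle : (StdGraph t a).dist x y ≤ 2 := by
            have := SimpleGraph.dist_le
              (SimpleGraph.Walk.cons hxz (SimpleGraph.Walk.cons hzy SimpleGraph.Walk.nil))
            simpa using this
          have hd0 : (StdGraph t a).dist x y ≠ 0 :=
            SimpleGraph.dist_ne_zero_iff_ne_and_reachable.mpr
              ⟨hxy, ⟨SimpleGraph.Walk.cons hxz (SimpleGraph.Walk.cons hzy SimpleGraph.Walk.nil)⟩⟩
          have hd1 : (StdGraph t a).dist x y ≠ 1 := fun h =>
            hnadj (SimpleGraph.dist_eq_one_iff_adj.mp h)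
          exact hc'.2 x y (by omega)
    have : s ∈ {s : ℕ | ∃ d : V → ℕ, IsLambdaColoring G d ∧ ∀ v, d v ≤ s} :=
      ⟨_, hdc, fun v => hb _⟩
    calc t = lambdaChromatic G := hG.symm
    _ ≤ s := Nat.sInf_le this
  have part3 : lambdaChromatic (StdGraph t a) = t :=
    le_antisymm (Nat.sInf_le upper) (le_csInf ⟨t, upper⟩ lower)
  refine ⟨part1, part2, part3, ?_⟩
  -- Part 4: edge count
  -- injections from colour classes into Fin (a m)
  have hcard : ∀ m : ℕ, Nonempty ({u : V // c u = m} ↪ Fin (a m)) := by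
    intro m
    apply Function.Embedding.nonempty_of_card_le
    rw [Fintype.card_fin]
    have h1 : Nat.card ({u : V | c u = m} : Set V) = ({u : V | c u = m} : Set V).ncard :=
      Nat.card_coe_set_eq _
    rw [ha m, ← h1, Nat.card_eq_fintype_card]
    exact le_of_eq (Fintype.card_congr (Equiv.subtypeEquivRight fun u => Iff.rfl))
  let ι : ∀ m : ℕ, {u : V // c u = m} ↪ Fin (a m) := fun m => (hcard m).some
  have cast_val : ∀ (x : V) (m : ℕ) (hx : c x = m),
      (ι m ⟨x, hx⟩).val = (ι (c x) ⟨x, rfl⟩).val := by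
    intro x m hx
    subst hx
    rfl
  have inj2 : ∀ (m : ℕ) (x y : V) (hx : c x = m) (hy : c y = m),
      (ι m ⟨x, hx⟩).val = (ι m ⟨y, hy⟩).val → x = y := by
    intro m x y hx hy h
    have := (ι m).injective (Fin.ext h)
    exact congrArg Subtype.val this
  have matching : ∀ w x x' : V, G.Adj w x → G.Adj w x' → c x = c x' → x = x' := by
    intro w x x' h1 h2 hcx
    by_contra hne
    have hle : G.dist x x' ≤ 2 := by
      have := SimpleGraph.dist_le
        (SimpleGraph.Walk.cons h1.symm (SimpleGraph.Walk.cons h2 SimpleGraph.Walk.nil))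
      simpa using this
    have h0 : G.dist x x' ≠ 0 :=
      SimpleGraph.dist_ne_zero_iff_ne_and_reachable.mpr
        ⟨hne, ⟨SimpleGraph.Walk.cons h1.symm (SimpleGraph.Walk.cons h2 SimpleGraph.Walk.nil)⟩⟩
    have h1' : G.dist x x' ≠ 1 := by
      intro hh
      exact cne x x' (SimpleGraph.dist_eq_one_iff_adj.mp hh) hcx
    exact hc2 x x' (by omega) hcx
  -- index selection
  let P : V → V → Prop := fun u v => a (c u) < a (c v) ∨ (a (c u) = a (c v) ∧ c u < c v)
  let idx : V → V → ℕ := fun u v =>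
    if P u v then (ι (c u) ⟨u, rfl⟩).val else (ι (c v) ⟨v, rfl⟩).val
  have hidx_lt₁ : ∀ u v, idx u v < a (c u) := by
    intro u v
    by_cases h : P u v
    · simpa only [idx, if_pos h] using (ι (c u) ⟨u, rfl⟩).isLt
    · simp only [idx, if_neg h]
      have hle : a (c v) ≤ a (c u) := by
        by_contra hlt
        exact h (Or.inl (lt_of_not_ge hlt))
      exact lt_of_lt_of_le (ι (c v) ⟨v, rfl⟩).isLt hle
  have hidx_lt₂ : ∀ u v, idx u v < a (c v) := by
    intro u v
    by_cases h : P u v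
    · simp only [idx, if_pos h]
      have hle : a (c u) ≤ a (c v) := by
        rcases h with h | ⟨h, -⟩
        · exact le_of_lt h
        · exact le_of_eq h
      exact lt_of_lt_of_le (ι (c u) ⟨u, rfl⟩).isLt hle
    · simpa only [idx, if_neg h] using (ι (c v) ⟨v, rfl⟩).isLt
  have hidx_symm : ∀ u v, c u ≠ c v → idx u v = idx v u := by
    intro u v hne
    by_cases h : P u v
    · have h' : ¬ P v u := by
        rintro (h' | ⟨he', hl'⟩) <;> rcases h with h | ⟨he, hl⟩ <;> omega
      simp only [idx, if_pos h, if_neg h']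
    · have h' : P v u := by
        simp only [P, not_or, not_and, not_lt] at h
        obtain ⟨h1, h2⟩ := h
        rcases lt_or_eq_of_le h1 with hlt | heq
        · exact Or.inl hlt
        · refine Or.inr ⟨heq, ?_⟩
          have := h2 heq.symm
          omega
      simp only [idx, if_neg h, if_pos h']
  -- the edge map
  let g : V → V → Sym2 ((m : Fin (t + 1)) × Fin (a m.val)) := fun u v =>
    s((⟨⟨c u, hlt u⟩, ⟨idx u v, hidx_lt₁ u v⟩⟩ : (m : Fin (t + 1)) × Fin (a m.val)),
      (⟨⟨c v, hlt v⟩, ⟨idx u v, hidx_lt₂ u v⟩⟩ : (m : Fin (t + 1)) × Fin (a m.val)))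
  have key : ∀ u v u' v' : V, G.Adj u v → G.Adj u' v' → c u = c u' → c v = c v' →
      idx u v = idx u' v' → u = u' ∧ v = v' := by
    intro u v u' v' huv hu'v' hcu hcv hidx
    have hP : P u v ↔ P u' v' := by
      simp only [P, hcu, hcv]
    by_cases h : P u v
    · have h' : P u' v' := hP.mp h
      have hval : (ι (c u) ⟨u, rfl⟩).val = (ι (c u') ⟨u', rfl⟩).val := by
        simpa only [idx, if_pos h, if_pos h'] using hidx
      have hu : u = u' := by
        apply inj2 (c u') u u' hcu rfl
        rw [cast_val u (c u') hcu, hval]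
      refine ⟨hu, matching u v v' huv (by rw [hu]; exact hu'v') hcv⟩
    · have h' : ¬ P u' v' := fun hh => h (hP.mpr hh)
      have hval : (ι (c v) ⟨v, rfl⟩).val = (ι (c v') ⟨v', rfl⟩).val := by
        simpa only [idx, if_neg h, if_neg h'] using hidx
      have hv : v = v' := by
        apply inj2 (c v') v v' hcv rfl
        rw [cast_val v (c v') hcv, hval]
      refine ⟨matching v u u' huv.symm (by rw [hv]; exact hu'v'.symm) hcu, hv⟩
  haveI : Nonempty ((m : Fin (t + 1)) × Fin (a m.val)) := ⟨vt⟩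
  have hex : ∀ e ∈ G.edgeSet, ∃ p : V × V, G.Adj p.1 p.2 ∧ s(p.1, p.2) = e := by
    intro e
    induction e using Sym2.ind with
    | _ x y => exact fun he => ⟨(x, y), he, rfl⟩
  let F : Sym2 V → Sym2 ((m : Fin (t + 1)) × Fin (a m.val)) := fun e =>
    if h : ∃ p : V × V, G.Adj p.1 p.2 ∧ s(p.1, p.2) = e then g h.choose.1 h.choose.2
    else s(Classical.arbitrary _, Classical.arbitrary _)
  apply Set.ncard_le_ncard_of_injOn F ?_ ?_ (Set.toFinite _)
  · intro e he
    have h := hex e he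
    simp only [F, dif_pos h]
    obtain ⟨hadj, -⟩ := h.choose_spec
    exact (SimpleGraph.mem_edgeSet _).mpr ⟨rfl, hc1 _ _ hadj⟩
  · intro e he e' he' hFe
    have h := hex e he
    have h' := hex e' he'
    simp only [F, dif_pos h, dif_pos h'] at hFe
    obtain ⟨hadj, heq⟩ := h.choose_spec
    obtain ⟨hadj', heq'⟩ := h'.choose_spec
    set u := h.choose.1 with hu_def
    set v := h.choose.2 with hv_def
    set u' := h'.choose.1 with hu'_def
    set v' := h'.choose.2 with hv'_def
    rw [← heq, ← heq']
    rw [Sym2.eq_iff] at hFe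
    rcases hFe with ⟨hA, hB⟩ | ⟨hA, hB⟩
    · have hcu : c u = c u' := congrArg (fun w : (m : Fin (t + 1)) × Fin (a m.val) => w.1.val) hA
      have hcv : c v = c v' := congrArg (fun w : (m : Fin (t + 1)) × Fin (a m.val) => w.1.val) hB
      have hix : idx u v = idx u' v' :=
        congrArg (fun w : (m : Fin (t + 1)) × Fin (a m.val) => (w.2 : ℕ)) hA
      obtain ⟨h1, h2⟩ := key u v u' v' hadj hadj' hcu hcv hix
      rw [h1, h2]
    · have hcu : c u = c v' := congrArg (fun w : (m : Fin (t + 1)) × Fin (a m.val) => w.1.val) hA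
      have hcv : c v = c u' := congrArg (fun w : (m : Fin (t + 1)) × Fin (a m.val) => w.1.val) hB
      have hix : idx u v = idx u' v' :=
        congrArg (fun w : (m : Fin (t + 1)) × Fin (a m.val) => (w.2 : ℕ)) hA
      have hix' : idx u v = idx v' u' := by
        rw [hix, hidx_symm u' v' (cne u' v' hadj')]
      obtain ⟨h1, h2⟩ := key u v v' u' hadj hadj'.symm hcu hcv hix'
      rw [h1, h2, Sym2.eq_swap]
end

section
/- Let t ≥ 3 and let a : {0,…,t} → ℕ satisfy a(0) ≥ 1, a(t) ≥ 1, and there is no index i with 0 ≤ i ≤ t−1 for which a(i) = 0 and a(i+1) = 0. Then the lambda chromatic number of the standard graph S(a) equals t. -/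
lemma nat_dist_def (m n : ℕ) : Nat.dist m n = (m - n) + (n - m) := rfl

/-- Discrete intermediate value property for ℕ-valued step functions. -/
lemma nat_ivt {f : ℕ → ℕ} (hf0 : f 0 = 0) (hstep : ∀ n, f (n + 1) ≤ f n + 1) :
    ∀ N v, v ≤ f N → ∃ r, r ≤ N ∧ f r = v := by
  intro N
  induction N with
  | zero => intro v hv; exact ⟨0, le_refl 0, by omega⟩
  | succ N ih =>
    intro v hv
    by_cases h : v ≤ f N
    · obtain ⟨r, hr, hfr⟩ := ih v h
      exact ⟨r, by omega, hfr⟩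
    · refine ⟨N + 1, le_refl _, ?_⟩
      have := hstep N
      omega

/-- Walks in a standard graph preserve the second coordinate. -/
lemma stdgraph_snd_eq {t : ℕ} {a : ℕ → ℕ} {u v : (m : Fin (t + 1)) × Fin (a m.val)}
    (h : (StdGraph t a).Reachable u v) : u.2.val = v.2.val := by
  obtain ⟨w⟩ := h
  induction w with
  | nil => rfl
  | cons h p ih => exact h.1.trans ih

/-- If two distinct, non-adjacent vertices have a common neighbour, their distance is 2. -/
lemma stdgraph_dist_two {t : ℕ} {a : ℕ → ℕ} {u v w : (m : Fin (t + 1)) × Fin (a m.val)}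
    (hne : u ≠ v) (hnadj : ¬ (StdGraph t a).Adj u v)
    (h1 : (StdGraph t a).Adj u w) (h2 : (StdGraph t a).Adj w v) :
    (StdGraph t a).dist u v = 2 := by
  have hle : (StdGraph t a).dist u v ≤ 2 := by
    have := SimpleGraph.dist_le
      (SimpleGraph.Walk.cons h1 (SimpleGraph.Walk.cons h2 SimpleGraph.Walk.nil))
    simpa using this
  have h0 : (StdGraph t a).dist u v ≠ 0 := by
    intro h
    rcases SimpleGraph.dist_eq_zero_iff_eq_or_not_reachable.mp h with h' | h'
    · exact hne h'
    · exact h' ⟨SimpleGraph.Walk.cons h1 (SimpleGraph.Walk.cons h2 SimpleGraph.Walk.nil)⟩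
  have h1' : (StdGraph t a).dist u v ≠ 1 := by
    intro h
    exact hnadj (SimpleGraph.dist_eq_one_iff_adj.mp h)
  omega

/-- The abstract combinatorial core of the lower bound. -/
lemma key_lemma (t s : ℕ) (M : Finset ℕ) (h0M : 0 ∈ M) (htM : t ∈ M)
    (hMle : ∀ m ∈ M, m ≤ t)
    (hconsM : ∀ i, i + 1 ≤ t → i ∈ M ∨ (i + 1) ∈ M)
    (F : ℕ → ℕ) (hFs : ∀ m ∈ M, F m ≤ s)
    (hA : ∀ m ∈ M, ∀ p ∈ M, 2 ≤ Nat.dist m p → 2 ≤ Nat.dist (F m) (F p))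
    (hB : ∀ m ∈ M, ∀ p ∈ M, Nat.dist m p = 1 → F m ≠ F p) : t ≤ s := by
  classical
  set comp : ℕ → ℕ := fun m => ((Finset.range m).filter (fun r => r ∉ M)).card with hcomp
  -- basic facts about comp
  have comp_succ : ∀ m, comp (m + 1) = comp m + (if m ∈ M then 0 else 1) := by
    intro m
    by_cases hm : m ∈ M
    · simp [hcomp, Finset.range_add_one, Finset.filter_insert, hm]
    · rw [if_neg hm]
      simp only [hcomp, Finset.range_add_one, Finset.filter_insert, if_pos hm]
      rw [Finset.card_insert_of_notMem (by simp)]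
  have comp_zero : comp 0 = 0 := by simp [hcomp]
  have comp_step : ∀ m, comp (m + 1) ≤ comp m + 1 := by
    intro m; rw [comp_succ]; split <;> omega
  -- injectivity of F on M
  have Finj : ∀ m ∈ M, ∀ p ∈ M, F m = F p → m = p := by
    intro m hm p hp hFeq
    by_contra hne
    rcases Nat.lt_or_ge (Nat.dist m p) 2 with hd | hd
    · have hd1 : Nat.dist m p = 1 := by
        simp only [nat_dist_def] at hd ⊢; omega
      exact hB m hm p hp hd1 hFeq
    · have := hA m hm p hp hd
      simp [hFeq, Nat.dist_self] at this
  -- close frames have equal comp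
  have comp_close : ∀ m ∈ M, ∀ p ∈ M, Nat.dist m p ≤ 1 → comp m = comp p := by
    intro m hm p hp hd
    have : m = p ∨ p = m + 1 ∨ m = p + 1 := by simp only [nat_dist_def] at hd; omega
    rcases this with h | h | h
    · rw [h]
    · rw [h, comp_succ, if_pos hm]; omega
    · rw [h, comp_succ, if_pos hp]; omega
  -- the main induction (counting frames plus runs among colours ≤ v)
  have main : ∀ v : ℕ,
      (M.filter (fun m => F m ≤ v)).card
        + ((M.filter (fun m => F m ≤ v)).image comp).card ≤ v + 2
      ∧ ((∀ m ∈ M, F m ≠ v) →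
        (M.filter (fun m => F m ≤ v)).card
          + ((M.filter (fun m => F m ≤ v)).image comp).card ≤ v + 1) := by
    intro v
    induction v with
    | zero =>
      have hcard : (M.filter (fun m => F m ≤ 0)).card ≤ 1 := by
        apply Finset.card_le_one.mpr
        intro x hx y hy
        simp only [Finset.mem_filter] at hx hy
        exact Finj x hx.1 y hy.1 (by omega)
      have himg := Finset.card_image_le (s := M.filter (fun m => F m ≤ 0)) (f := comp)
      constructor
      · omega
      · intro hnone
        have : M.filter (fun m => F m ≤ 0) = ∅ := by
          apply Finset.filter_eq_empty_iff.mpr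
          intro m hm hF0
          exact hnone m hm (by omega)
        rw [this]
        simp
    | succ v ih =>
      by_cases hC : ∃ m ∈ M, F m = v + 1
      · obtain ⟨m, hmM, hFm⟩ := hC
        have hset : M.filter (fun x => F x ≤ v + 1) = insert m (M.filter (fun x => F x ≤ v)) := by
          ext x
          simp only [Finset.mem_filter, Finset.mem_insert]
          constructor
          · rintro ⟨hxM, hx⟩
            by_cases h : F x ≤ v
            · exact Or.inr ⟨hxM, h⟩
            · exact Or.inl (Finj x hxM m hmM (by omega))
          · rintro (rfl | ⟨hxM, hx⟩)
            · exact ⟨hmM, by omega⟩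
            · exact ⟨hxM, by omega⟩
        have hmnot : m ∉ M.filter (fun x => F x ≤ v) := by
          simp only [Finset.mem_filter]; omega
        have hNcard : (M.filter (fun x => F x ≤ v + 1)).card
            = (M.filter (fun x => F x ≤ v)).card + 1 := by
          rw [hset, Finset.card_insert_of_notMem hmnot]
        have himg : (M.filter (fun x => F x ≤ v + 1)).image comp
            = insert (comp m) ((M.filter (fun x => F x ≤ v)).image comp) := by
          rw [hset, Finset.image_insert]
        by_cases hCv : ∃ m' ∈ M, F m' = v
        · -- comp m already appears
          obtain ⟨m', hm'M, hFm'⟩ := hCv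
          have hclose : Nat.dist m m' ≤ 1 := by
            by_contra h
            have := hA m hmM m' hm'M (by omega)
            rw [hFm, hFm'] at this
            simp only [nat_dist_def] at this; omega
          have hcc : comp m = comp m' := comp_close m hmM m' hm'M hclose
          have hmem : comp m ∈ (M.filter (fun x => F x ≤ v)).image comp := by
            rw [hcc]
            exact Finset.mem_image_of_mem comp
              (Finset.mem_filter.mpr ⟨hm'M, by omega⟩)
          have hRcard : ((M.filter (fun x => F x ≤ v + 1)).image comp).card
              = ((M.filter (fun x => F x ≤ v)).image comp).card := by
            rw [himg, Finset.insert_eq_self.mpr hmem]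
          constructor
          · rw [hNcard, hRcard]; omega
          · intro hnone
            exact absurd hFm (hnone m hmM)
        · -- use strong clause at v
          have hstrong := ih.2 (by
            intro x hx hFx
            exact hCv ⟨x, hx, hFx⟩)
          have hRcard : ((M.filter (fun x => F x ≤ v + 1)).image comp).card
              ≤ ((M.filter (fun x => F x ≤ v)).image comp).card + 1 := by
            rw [himg]
            exact Finset.card_insert_le _ _
          constructor
          · omega
          · intro hnone
            exact absurd hFm (hnone m hmM)
      · have hset : M.filter (fun x => F x ≤ v + 1) = M.filter (fun x => F x ≤ v) := by
          apply Finset.filter_congr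
          intro x hx
          constructor
          · intro h
            by_cases h' : F x ≤ v
            · exact h'
            · exact absurd ⟨x, hx, by omega⟩ hC
          · omega
        rw [hset]
        have := ih.1
        exact ⟨by omega, fun _ => by omega⟩
  -- evaluate the invariant at v = s
  have hall : M.filter (fun m => F m ≤ s) = M := by
    apply Finset.filter_true_of_mem
    exact hFs
  have hmain := (main s).1
  rw [hall] at hmain
  -- every value up to comp t is attained by comp on M
  have hsurj : ∀ v, v ≤ comp t → v ∈ M.image comp := by
    intro v hv
    obtain ⟨r, hrt, hrv⟩ := nat_ivt comp_zero comp_step t v hv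
    by_cases hrM : r ∈ M
    · exact hrv ▸ Finset.mem_image_of_mem comp hrM
    · have hr0 : r ≠ 0 := fun h => hrM (h ▸ h0M)
      obtain ⟨r', rfl⟩ : ∃ r', r = r' + 1 := ⟨r - 1, by omega⟩
      have hr'M : r' ∈ M := by
        rcases hconsM r' (by omega) with h | h
        · exact h
        · exact absurd h hrM
      have heq : comp r' = v := by
        rw [← hrv, comp_succ, if_pos hr'M]; omega
      rw [← heq]
      exact Finset.mem_image_of_mem comp hr'M
  have hRge : comp t + 1 ≤ (M.image comp).card := by
    have hsub : Finset.range (comp t + 1) ⊆ M.image comp := by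
      intro v hv
      rw [Finset.mem_range] at hv
      exact hsurj v (by omega)
    calc comp t + 1 = (Finset.range (comp t + 1)).card := by simp
      _ ≤ (M.image comp).card := Finset.card_le_card hsub
  -- M.card + comp t = t + 1
  have hMsub : M = (Finset.range (t + 1)).filter (fun m => m ∈ M) := by
    ext x
    simp only [Finset.mem_filter, Finset.mem_range]
    constructor
    · intro hx; exact ⟨Nat.lt_succ_of_le (hMle x hx), hx⟩
    · intro hx; exact hx.2
  have hcount : M.card + comp (t + 1) = t + 1 := by
    have h' := Finset.card_filter_add_card_filter_not
      (s := Finset.range (t + 1)) (p := fun m => m ∈ M)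
    rw [← hMsub, Finset.card_range] at h'
    have h'' : comp (t + 1)
        = (Finset.filter (fun x => ¬ x ∈ M) (Finset.range (t + 1))).card := by
      simp [hcomp]
    omega
  have hct : comp (t + 1) = comp t := by rw [comp_succ, if_pos htM]; omega
  omega

/-- If `a(0) ≥ 1`, `a(t) ≥ 1` and no two consecutive values of `a` on `{0,…,t}` are
zero, then the lambda chromatic number of the standard graph `S(a)` equals `t`. -/
theorem stmt_11 (t : ℕ) (ht : 3 ≤ t) (a : ℕ → ℕ)
    (h0 : 1 ≤ a 0) (htop : 1 ≤ a t)
    (hcons : ∀ i, i + 1 ≤ t → ¬(a i = 0 ∧ a (i + 1) = 0)) :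
    lambdaChromatic (StdGraph t a) = t := by
  classical
  -- the colouring by frame index witnesses the upper bound
  have hub : t ∈ {s : ℕ | ∃ c : ((m : Fin (t + 1)) × Fin (a m.val)) → ℕ,
      IsLambdaColoring (StdGraph t a) c ∧ ∀ v, c v ≤ s} := by
    refine ⟨fun v => v.1.val, ⟨?_, ?_⟩, ?_⟩
    · intro u v hadj
      exact hadj.2
    · intro u v hd hceq
      have h0' : (StdGraph t a).dist u v ≠ 0 := by omega
      have hor : ¬ (u = v ∨ ¬ (StdGraph t a).Reachable u v) := by
        intro h
        exact h0' (SimpleGraph.dist_eq_zero_iff_eq_or_not_reachable.mpr h)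
      push_neg at hor
      obtain ⟨hne, hr⟩ := hor
      have hsnd : u.2.val = v.2.val := stdgraph_snd_eq hr
      apply hne
      obtain ⟨mu, iu⟩ := u
      obtain ⟨mv, iv⟩ := v
      have h1 : mu = mv := Fin.ext hceq
      subst h1
      have h2 : iu = iv := Fin.ext hsnd
      subst h2
      rfl
    · intro v
      exact Nat.lt_succ_iff.mp v.1.isLt
  apply le_antisymm
  · exact Nat.sInf_le hub
  · apply le_csInf ⟨t, hub⟩
    rintro s ⟨c, ⟨hc1, hc2⟩, hcb⟩
    rcases Nat.lt_or_ge t 4 with h4 | h4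
    · -- t = 3 : direct argument
      have ht3 : t = 3 := by omega
      subst ht3
      by_contra hts
      have hs2 : s ≤ 2 := by omega
      set u0 : (m : Fin 4) × Fin (a m.val) := ⟨⟨0, by omega⟩, ⟨0, h0⟩⟩ with hu0
      set u3 : (m : Fin 4) × Fin (a m.val) := ⟨⟨3, by omega⟩, ⟨0, htop⟩⟩ with hu3
      have hadj03 : (StdGraph 3 a).Adj u0 u3 := ⟨rfl, by simp [hu0, hu3, nat_dist_def]⟩
      have hd03 := hc1 u0 u3 hadj03
      have hb0 := hcb u0
      have hb3 := hcb u3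
      have h12 : 0 < a 1 ∨ 0 < a 2 := by
        have h' := hcons 1 (by omega)
        norm_num at h'
        omega
      rcases h12 with h1 | h2
      · set u1 : (m : Fin 4) × Fin (a m.val) := ⟨⟨1, by omega⟩, ⟨0, h1⟩⟩ with hu1
        have hadj13 : (StdGraph 3 a).Adj u1 u3 := ⟨rfl, by simp [hu1, hu3, nat_dist_def]⟩
        have hd13 := hc1 u1 u3 hadj13
        have hb1 := hcb u1
        have hne01 : u0 ≠ u1 := by
          intro h
          have := congrArg (fun x => x.1.val) h
          simp [hu0, hu1] at this
        have hnadj01 : ¬ (StdGraph 3 a).Adj u0 u1 := by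
          rintro ⟨-, hd⟩
          simp [hu0, hu1, nat_dist_def] at hd
        have hdist01 : (StdGraph 3 a).dist u0 u1 = 2 :=
          stdgraph_dist_two hne01 hnadj01
            (w := u3) ⟨rfl, by simp [hu0, hu3, nat_dist_def]⟩ ⟨rfl, by simp [hu3, hu1, nat_dist_def]⟩
        have hne := hc2 u0 u1 hdist01
        simp only [nat_dist_def] at hd03 hd13
        omega
      · set u2 : (m : Fin 4) × Fin (a m.val) := ⟨⟨2, by omega⟩, ⟨0, h2⟩⟩ with hu2
        have hadj02 : (StdGraph 3 a).Adj u0 u2 := ⟨rfl, by simp [hu0, hu2, nat_dist_def]⟩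
        have hd02 := hc1 u0 u2 hadj02
        have hb2 := hcb u2
        have hne23 : u2 ≠ u3 := by
          intro h
          have := congrArg (fun x => x.1.val) h
          simp [hu2, hu3] at this
        have hnadj23 : ¬ (StdGraph 3 a).Adj u2 u3 := by
          rintro ⟨-, hd⟩
          simp [hu2, hu3, nat_dist_def] at hd
        have hdist23 : (StdGraph 3 a).dist u2 u3 = 2 :=
          stdgraph_dist_two hne23 hnadj23
            (w := u0) ⟨rfl, by simp [hu2, hu0, nat_dist_def]⟩ ⟨rfl, by simp [hu0, hu3, nat_dist_def]⟩
        have hne := hc2 u2 u3 hdist23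
        simp only [nat_dist_def] at hd03 hd02
        omega
    · -- t ≥ 4 : the general argument
      set M : Finset ℕ := (Finset.range (t + 1)).filter (fun m => 0 < a m) with hM
      have hmemM : ∀ m, m ∈ M ↔ m ≤ t ∧ 0 < a m := by
        intro m
        simp [hM, Finset.mem_filter, Finset.mem_range, Nat.lt_succ_iff]
      set F : ℕ → ℕ := fun m =>
        if h : m ≤ t ∧ 0 < a m then
          c ⟨⟨m, Nat.lt_succ_of_le h.1⟩, ⟨0, h.2⟩⟩ else 0 with hF
      have hFeq : ∀ m (h1 : m ≤ t) (h2 : 0 < a m),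
          F m = c ⟨⟨m, Nat.lt_succ_of_le h1⟩, ⟨0, h2⟩⟩ := by
        intro m h1 h2
        simp only [hF]
        rw [dif_pos ⟨h1, h2⟩]
      apply key_lemma t s M ((hmemM 0).mpr ⟨by omega, h0⟩) ((hmemM t).mpr ⟨le_refl t, htop⟩)
        (fun m hm => ((hmemM m).mp hm).1) ?_ F ?_ ?_ ?_
      · -- no two consecutive missing
        intro i hi
        have := hcons i hi
        by_contra h
        push_neg at h
        obtain ⟨hi1, hi2⟩ := h
        rw [hmemM] at hi1 hi2
        apply this
        constructor <;> omega
      · -- bound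
        intro m hm
        rw [hmemM] at hm
        rw [hFeq m hm.1 hm.2]
        exact hcb _
      · -- hA
        intro m hm p hp hd
        rw [hmemM] at hm hp
        rw [hFeq m hm.1 hm.2, hFeq p hp.1 hp.2]
        exact hc1 _ _ ⟨rfl, hd⟩
      · -- hB
        have hBcore : ∀ m, m + 1 ≤ t → 0 < a m → 0 < a (m + 1) →
            F m ≠ F (m + 1) := by
          intro m hm1 ham ham1
          set u : (m' : Fin (t + 1)) × Fin (a m'.val) :=
            ⟨⟨m, by omega⟩, ⟨0, ham⟩⟩ with hu
          set v : (m' : Fin (t + 1)) × Fin (a m'.val) :=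
            ⟨⟨m + 1, by omega⟩, ⟨0, ham1⟩⟩ with hv
          have hne : u ≠ v := by
            intro h
            have := congrArg (fun x => x.1.val) h
            simp [hu, hv] at this
          have hnadj : ¬ (StdGraph t a).Adj u v := by
            rintro ⟨-, hd⟩
            simp [hu, hv, nat_dist_def] at hd
          -- common neighbour
          have hdist : (StdGraph t a).dist u v = 2 := by
            by_cases h2m : 2 ≤ m
            · exact stdgraph_dist_two hne hnadj
                (w := ⟨⟨0, by omega⟩, ⟨0, h0⟩⟩)
                ⟨rfl, by simp [hu, nat_dist_def]; omega⟩
                ⟨rfl, by simp [hv, nat_dist_def]; omega⟩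
            · exact stdgraph_dist_two hne hnadj
                (w := ⟨⟨t, by omega⟩, ⟨0, htop⟩⟩)
                ⟨rfl, by simp [hu, nat_dist_def]; omega⟩
                ⟨rfl, by simp [hv, nat_dist_def]; omega⟩
          have := hc2 u v hdist
          rw [hFeq m (by omega) ham, hFeq (m + 1) hm1 ham1]
          exact this
        intro m hm p hp hd
        rw [hmemM] at hm hp
        have : p = m + 1 ∨ m = p + 1 := by simp only [nat_dist_def] at hd; omega
        rcases this with rfl | rfl
        · exact hBcore m hp.1 hm.2 hp.2
        · exact (hBcore p hm.1 hp.2 hm.2).symm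
end

section
/- Let t ≥ 3 and let a : {0,…,t} → ℕ satisfy a(0) ≥ 1, a(t) ≥ 1, no two consecutive values of a are zero, and (max a) − (min a) ≥ 2. Let A be an index with a(A) = max a and let a′ agree with a except that a′(A) = a(A) − 1. Then the lambda chromatic number of the standard graph S(a′) equals t, and |E(S(a))| = |E(S(a′))| + |𝔐(a)| − 1 − |𝔐(a) ∩ P(A)|. -/
/-- The prohibited zone `P(i)` of an index `i ∈ {0,…,t}`. -/
def prohibitedZone (t i : ℕ) : Finset ℕ :=
  if i = 0 then {1} else if i = t then {t - 1} else {i - 1, i + 1}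


section Aux
open Finset

instance (t : ℕ) (a : ℕ → ℕ) : DecidableRel (StdGraph t a).Adj :=
  fun u v => inferInstanceAs (Decidable (_ ∧ _))

lemma ncard_eq (t : ℕ) (b : ℕ → ℕ) :
    (StdGraph t b).edgeSet.ncard = (StdGraph t b).edgeFinset.card := by
  rw [← SimpleGraph.coe_edgeFinset, Set.ncard_coe_finset]

lemma sum_ite_fin (N k : ℕ) :
    (∑ j : Fin N, if j.val = k then 1 else 0) = if k < N then 1 else 0 := by
  rw [Fin.sum_univ_eq_sum_range (fun j => if j = k then 1 else 0)]
  rw [Finset.sum_ite_eq' (range N) k (fun _ => 1)]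
  simp

lemma min_count (N k : ℕ) :
    (∑ i : Fin N, if i.val < k then 1 else 0) = min N k := by
  rw [Fin.sum_univ_eq_sum_range (fun i => if i < k then 1 else 0)]
  rw [← Finset.card_filter]
  have : (range N).filter (· < k) = range (min N k) := by
    ext x
    simp only [mem_filter, mem_range]
    omega
  rw [this, card_range]

lemma twice_edges (t : ℕ) (b : ℕ → ℕ) :
    2 * (StdGraph t b).edgeFinset.card
      = ∑ m ∈ range (t+1), ∑ p ∈ range (t+1),
          if 2 ≤ Nat.dist m p then min (b m) (b p) else 0 := by
  rw [← SimpleGraph.sum_degrees_eq_twice_card_edges]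
  have hdeg : ∀ v : (m : Fin (t + 1)) × Fin (b m.val),
      (StdGraph t b).degree v
        = ∑ p : Fin (t+1), if 2 ≤ Nat.dist v.1.val p.val then
            (if v.2.val < b p.val then 1 else 0) else 0 := by
    rintro ⟨m, i⟩
    rw [← SimpleGraph.card_neighborFinset_eq_degree, SimpleGraph.neighborFinset_eq_filter,
      Finset.card_filter]
    rw [← Finset.univ_sigma_univ, Finset.sum_sigma]
    refine Finset.sum_congr rfl fun p _ => ?_
    have : ∀ j : Fin (b p.val),
        (if (StdGraph t b).Adj ⟨m, i⟩ ⟨p, j⟩ then 1 else 0)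
          = if 2 ≤ Nat.dist m.val p.val then (if j.val = i.val then 1 else 0) else 0 := by
      intro j
      by_cases hd : 2 ≤ Nat.dist m.val p.val
      · simp only [hd, if_true]
        by_cases hj : (j : ℕ) = (i : ℕ)
        · simp [StdGraph, hj.symm, hd]
        · rw [if_neg hj, if_neg]
          rintro ⟨h1, -⟩; exact hj (h1.symm)
      · rw [if_neg hd, if_neg]
        rintro ⟨-, h2⟩; exact hd h2
    simp_rw [this]
    by_cases hd : 2 ≤ Nat.dist m.val p.val
    · simp only [hd, if_true]
      exact sum_ite_fin _ _
    · simp [hd]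
  simp_rw [hdeg]
  rw [← Finset.univ_sigma_univ, Finset.sum_sigma]
  rw [← Fin.sum_univ_eq_sum_range (fun m => ∑ p ∈ range (t+1),
    if 2 ≤ Nat.dist m p then min (b m) (b p) else 0)]
  refine Finset.sum_congr rfl fun m _ => ?_
  rw [Finset.sum_comm]
  rw [← Fin.sum_univ_eq_sum_range (fun p => if 2 ≤ Nat.dist m.val p then min (b m.val) (b p) else 0)]
  refine Finset.sum_congr rfl fun p _ => ?_
  by_cases hd : 2 ≤ Nat.dist m.val p.val
  · simp only [hd, if_true]
    exact min_count _ _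
  · simp [hd]

lemma Ndiff (t A : ℕ) (a a' : ℕ → ℕ) (hA : A ≤ t) (hsup : ∀ p, p ≤ t → a p ≤ a A)
    (ha1 : 1 ≤ a A) (ha'A : a' A = a A - 1) (ha'ne : ∀ m, m ≠ A → a' m = a m) :
    (∑ m ∈ range (t+1), ∑ p ∈ range (t+1),
        if 2 ≤ Nat.dist m p then min (a m) (a p) else 0)
      = (∑ m ∈ range (t+1), ∑ p ∈ range (t+1),
          if 2 ≤ Nat.dist m p then min (a' m) (a' p) else 0)
        + 2 * ((range (t+1)).filter (fun p => 2 ≤ Nat.dist A p ∧ a p = a A)).card := by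
  have hupd : ∀ m : ℕ, a' m = if m = A then a A - 1 else a m := by
    intro m
    by_cases h : m = A
    · rw [if_pos h, h, ha'A]
    · rw [if_neg h, ha'ne m h]
  have key : ∀ m ∈ range (t+1), ∀ p ∈ range (t+1),
      (if 2 ≤ Nat.dist m p then min (a m) (a p) else 0)
        = (if 2 ≤ Nat.dist m p then min (a' m) (a' p) else 0)
          + ((if m = A then (if 2 ≤ Nat.dist A p ∧ a p = a A then 1 else 0) else 0)
            + (if p = A then (if 2 ≤ Nat.dist A m ∧ a m = a A then 1 else 0) else 0)) := by
    intro m hm p hp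
    rw [mem_range] at hm hp
    have hap : a p ≤ a A := hsup p (by omega)
    have ham : a m ≤ a A := hsup m (by omega)
    by_cases hmA : m = A <;> by_cases hpA : p = A
    · rw [hmA, hpA]
      simp [Nat.dist_self]
    · rw [hmA, ha'A, ha'ne p hpA]
      simp only [eq_self_iff_true, if_true, if_neg hpA, add_zero]
      rw [hmA] at ham
      simp only [Nat.dist]
      by_cases hc : 2 ≤ A - p + (p - A) <;> by_cases hc' : 2 ≤ p - A + (A - p) <;>
        by_cases he : a p = a A <;> simp only [hc, hc', he, eq_self_iff_true, and_true, and_false, true_and, false_and, if_true, if_false] <;> omega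
    · rw [hpA, ha'A, ha'ne m hmA]
      simp only [eq_self_iff_true, if_true, if_neg hmA, zero_add]
      rw [hpA] at hap
      simp only [Nat.dist]
      by_cases hc : 2 ≤ m - A + (A - m) <;> by_cases hc' : 2 ≤ A - m + (m - A) <;>
        by_cases he : a m = a A <;> simp only [hc, hc', he, eq_self_iff_true, and_true, and_false, true_and, false_and, if_true, if_false] <;> omega
    · rw [ha'ne m hmA, ha'ne p hpA, if_neg hmA, if_neg hpA]
      omega
  rw [Finset.sum_congr rfl (fun m hm => Finset.sum_congr rfl (fun p hp => key m hm p hp))]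
  rw [Finset.sum_congr rfl (fun m _ => Finset.sum_add_distrib), Finset.sum_add_distrib]
  rw [Finset.sum_congr rfl (fun m (_ : m ∈ range (t+1)) => Finset.sum_add_distrib),
    Finset.sum_add_distrib]
  have h1 : (∑ m ∈ range (t+1), ∑ p ∈ range (t+1),
      (if m = A then (if 2 ≤ Nat.dist A p ∧ a p = a A then 1 else 0) else 0))
      = ((range (t+1)).filter (fun p => 2 ≤ Nat.dist A p ∧ a p = a A)).card := by
    have : ∀ m ∈ range (t+1), (∑ p ∈ range (t+1),
        (if m = A then (if 2 ≤ Nat.dist A p ∧ a p = a A then 1 else 0) else 0))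
        = (if m = A then ∑ p ∈ range (t+1),
            (if 2 ≤ Nat.dist A p ∧ a p = a A then 1 else 0) else 0) := by
      intro m _
      by_cases h : m = A
      · simp [h]
      · simp [h]
    rw [Finset.sum_congr rfl this, Finset.sum_ite_eq' (range (t+1)) A,
      if_pos (by rw [mem_range]; omega), Finset.card_filter]
  have h2 : (∑ m ∈ range (t+1), ∑ p ∈ range (t+1),
      (if p = A then (if 2 ≤ Nat.dist A m ∧ a m = a A then 1 else 0) else 0))
      = ((range (t+1)).filter (fun p => 2 ≤ Nat.dist A p ∧ a p = a A)).card := by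
    have : ∀ m ∈ range (t+1), (∑ p ∈ range (t+1),
        (if p = A then (if 2 ≤ Nat.dist A m ∧ a m = a A then 1 else 0) else 0))
        = (if 2 ≤ Nat.dist A m ∧ a m = a A then 1 else 0) := by
      intro m _
      rw [Finset.sum_ite_eq' (range (t+1)) A, if_pos (by rw [mem_range]; omega)]
    rw [Finset.sum_congr rfl this, Finset.card_filter]
  rw [h1, h2]
  ring

lemma Mcard (t A : ℕ) (ht : 3 ≤ t) (hA : A ≤ t) (a : ℕ → ℕ) :
    ((range (t+1)).filter (fun p => a p = a A)).card
      = ((range (t+1)).filter (fun p => 2 ≤ Nat.dist A p ∧ a p = a A)).card + 1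
        + (((range (t+1)).filter (fun p => a p = a A)) ∩ prohibitedZone t A).card := by
  set M := (range (t+1)).filter (fun p => a p = a A) with hM
  have e0 := Finset.card_filter_add_card_filter_not (s := M)
    (p := fun p => 2 ≤ Nat.dist A p)
  have e1 : M.filter (fun p => 2 ≤ Nat.dist A p)
      = (range (t+1)).filter (fun p => 2 ≤ Nat.dist A p ∧ a p = a A) := by
    rw [hM, Finset.filter_filter]
    apply Finset.filter_congr
    intro x _
    tauto
  have e2 : M.filter (fun p => ¬ 2 ≤ Nat.dist A p)
      = insert A (M ∩ prohibitedZone t A) := by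
    ext p
    simp only [hM, mem_filter, mem_insert, mem_inter, mem_range]
    constructor
    · rintro ⟨⟨hp, hep⟩, hd⟩
      by_cases hpA : p = A
      · left; exact hpA
      · right
        refine ⟨⟨hp, hep⟩, ?_⟩
        unfold prohibitedZone
        split_ifs with h0 hT
        · simp only [mem_singleton]
          subst h0
          simp only [Nat.dist] at hd
          omega
        · simp only [mem_singleton]
          subst hT
          simp only [Nat.dist] at hd
          omega
        · simp only [mem_insert, mem_singleton]
          simp only [Nat.dist] at hd
          omega
    · rintro (rfl | ⟨⟨hp, hep⟩, hpz⟩)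
      · exact ⟨⟨by omega, rfl⟩, by simp [Nat.dist_self]⟩
      · refine ⟨⟨hp, hep⟩, ?_⟩
        unfold prohibitedZone at hpz
        split_ifs at hpz with h0 hT
        · simp only [mem_singleton] at hpz
          subst h0
          simp only [Nat.dist]
          omega
        · simp only [mem_singleton] at hpz
          subst hT
          simp only [Nat.dist]
          omega
        · simp only [mem_insert, mem_singleton] at hpz
          simp only [Nat.dist]
          omega
  have hAn : A ∉ M ∩ prohibitedZone t A := by
    intro hmem
    rw [Finset.mem_inter] at hmem
    have := hmem.2
    unfold prohibitedZone at this
    split_ifs at this with h0 hT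
    · simp only [mem_singleton] at this; omega
    · simp only [mem_singleton] at this; omega
    · simp only [mem_insert, mem_singleton] at this; omega
  rw [e1, e2] at e0
  rw [Finset.card_insert_of_notMem hAn] at e0
  omega

lemma exists_mid {V : Type*} (G : SimpleGraph V) {u v : V} (h : G.dist u v = 2) :
    ∃ w, G.Adj u w ∧ G.Adj w v := by
  obtain ⟨p, hp⟩ := SimpleGraph.exists_walk_of_dist_ne_zero (by omega : G.dist u v ≠ 0)
  rw [h] at hp
  match p, hp with
  | .cons h1 (.cons h2 .nil), _ => exact ⟨_, h1, h2⟩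

lemma dist_eq_two_of {V : Type*} (G : SimpleGraph V) {u v w : V} (hne : u ≠ v)
    (hnadj : ¬ G.Adj u v) (h1 : G.Adj u w) (h2 : G.Adj w v) : G.dist u v = 2 := by
  have hle : G.dist u v ≤ 2 := by
    have := SimpleGraph.dist_le (SimpleGraph.Walk.cons h1 (SimpleGraph.Walk.cons h2 .nil))
    simpa using this
  have h0 : G.dist u v ≠ 0 :=
    SimpleGraph.dist_ne_zero_iff_ne_and_reachable.2 ⟨hne, ⟨.cons h1 (.cons h2 .nil)⟩⟩
  have h1' : G.dist u v ≠ 1 := fun hc => hnadj (SimpleGraph.dist_eq_one_iff_adj.1 hc)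
  omega

open Finset

lemma lambda_eq (t : ℕ) (ht : 3 ≤ t) (b : ℕ → ℕ) (hb0 : 1 ≤ b 0) (hbt : 1 ≤ b t)
    (hbcons : ∀ i, i + 1 ≤ t → ¬(b i = 0 ∧ b (i + 1) = 0)) :
    lambdaChromatic (StdGraph t b) = t := by
  have hmem : t ∈ {x : ℕ | ∃ c, IsLambdaColoring (StdGraph t b) c ∧ ∀ v, c v ≤ x} := by
    refine ⟨fun v => v.1.val, ⟨?_, ?_⟩, fun v => Fin.is_le v.1⟩
    · rintro u v ⟨-, h2⟩
      exact h2
    · intro u v hd hc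
      obtain ⟨w, hw1, hw2⟩ := exists_mid _ hd
      rcases u with ⟨m, i⟩
      rcases v with ⟨p, j⟩
      have hm : m = p := Fin.val_injective hc
      subst hm
      have hij : i = j := Fin.val_injective (hw1.1.trans hw2.1)
      subst hij
      rw [SimpleGraph.dist_self] at hd
      omega
  refine le_antisymm (Nat.sInf_le hmem) (le_csInf ⟨t, hmem⟩ ?_)
  rintro x ⟨c, ⟨hc1, hc2⟩, hall⟩
  by_contra hlt
  push_neg at hlt
  -- every colour is < t
  have hclt : ∀ v, c v < t := fun v => lt_of_le_of_lt (hall v) hlt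
  set M0 : Finset ℕ := (range (t+1)).filter (fun m => 1 ≤ b m) with hM0
  classical
  set f : ℕ → ℕ := fun m =>
    if h : m < t + 1 ∧ 1 ≤ b m then c ⟨⟨m, h.1⟩, ⟨0, h.2⟩⟩ else 0 with hf
  have hmemM0 : ∀ m, m ∈ M0 ↔ (m < t + 1 ∧ 1 ≤ b m) := by
    intro m; simp [hM0, mem_filter, mem_range]
  have hfval : ∀ m (h : m < t + 1 ∧ 1 ≤ b m), f m = c ⟨⟨m, h.1⟩, ⟨0, h.2⟩⟩ := by
    intro m h; rw [hf]; exact dif_pos h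
  have hflt : ∀ m, m ∈ M0 → f m < t := by
    intro m hm
    rw [hmemM0] at hm
    rw [hfval m hm]
    exact hclt _
  have fact_adj : ∀ m p, m ∈ M0 → p ∈ M0 → 2 ≤ Nat.dist m p →
      2 ≤ Nat.dist (f m) (f p) := by
    intro m p hm hp hd
    rw [hmemM0] at hm hp
    rw [hfval m hm, hfval p hp]
    exact hc1 _ _ ⟨rfl, hd⟩
  have fact_ne : ∀ m p q, m ∈ M0 → p ∈ M0 → q ∈ M0 → m ≠ p → ¬ 2 ≤ Nat.dist m p →
      2 ≤ Nat.dist m q → 2 ≤ Nat.dist q p → f m ≠ f p := by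
    intro m p q hm hp hq hne hnd hd1 hd2
    rw [hmemM0] at hm hp hq
    rw [hfval m hm, hfval p hp]
    refine hc2 _ _ ?_
    refine dist_eq_two_of _ ?_ ?_ (w := ⟨⟨q, hq.1⟩, ⟨0, hq.2⟩⟩) ⟨rfl, hd1⟩ ⟨rfl, hd2⟩
    · intro hcon
      exact hne (by simpa using congrArg (fun z => z.1.val) hcon)
    · rintro ⟨-, hadj⟩
      exact hnd hadj
  have h0M : 0 ∈ M0 := (hmemM0 0).2 ⟨by omega, hb0⟩
  have htM : t ∈ M0 := (hmemM0 t).2 ⟨by omega, hbt⟩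
  by_cases hexc : t = 3 ∧ 1 ∈ M0 ∧ 2 ∈ M0
  · obtain ⟨ht3, h1M, h2M⟩ := hexc
    subst ht3
    have ha02 : 2 ≤ Nat.dist (f 0) (f 2) := fact_adj 0 2 h0M h2M (by decide)
    have ha03 : 2 ≤ Nat.dist (f 0) (f 3) := fact_adj 0 3 h0M htM (by decide)
    have ha13 : 2 ≤ Nat.dist (f 1) (f 3) := fact_adj 1 3 h1M htM (by decide)
    have hne01 : f 0 ≠ f 1 :=
      fact_ne 0 1 3 h0M h1M htM (by omega) (by decide) (by decide) (by decide)
    have hne23 : f 2 ≠ f 3 :=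
      fact_ne 2 3 0 h2M htM h0M (by omega) (by decide) (by decide) (by decide)
    have l0 := hflt 0 h0M
    have l1 := hflt 1 h1M
    have l2 := hflt 2 h2M
    have l3 := hflt 3 htM
    simp only [Nat.dist] at ha02 ha03 ha13
    omega
  · have fact_q : ∀ m p, m ∈ M0 → p ∈ M0 → Nat.dist m p = 1 →
        ∃ q, q ∈ M0 ∧ 2 ≤ Nat.dist m q ∧ 2 ≤ Nat.dist q p := by
      intro m p hm hp hd
      simp only [Nat.dist] at hd
      by_cases hu : 2 ≤ min m p
      · exact ⟨0, h0M, by simp only [Nat.dist]; omega, by simp only [Nat.dist]; omega⟩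
      · by_cases hz : min m p = 0
        · exact ⟨t, htM, by simp only [Nat.dist]; omega, by simp only [Nat.dist]; omega⟩
        · have hmp : (m = 1 ∧ p = 2) ∨ (m = 2 ∧ p = 1) := by omega
          have h12 : 1 ∈ M0 ∧ 2 ∈ M0 := by
            rcases hmp with ⟨h1, h2⟩ | ⟨h1, h2⟩
            · subst h1; subst h2; exact ⟨hm, hp⟩
            · subst h1; subst h2; exact ⟨hp, hm⟩
          have ht4 : 4 ≤ t := by
            rcases Nat.lt_or_ge t 4 with h4 | h4
            · exact absurd ⟨by omega, h12.1, h12.2⟩ hexc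
            · exact h4
          exact ⟨t, htM, by simp only [Nat.dist]; omega, by simp only [Nat.dist]; omega⟩
    have fact_inj : ∀ m p, m ∈ M0 → p ∈ M0 → m ≠ p → f m ≠ f p := by
      intro m p hm hp hne
      by_cases hd : 2 ≤ Nat.dist m p
      · have hfd := fact_adj m p hm hp hd
        simp only [Nat.dist] at hfd
        omega
      · have hd1 : Nat.dist m p = 1 := by
          simp only [Nat.dist] at hd ⊢
          omega
        obtain ⟨q, hq, hq1, hq2⟩ := fact_q m p hm hp hd1
        exact fact_ne m p q hm hp hq hne hd hq1 hq2
    have fact_semi : ∀ m p, m ∈ M0 → p ∈ M0 → m ≠ p →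
        Nat.dist (f m) (f p) ≤ 1 → Nat.dist m p = 1 := by
      intro m p hm hp hne hfd
      by_cases hd : 2 ≤ Nat.dist m p
      · have := fact_adj m p hm hp hd
        omega
      · simp only [Nat.dist] at hd ⊢
        omega
    set Im : Finset ℕ := M0.image f with hIm
    have hinjOn : Set.InjOn f M0 := by
      intro m hm p hp h
      by_contra hne
      exact fact_inj m p hm hp hne h
    have hIm_card : Im.card = M0.card := Finset.card_image_of_injOn hinjOn
    have hIm_sub : Im ⊆ range t := by
      intro y hy
      rw [hIm, mem_image] at hy
      obtain ⟨m, hm, rfl⟩ := hy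
      rw [mem_range]
      exact hflt m hm
    set miss := range t \ Im with hmiss_def
    have hmiss : miss.card + M0.card = t := by
      have h := Finset.card_sdiff_add_card_eq_card hIm_sub
      rw [card_range, hIm_card] at h
      exact h
    set P1 := (range (t-1)).filter (fun x => x ∈ Im ∧ x + 1 ∈ Im) with hP1
    set B1 := (range (t-1)).filter (fun x => ¬(x ∈ Im ∧ x + 1 ∈ Im)) with hB1
    have e1 : P1.card + B1.card = t - 1 := by
      rw [hP1, hB1, Finset.card_filter_add_card_filter_not, card_range]
    have hB1le : B1.card ≤ miss.card + miss.card := by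
      have hsub : B1 ⊆ miss ∪ miss.image (fun y => y - 1) := by
        intro x hx
        rw [hB1, mem_filter, mem_range] at hx
        obtain ⟨hxlt, hxn⟩ := hx
        rw [mem_union]
        by_cases hxi : x ∈ Im
        · right
          rw [mem_image]
          refine ⟨x + 1, ?_, by omega⟩
          rw [hmiss_def, mem_sdiff, mem_range]
          exact ⟨by omega, fun hc => hxn ⟨hxi, hc⟩⟩
        · left
          rw [hmiss_def, mem_sdiff, mem_range]
          exact ⟨by omega, hxi⟩
      calc B1.card ≤ (miss ∪ miss.image (fun y => y - 1)).card := Finset.card_le_card hsub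
        _ ≤ miss.card + (miss.image (fun y => y - 1)).card := Finset.card_union_le _ _
        _ ≤ miss.card + miss.card := by
            exact Nat.add_le_add_left (Finset.card_image_le) _
    set Z := (range (t+1)).filter (fun m => ¬ 1 ≤ b m) with hZ
    have hzc : M0.card + Z.card = t + 1 := by
      rw [hM0, hZ, Finset.card_filter_add_card_filter_not, card_range]
    set P2 := (range t).filter (fun m => m ∈ M0 ∧ m + 1 ∈ M0) with hP2
    set B2 := (range t).filter (fun m => ¬(m ∈ M0 ∧ m + 1 ∈ M0)) with hB2
    have e2 : P2.card + B2.card = t := by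
      rw [hP2, hB2, Finset.card_filter_add_card_filter_not, card_range]
    have hZmem : ∀ z, z ∈ Z → b z = 0 ∧ 1 ≤ z ∧ z < t := by
      intro z hz
      rw [hZ, mem_filter, mem_range] at hz
      have hb : b z = 0 := by omega
      have h1 : z ≠ 0 := fun h => by rw [h] at hb; omega
      have h2 : z ≠ t := fun h => by rw [h] at hb; omega
      exact ⟨hb, by omega, by omega⟩
    have hB2ge : Z.card + Z.card ≤ B2.card := by
      have hsub : Z ∪ Z.image (fun z => z - 1) ⊆ B2 := by
        intro y hy
        rw [mem_union] at hy
        rcases hy with hy | hy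
        · obtain ⟨hb, h1, h2⟩ := hZmem y hy
          rw [hB2, mem_filter, mem_range]
          refine ⟨h2, fun hc => ?_⟩
          have := (hmemM0 y).1 hc.1
          omega
        · rw [mem_image] at hy
          obtain ⟨z, hz, rfl⟩ := hy
          obtain ⟨hb, h1, h2⟩ := hZmem z hz
          rw [hB2, mem_filter, mem_range]
          refine ⟨by omega, fun hc => ?_⟩
          have h3 := (hmemM0 (z - 1 + 1)).1 hc.2
          have hze : z - 1 + 1 = z := by omega
          rw [hze] at h3
          omega
      have hdisj : Disjoint Z (Z.image (fun z => z - 1)) := by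
        rw [Finset.disjoint_left]
        intro y hy hy2
        rw [mem_image] at hy2
        obtain ⟨z, hz, hze⟩ := hy2
        obtain ⟨hbz, hz1, hz2⟩ := hZmem z hz
        obtain ⟨hby, hy1, hy2'⟩ := hZmem y hy
        apply hbcons y (by omega)
        have hyz : y + 1 = z := by omega
        rw [hyz]
        exact ⟨hby, hbz⟩
      have hci : (Z.image (fun z => z - 1)).card = Z.card := by
        apply Finset.card_image_of_injOn
        intro z1 h1 z2 h2 he
        simp only at he
        have k1 := hZmem z1 h1
        have k2 := hZmem z2 h2
        omega
      calc Z.card + Z.card = (Z ∪ Z.image (fun z => z - 1)).card := by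
            rw [Finset.card_union_of_disjoint hdisj, hci]
        _ ≤ B2.card := Finset.card_le_card hsub
    have hpre : ∀ y, y ∈ Im → ∃ m, m ∈ M0 ∧ f m = y := by
      intro y hy
      rw [hIm, mem_image] at hy
      simpa using hy
    set g : ℕ → ℕ := fun y => if h : ∃ m, m ∈ M0 ∧ f m = y then h.choose else 0 with hg
    have hgspec : ∀ y, y ∈ Im → g y ∈ M0 ∧ f (g y) = y := by
      intro y hy
      have he := hpre y hy
      rw [hg]
      simp only [dif_pos he]
      exact he.choose_spec
    have hphi : ∀ x, x ∈ P1 → (min (g x) (g (x+1)) ∈ P2 ∧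
        x = min (f (min (g x) (g (x+1)))) (f (min (g x) (g (x+1)) + 1))) := by
      intro x hx
      rw [hP1, mem_filter, mem_range] at hx
      obtain ⟨hxr, hxi, hxi1⟩ := hx
      obtain ⟨hm, hfm⟩ := hgspec x hxi
      obtain ⟨hp, hfp⟩ := hgspec (x+1) hxi1
      have hne : g x ≠ g (x+1) := fun h => by rw [h, hfp] at hfm; omega
      have hd1 : Nat.dist (g x) (g (x+1)) = 1 := by
        apply fact_semi _ _ hm hp hne
        rw [hfm, hfp]
        simp only [Nat.dist]
        omega
      simp only [Nat.dist] at hd1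
      have hmm := (hmemM0 (g x)).1 hm
      have hpm := (hmemM0 (g (x+1))).1 hp
      rcases (by omega : g (x+1) = g x + 1 ∨ g x = g (x+1) + 1) with hcase | hcase
      · have hphix : min (g x) (g (x+1)) = g x := by omega
        rw [hphix]
        constructor
        · rw [hP2, mem_filter, mem_range]
          exact ⟨by omega, hm, hcase ▸ hp⟩
        · rw [← hcase, hfm, hfp]
          omega
      · have hphix : min (g x) (g (x+1)) = g (x+1) := by omega
        rw [hphix]
        constructor
        · rw [hP2, mem_filter, mem_range]
          exact ⟨by omega, hp, hcase ▸ hm⟩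
        · rw [← hcase, hfm, hfp]
          omega
    have hP1P2 : P1.card ≤ P2.card := by
      apply Finset.card_le_card_of_injOn (fun x => min (g x) (g (x+1)))
        (fun x hx => (hphi x hx).1)
      intro x1 h1 x2 h2 he
      have k1 := (hphi x1 h1).2
      have k2 := (hphi x2 h2).2
      simp only at he
      rw [he] at k1
      exact k1.trans k2.symm
    omega

end Aux

/-- Edge deletion: with `a(A) = max a` and `a'` equal to `a` except `a'(A) = a(A) − 1`,
the lambda chromatic number of `S(a')` equals `t`, and
`|E(S(a))| = |E(S(a'))| + |𝔐(a)| − 1 − |𝔐(a) ∩ P(A)|`. -/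
theorem stmt_12 (t : ℕ) (ht : 3 ≤ t) (a : ℕ → ℕ)
    (h0 : 1 ≤ a 0) (htop : 1 ≤ a t)
    (hcons : ∀ i, i + 1 ≤ t → ¬(a i = 0 ∧ a (i + 1) = 0))
    (hgap : (Finset.range (t + 1)).inf' ⟨0, by simp⟩ a + 2 ≤ (Finset.range (t + 1)).sup a)
    (A : ℕ) (hA : A ≤ t) (hAmax : a A = (Finset.range (t + 1)).sup a)
    (a' : ℕ → ℕ) (ha' : a' = Function.update a A (a A - 1)) :
    lambdaChromatic (StdGraph t a') = t ∧
    ((StdGraph t a).edgeSet.ncard : ℤ) =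
      ((StdGraph t a').edgeSet.ncard : ℤ)
      + (((Finset.range (t + 1)).filter
            (fun i => a i = (Finset.range (t + 1)).sup a)).card : ℤ)
      - 1
      - ((((Finset.range (t + 1)).filter
            (fun i => a i = (Finset.range (t + 1)).sup a)) ∩ prohibitedZone t A).card : ℤ) := by
  have hsup : ∀ p, p ≤ t → a p ≤ a A := fun p hp => by
    rw [hAmax]
    exact Finset.le_sup (Finset.mem_range.2 (by omega))
  have haA2 : 2 ≤ a A := by
    have h1 : (Finset.range (t+1)).inf' ⟨0, by simp⟩ a ≤ a 0 :=
      Finset.inf'_le a (Finset.mem_range.2 (by omega))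
    omega
  have ha'A : a' A = a A - 1 := by rw [ha']; exact Function.update_self A _ a
  have ha'ne : ∀ m, m ≠ A → a' m = a m := by
    intro m hm
    rw [ha']
    exact Function.update_of_ne hm _ a
  have ha'1 : 1 ≤ a' A := by omega
  have h0' : 1 ≤ a' 0 := by
    by_cases h : 0 = A
    · rw [h]; exact ha'1
    · rw [ha'ne 0 h]; exact h0
  have ht' : 1 ≤ a' t := by
    by_cases h : t = A
    · rw [h]; exact ha'1
    · rw [ha'ne t h]; exact htop
  have hcons' : ∀ i, i + 1 ≤ t → ¬(a' i = 0 ∧ a' (i + 1) = 0) := by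
    intro i hi ⟨e1, e2⟩
    by_cases h1 : i = A
    · rw [h1] at e1; omega
    · by_cases h2 : i + 1 = A
      · rw [h2] at e2; omega
      · rw [ha'ne i h1] at e1
        rw [ha'ne (i+1) h2] at e2
        exact hcons i hi ⟨e1, e2⟩
  constructor
  · exact lambda_eq t ht a' h0' ht' hcons'
  · have h2a := twice_edges t a
    have h2a' := twice_edges t a'
    have hnd := Ndiff t A a a' hA hsup (by omega) ha'A ha'ne
    have hEcount : (StdGraph t a).edgeFinset.card = (StdGraph t a').edgeFinset.card
        + ((Finset.range (t+1)).filter (fun p => 2 ≤ Nat.dist A p ∧ a p = a A)).card := by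
      omega
    have hmc := Mcard t A ht hA a
    have hca : (StdGraph t a).edgeSet.ncard = (StdGraph t a).edgeFinset.card :=
      ncard_eq t a
    have hca' : (StdGraph t a').edgeSet.ncard = (StdGraph t a').edgeFinset.card :=
      ncard_eq t a'
    rw [hca, hca', hEcount]
    simp only [← hAmax]
    push_cast
    omega
end

section
/- Let t ≥ 3 and let a : {0,…,t} → ℕ satisfy a(0) ≥ 1, a(t) ≥ 1, and no two consecutive values of a are zero. Let B be an index with a(B) = min a and let a″ agree with a except that a″(B) = a(B) + 1. Then |E(S(a″))| = |E(S(a))| + (t + 1) − |𝔪(a) ∪ P(B)|. -/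
instance stdDec (t : ℕ) (a : ℕ → ℕ) : DecidableRel (StdGraph t a).Adj :=
  fun u v => inferInstanceAs (Decidable (u.2.val = v.2.val ∧ 2 ≤ Nat.dist u.1.val v.1.val))

/-- Adding one extra vertex on level `B` splits the edge set. -/
lemma edge_split (t : ℕ) (a A : ℕ → ℕ) (hle : ∀ m, a m ≤ A m)
    (B : Fin (t+1)) (hAB : A B.val = a B.val + 1)
    (hAne : ∀ m : ℕ, m ≠ B.val → A m = a m) :
    (StdGraph t A).edgeFinset.card
      = (StdGraph t a).edgeFinset.card
        + (StdGraph t A).degree ⟨B, ⟨a B.val, by omega⟩⟩ := by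
  set v₀ : (m : Fin (t+1)) × Fin (A m.val) := ⟨B, ⟨a B.val, by omega⟩⟩ with hv₀
  set f : ((m : Fin (t+1)) × Fin (a m.val)) → ((m : Fin (t+1)) × Fin (A m.val)) :=
    fun v => ⟨v.1, ⟨v.2.val, lt_of_lt_of_le v.2.isLt (hle v.1.val)⟩⟩ with hf
  have hfinj : Function.Injective f := by
    rintro ⟨m, i⟩ ⟨p, j⟩ h
    obtain ⟨h1, h2⟩ := Sigma.mk.inj_iff.mp h
    subst h1
    have h3 := congrArg Fin.val (eq_of_heq h2)
    simp only at h3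
    exact Sigma.ext rfl (heq_of_eq (Fin.ext h3))
  have hrange : ∀ w : ((m : Fin (t+1)) × Fin (A m.val)), w ≠ v₀ →
      ∃ u, f u = w := by
    rintro ⟨m, j⟩ hw
    have hj : j.val < a m.val := by
      by_cases hm : m.val = B.val
      · have hmB : m = B := Fin.ext hm
        subst hmB
        have h1 : j.val < a m.val + 1 := by have := j.isLt; omega
        have hne : j.val ≠ a m.val := by
          intro hc
          exact hw (Sigma.ext rfl (heq_of_eq (Fin.ext hc)))
        omega
      · have h1 := j.isLt
        have h2 := hAne m.val hm
        omega
    exact ⟨⟨m, ⟨j.val, hj⟩⟩, rfl⟩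
  have hv₀nr : ∀ u, f u ≠ v₀ := by
    rintro ⟨m, i⟩ h
    obtain ⟨h1, h2⟩ := Sigma.mk.inj_iff.mp h
    subst h1
    have h3 := congrArg Fin.val (eq_of_heq h2)
    simp only at h3
    have := i.isLt
    omega
  have hadj : ∀ u v, (StdGraph t a).Adj u v ↔ (StdGraph t A).Adj (f u) (f v) := by
    intro u v; rfl
  have key : (StdGraph t A).edgeFinset
      = ((StdGraph t a).edgeFinset.map ⟨Sym2.map f, Sym2.map.injective hfinj⟩)
        ∪ (StdGraph t A).incidenceFinset v₀ := by
    ext e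
    induction e using Sym2.ind with
    | _ u v =>
      simp only [SimpleGraph.mem_edgeFinset, Finset.mem_union, Finset.mem_map,
        SimpleGraph.mem_incidenceFinset, SimpleGraph.mem_edgeSet,
        Function.Embedding.coeFn_mk]
      constructor
      · intro h
        by_cases hv : v₀ ∈ s(u, v)
        · exact Or.inr ⟨h, hv⟩
        · left
          rw [Sym2.mem_iff] at hv
          push_neg at hv
          obtain ⟨u', hu'⟩ := hrange u (fun hc => hv.1 hc.symm)
          obtain ⟨v', hv'⟩ := hrange v (fun hc => hv.2 hc.symm)
          refine ⟨s(u', v'), ?_, by simp [hu', hv']⟩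
          rw [SimpleGraph.mem_edgeSet, hadj u' v', hu', hv']
          exact h
      · rintro (⟨e', he', hmap⟩ | ⟨h, -⟩)
        · induction e' using Sym2.ind with
          | _ u' v' =>
            rw [Sym2.map_pair_eq, Sym2.eq_iff] at hmap
            rw [SimpleGraph.mem_edgeSet, hadj u' v'] at he'
            rcases hmap with ⟨h1, h2⟩ | ⟨h1, h2⟩
            · rwa [h1, h2] at he'
            · rw [h1, h2] at he'; exact he'.symm
        · exact h
  have hdisj : Disjoint ((StdGraph t a).edgeFinset.map ⟨Sym2.map f, Sym2.map.injective hfinj⟩)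
      ((StdGraph t A).incidenceFinset v₀) := by
    rw [Finset.disjoint_left]
    rintro e he hinc
    obtain ⟨e', -, hmap⟩ := Finset.mem_map.mp he
    rw [SimpleGraph.mem_incidenceFinset] at hinc
    have hv : v₀ ∈ e := hinc.2
    rw [← hmap] at hv
    simp only [Function.Embedding.coeFn_mk] at hv
    obtain ⟨x, -, hx⟩ := Sym2.mem_map.mp hv
    exact hv₀nr x hx
  rw [key, Finset.card_union_of_disjoint hdisj, Finset.card_map,
    SimpleGraph.card_incidenceFinset_eq_degree]

lemma pz_iff (t B n : ℕ) (ht : 3 ≤ t) (hB : B ≤ t) (hn : n ≤ t) :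
    Nat.dist B n ≤ 1 ↔ n ∈ insert B (prohibitedZone t B) := by
  unfold prohibitedZone
  split_ifs with h1 h2 <;>
    simp only [Finset.mem_insert, Finset.mem_singleton, Nat.dist] <;> omega

/-- The degree of the newly inserted vertex. -/
lemma deg_eq (t : ℕ) (ht : 3 ≤ t) (a : ℕ → ℕ) (B : ℕ) (hB : B ≤ t)
    (hBmin : a B = (Finset.range (t + 1)).inf' ⟨0, by simp⟩ a)
    (A : ℕ → ℕ) (hAB : A B = a B + 1) (hAne : ∀ m : ℕ, m ≠ B → A m = a m)
    (v₀ : (m : Fin (t+1)) × Fin (A m.val))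
    (hv₀ : v₀ = ⟨⟨B, by omega⟩, ⟨a B, by simp [hAB]⟩⟩) :
    (StdGraph t A).degree v₀
      = (Finset.range (t + 1) \
          (((Finset.range (t + 1)).filter
            (fun i => a i = (Finset.range (t + 1)).inf' ⟨0, by simp⟩ a)) ∪
          prohibitedZone t B)).card := by
  set m₀ := (Finset.range (t + 1)).inf' ⟨0, by simp⟩ a with hm₀
  have hmin : ∀ p, p < t + 1 → m₀ ≤ a p := fun p hp =>
    Finset.inf'_le a (Finset.mem_range.mpr hp)
  rw [← SimpleGraph.card_neighborFinset_eq_degree]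
  refine Finset.card_bij' (fun w _ => w.1.val)
    (fun n hn => ⟨⟨n, ?_⟩, ⟨a B, ?_⟩⟩) ?_ ?_ ?_ ?_
  · rw [Finset.mem_sdiff, Finset.mem_range] at hn; omega
  · rw [Finset.mem_sdiff, Finset.mem_range, Finset.mem_union, Finset.mem_filter] at hn
    push_neg at hn
    obtain ⟨hn1, hn2, hn3⟩ := hn
    have hnB : n ≠ B := by
      intro hc
      exact hn2 (Finset.mem_range.mpr hn1) (by rw [hc]; exact hBmin)
    rw [hAne n hnB]
    have := hmin n hn1
    have : a n ≠ m₀ := hn2 (Finset.mem_range.mpr hn1)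
    omega
  · rintro ⟨p, j⟩ hw
    rw [SimpleGraph.mem_neighborFinset, hv₀] at hw
    obtain ⟨hval, hdist⟩ := hw
    simp only at hval hdist
    rw [Finset.mem_sdiff, Finset.mem_range, Finset.mem_union, Finset.mem_filter]
    have hp := p.isLt
    have hpB : p.val ≠ B := by
      intro hc; rw [hc, Nat.dist_self] at hdist; omega
    have hja : a B < A p.val := by have := j.isLt; omega
    rw [hAne p.val hpB] at hja
    constructor
    · exact hp
    · rintro (⟨-, hc⟩ | hc)
      · rw [hc, ← hBmin] at hja; omega
      · have : Nat.dist B p.val ≤ 1 := by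
          rw [pz_iff t B p.val ht hB (by omega)]
          exact Finset.mem_insert_of_mem hc
        omega
  · intro n hn
    have hm := hn
    rw [Finset.mem_sdiff, Finset.mem_range, Finset.mem_union, Finset.mem_filter] at hm
    push_neg at hm
    obtain ⟨hn1, hn2, hn3⟩ := hm
    rw [SimpleGraph.mem_neighborFinset, hv₀]
    have hnB : n ≠ B := by
      intro hc
      exact hn2 (Finset.mem_range.mpr hn1) (by rw [hc]; exact hBmin)
    refine ⟨rfl, ?_⟩
    simp only
    by_contra hc
    push_neg at hc
    have : n ∈ insert B (prohibitedZone t B) := by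
      rw [← pz_iff t B n ht hB (by omega)]; omega
    rcases Finset.mem_insert.mp this with h | h
    · exact hnB h
    · exact hn3 h
  · rintro ⟨p, j⟩ hw
    rw [SimpleGraph.mem_neighborFinset, hv₀] at hw
    obtain ⟨hval, -⟩ := hw
    simp only at hval
    refine Sigma.ext rfl (heq_of_eq (Fin.ext ?_))
    exact hval
  · intro n hn; rfl

/-- Edge insertion: with `a(B) = min a` and `a''` equal to `a` except
`a''(B) = a(B) + 1`, we have `|E(S(a''))| = |E(S(a))| + (t+1) − |𝔪(a) ∪ P(B)|`. -/
theorem stmt_13 (t : ℕ) (ht : 3 ≤ t) (a : ℕ → ℕ)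
    (h0 : 1 ≤ a 0) (htop : 1 ≤ a t)
    (hcons : ∀ i, i + 1 ≤ t → ¬(a i = 0 ∧ a (i + 1) = 0))
    (B : ℕ) (hB : B ≤ t) (hBmin : a B = (Finset.range (t + 1)).inf' ⟨0, by simp⟩ a)
    (a'' : ℕ → ℕ) (ha'' : a'' = Function.update a B (a B + 1)) :
    ((StdGraph t a'').edgeSet.ncard : ℤ) =
      ((StdGraph t a).edgeSet.ncard : ℤ) + (t + 1)
      - ((((Finset.range (t + 1)).filter
            (fun i => a i = (Finset.range (t + 1)).inf' ⟨0, by simp⟩ a)) ∪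
          prohibitedZone t B).card : ℤ) := by
  have hAB : a'' B = a B + 1 := by rw [ha'']; exact Function.update_self _ _ _
  have hAne : ∀ m : ℕ, m ≠ B → a'' m = a m := by
    intro m hm; rw [ha'']; exact Function.update_of_ne hm _ _
  have hle : ∀ m, a m ≤ a'' m := by
    intro m
    by_cases h : m = B
    · subst h; omega
    · rw [hAne m h]
  -- rewrite ncards as edgeFinset cards
  have hn1 : (StdGraph t a'').edgeSet.ncard = (StdGraph t a'').edgeFinset.card := by
    rw [← SimpleGraph.coe_edgeFinset, Set.ncard_coe_finset]
  have hn2 : (StdGraph t a).edgeSet.ncard = (StdGraph t a).edgeFinset.card := by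
    rw [← SimpleGraph.coe_edgeFinset, Set.ncard_coe_finset]
  have hsplit := edge_split t a a'' hle ⟨B, by omega⟩ hAB hAne
  have hdeg := deg_eq t ht a B hB hBmin a'' hAB hAne
    ⟨⟨B, by omega⟩, ⟨a B, by simp [hAB]⟩⟩ rfl
  rw [hdeg] at hsplit
  have hUsub : (((Finset.range (t + 1)).filter
            (fun i => a i = (Finset.range (t + 1)).inf' ⟨0, by simp⟩ a)) ∪
          prohibitedZone t B) ⊆ Finset.range (t + 1) := by
    apply Finset.union_subset (Finset.filter_subset _ _)
    intro n hn
    unfold prohibitedZone at hn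
    rw [Finset.mem_range]
    split_ifs at hn <;> simp only [Finset.mem_insert, Finset.mem_singleton] at hn <;> omega
  have hUcard := (Finset.card_le_card hUsub).trans_eq (Finset.card_range _)
  rw [Finset.card_sdiff_of_subset hUsub, Finset.card_range] at hsplit
  rw [hn1, hn2]
  omega
end

section
/- Let t ≥ 3 and s ≥ 1 be integers and let a : {0,…,t} → ℕ satisfy a(i) ∈ {s, s+1} for every i, with M = {i : a(i) = s+1} nonempty and |M| ≤ t (so max a − min a = 1). Let K = #{i : 0 ≤ i ≤ t−1, a(i) = s+1 and a(i+1) = s+1}, and let n be the number of vertices of the standard graph S(a). Then n = s(t+1) + |M|, |E(S(a))| = s·t(t−1)/2 + |M|(|M|−1)/2 − K, and moreover s = ⌊n/(t+1)⌋ and |M| = n − (t+1)·⌊n/(t+1)⌋. -/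
instance stdGraphAdjDec (t : ℕ) (a : ℕ → ℕ) : DecidableRel (StdGraph t a).Adj :=
  fun u v => inferInstanceAs (Decidable (u.2.val = v.2.val ∧ 2 ≤ Nat.dist u.1.val v.1.val))

private lemma minsum : ∀ A B : ℕ, (∑ i ∈ Finset.range A, if i < B then 1 else 0) = min A B := by
  intro A B
  induction A with
  | zero => simp
  | succ A ih => rw [Finset.sum_range_succ, ih]; split <;> omega

private lemma split_sum (f : ℕ → ℕ → ℕ) (N : ℕ) :
    ∑ m ∈ Finset.range (N+1), ∑ p ∈ Finset.range (N+1), f m p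
      = (∑ m ∈ Finset.range (N+1), ∑ p ∈ Finset.range (N+1),
          if 2 ≤ Nat.dist m p then f m p else 0)
        + (∑ m ∈ Finset.range (N+1), f m m)
        + ∑ i ∈ Finset.range N, (f i (i+1) + f (i+1) i) := by
  have e1 : ∀ (h : ℕ → ℕ → ℕ) (N : ℕ),
      ∑ m ∈ Finset.range (N+2), ∑ p ∈ Finset.range (N+2), h m p
        = (∑ m ∈ Finset.range (N+1), ∑ p ∈ Finset.range (N+1), h m p)
          + ((∑ m ∈ Finset.range (N+1), h m (N+1))
            + (∑ p ∈ Finset.range (N+1), h (N+1) p) + h (N+1) (N+1)) := by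
    intro h N
    rw [Finset.sum_range_succ]
    have : ∀ m ∈ Finset.range (N+1),
        ∑ p ∈ Finset.range (N+2), h m p = ∑ p ∈ Finset.range (N+1), h m p + h m (N+1) :=
      fun m _ => Finset.sum_range_succ _ _
    rw [Finset.sum_congr rfl this, Finset.sum_add_distrib, Finset.sum_range_succ (h (N+1))]
    omega
  induction N with
  | zero => simp [Nat.dist_self]
  | succ N ih =>
    rw [e1 f N, e1 (fun m p => if 2 ≤ Nat.dist m p then f m p else 0) N,
      Finset.sum_range_succ (fun m => f m m), Finset.sum_range_succ (fun i => f i (i+1) + f (i+1) i)]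
    have hd1 : (∑ m ∈ Finset.range (N+1), if 2 ≤ Nat.dist m (N+1) then f m (N+1) else 0)
        = ∑ m ∈ Finset.range N, f m (N+1) := by
      rw [Finset.sum_range_succ]
      have h0 : Nat.dist N (N+1) = (N - (N+1)) + ((N+1) - N) := rfl
      rw [if_neg (by omega)]
      rw [Finset.sum_congr rfl (fun m hm => ?_), add_zero]
      have hm' := Finset.mem_range.mp hm
      have : Nat.dist m (N+1) = (m - (N+1)) + ((N+1) - m) := rfl
      rw [if_pos (by omega)]
    have hd2 : (∑ p ∈ Finset.range (N+1), if 2 ≤ Nat.dist (N+1) p then f (N+1) p else 0)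
        = ∑ p ∈ Finset.range N, f (N+1) p := by
      rw [Finset.sum_range_succ]
      have h0 : Nat.dist (N+1) N = ((N+1) - N) + (N - (N+1)) := rfl
      rw [if_neg (by omega)]
      rw [Finset.sum_congr rfl (fun p hp => ?_), add_zero]
      have hp' := Finset.mem_range.mp hp
      have : Nat.dist (N+1) p = ((N+1) - p) + (p - (N+1)) := rfl
      rw [if_pos (by omega)]
    have hd3 : (if 2 ≤ Nat.dist (N+1) (N+1) then f (N+1) (N+1) else 0) = 0 := by
      rw [if_neg]; simp [Nat.dist_self]
    rw [hd1, hd2, hd3]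
    have hr1 : ∑ m ∈ Finset.range (N+1), f m (N+1)
        = ∑ m ∈ Finset.range N, f m (N+1) + f N (N+1) := Finset.sum_range_succ _ _
    have hr2 : ∑ p ∈ Finset.range (N+1), f (N+1) p
        = ∑ p ∈ Finset.range N, f (N+1) p + f (N+1) N := Finset.sum_range_succ _ _
    omega

/-- Near-equitable case `∇ = 1`: if every class size is `s` or `s+1`, with
`M = {i : a i = s+1}` nonempty of size at most `t`, `K` the number of consecutive
pairs of maximum classes and `n` the number of vertices of `S(a)`, then
`n = s(t+1) + |M|`, `|E(S(a))| = s·t(t−1)/2 + |M|(|M|−1)/2 − K`, `s = ⌊n/(t+1)⌋` and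
`|M| = n − (t+1)⌊n/(t+1)⌋`. -/
theorem stmt_15 (t s : ℕ) (ht : 3 ≤ t) (hs : 1 ≤ s) (a : ℕ → ℕ)
    (ha : ∀ i ≤ t, a i = s ∨ a i = s + 1)
    (M : Finset ℕ) (hM : M = (Finset.range (t + 1)).filter (fun i => a i = s + 1))
    (hMne : M.Nonempty) (hMle : M.card ≤ t)
    (K : ℕ) (hK : K = ((Finset.range t).filter
      (fun i => a i = s + 1 ∧ a (i + 1) = s + 1)).card)
    (n : ℕ) (hn : n = Fintype.card ((m : Fin (t + 1)) × Fin (a m.val))) :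
    n = s * (t + 1) + M.card ∧
    ((StdGraph t a).edgeSet.ncard : ℤ) =
      (s : ℤ) * ((t : ℤ) * ((t : ℤ) - 1) / 2)
      + (M.card : ℤ) * ((M.card : ℤ) - 1) / 2 - (K : ℤ) ∧
    s = n / (t + 1) ∧
    M.card = n - (t + 1) * (n / (t + 1)) := by
  set R := Finset.range (t+1) with hR
  set g : ℕ → ℕ := fun i => if a i = s + 1 then 1 else 0 with hg
  have hcardM : M.card = ∑ i ∈ R, g i := by
    rw [hM, Finset.card_filter]
  have haeq : ∀ i ∈ R, a i = s + g i := by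
    intro i hi
    have hi' : i ≤ t := by have := Finset.mem_range.mp hi; omega
    rcases ha i hi' with h | h <;> simp [hg, h]
  have hn' : n = ∑ i ∈ R, a i := by
    rw [hn, Fintype.card_sigma]
    rw [show (fun m : Fin (t+1) => Fintype.card (Fin (a m.val))) = fun m => a m.val from by
      funext m; simp]
    · exact (Fin.sum_univ_eq_sum_range (fun i => a i) (t+1))
  have part1 : n = s * (t + 1) + M.card := by
    rw [hn', Finset.sum_congr rfl haeq, Finset.sum_add_distrib, Finset.sum_const,
      Finset.card_range, smul_eq_mul, hcardM, Nat.mul_comm]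
  -- pointwise min formula
  have hmin : ∀ m ∈ R, ∀ p ∈ R, min (a m) (a p) = s + g m * g p := by
    intro m hm p hp
    have hm' : m ≤ t := by have := Finset.mem_range.mp hm; omega
    have hp' : p ≤ t := by have := Finset.mem_range.mp hp; omega
    rcases ha m hm' with h1 | h1 <;> rcases ha p hp' with h2 | h2 <;>
      simp [hg, h1, h2] <;> omega
  -- full double sum
  have full : ∑ m ∈ R, ∑ p ∈ R, min (a m) (a p)
      = s * ((t+1)*(t+1)) + M.card * M.card := by
    rw [Finset.sum_congr rfl (fun m hm => Finset.sum_congr rfl (fun p hp => hmin m hm p hp))]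
    simp only [Finset.sum_add_distrib, Finset.sum_const, Finset.card_range, smul_eq_mul,
      ← Finset.mul_sum]
    rw [← Finset.sum_mul, ← hcardM, show R.card = t+1 from Finset.card_range _]
    ring
  -- diagonal
  have diag : ∑ m ∈ R, min (a m) (a m) = s * (t+1) + M.card := by
    rw [Finset.sum_congr rfl (fun m _ => min_self (a m)), ← hn', part1]
  -- consecutive
  have consec : ∑ i ∈ Finset.range t, (min (a i) (a (i+1)) + min (a (i+1)) (a i))
      = 2 * (s * t) + 2 * K := by
    have hpt : ∀ i ∈ Finset.range t, min (a i) (a (i+1)) + min (a (i+1)) (a i)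
        = 2 * s + 2 * (if a i = s + 1 ∧ a (i+1) = s + 1 then 1 else 0) := by
      intro i hi
      have hi' : i < t := Finset.mem_range.mp hi
      rcases ha i (by omega) with h1 | h1 <;> rcases ha (i+1) (by omega) with h2 | h2 <;>
        simp [h1, h2] <;> omega
    rw [Finset.sum_congr rfl hpt, Finset.sum_add_distrib, Finset.sum_const, Finset.card_range,
      smul_eq_mul, ← Finset.mul_sum, hK, Finset.card_filter]
    ring
  -- degree sum
  have hdeg : ∑ v : (m : Fin (t + 1)) × Fin (a m.val), (StdGraph t a).degree v
      = ∑ m ∈ R, ∑ p ∈ R, if 2 ≤ Nat.dist m p then min (a m) (a p) else 0 := by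
    rw [← Finset.univ_sigma_univ, Finset.sum_sigma]
    have hdegv : ∀ (m : Fin (t+1)) (i : Fin (a m.val)),
        (StdGraph t a).degree ⟨m, i⟩
          = ∑ p ∈ R, if 2 ≤ Nat.dist m.val p ∧ i.val < a p then 1 else 0 := by
      intro m i
      rw [SimpleGraph.degree, SimpleGraph.neighborFinset_eq_filter, Finset.card_filter,
        ← Finset.univ_sigma_univ, Finset.sum_sigma]
      have inner : ∀ p : Fin (t+1),
          (∑ j : Fin (a p.val), if (StdGraph t a).Adj ⟨m, i⟩ ⟨p, j⟩ then 1 else 0)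
            = if 2 ≤ Nat.dist m.val p.val ∧ i.val < a p.val then 1 else 0 := by
        intro p
        have hAdj : ∀ j : Fin (a p.val),
            (StdGraph t a).Adj ⟨m, i⟩ ⟨p, j⟩ ↔ (i.val = j.val ∧ 2 ≤ Nat.dist m.val p.val) :=
          fun j => Iff.rfl
        by_cases hC : 2 ≤ Nat.dist m.val p.val
        · simp only [hAdj, hC, and_true]
          rw [Fin.sum_univ_eq_sum_range (fun j => if i.val = j then 1 else 0) (a p.val),
            Finset.sum_ite_eq]
          simp [Finset.mem_range]
        · simp only [hAdj, hC, and_false, if_false]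
          simp [hC]
      rw [Finset.sum_congr rfl (fun p _ => inner p)]
      exact Fin.sum_univ_eq_sum_range
        (fun p => if 2 ≤ Nat.dist m.val p ∧ i.val < a p then 1 else 0) (t+1)
    rw [Finset.sum_congr rfl (fun m _ => Finset.sum_congr rfl (fun i _ => hdegv m i))]
    have row : ∀ m : Fin (t+1),
        (∑ i : Fin (a m.val), ∑ p ∈ R, if 2 ≤ Nat.dist m.val p ∧ i.val < a p then 1 else 0)
          = ∑ p ∈ R, if 2 ≤ Nat.dist m.val p then min (a m.val) (a p) else 0 := by
      intro m
      rw [Fin.sum_univ_eq_sum_range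
        (fun i => ∑ p ∈ R, if 2 ≤ Nat.dist m.val p ∧ i < a p then 1 else 0) (a m.val),
        Finset.sum_comm]
      refine Finset.sum_congr rfl (fun p _ => ?_)
      simp only [ite_and]
      by_cases hC : 2 ≤ Nat.dist m.val p
      · rw [if_pos hC]
        rw [Finset.sum_congr rfl (fun i _ => if_pos hC), minsum]
      · rw [if_neg hC]
        rw [Finset.sum_congr rfl (fun i _ => if_neg hC), Finset.sum_const_zero]
    rw [Finset.sum_congr rfl (fun m _ => row m)]
    exact Fin.sum_univ_eq_sum_range
      (fun m => ∑ p ∈ R, if 2 ≤ Nat.dist m p then min (a m) (a p) else 0) (t+1)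
  -- handshake
  have hhs : ∑ v : (m : Fin (t + 1)) × Fin (a m.val), (StdGraph t a).degree v
      = 2 * (StdGraph t a).edgeFinset.card :=
    SimpleGraph.sum_degrees_eq_twice_card_edges _
  have hsplit := split_sum (fun m p => min (a m) (a p)) t
  set E := (StdGraph t a).edgeFinset.card with hE
  have natkey : s * ((t+1)*(t+1)) + M.card * M.card
      = 2 * E + (s * (t+1) + M.card) + (2 * (s * t) + 2 * K) := by
    rw [← full, ← hhs, hdeg] at *
    rw [hsplit, diag, consec]
  have hEset : ((StdGraph t a).edgeSet.ncard : ℤ) = (E : ℤ) := by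
    rw [← SimpleGraph.coe_edgeFinset, Set.ncard_coe_finset]
  have hm1 : 1 ≤ M.card := hMne.card_pos
  -- integer computation for the edge count
  have key2 : 2 * (E : ℤ) = (s : ℤ) * ((t:ℤ) * ((t:ℤ) - 1)) + (M.card : ℤ) * ((M.card : ℤ) - 1)
      - 2 * (K : ℤ) := by
    have := congrArg (Nat.cast : ℕ → ℤ) natkey
    push_cast at this
    linear_combination -this
  obtain ⟨r, hr⟩ : Even ((t:ℤ) * ((t:ℤ) - 1)) := by
    have := Int.even_mul_succ_self ((t:ℤ) - 1)
    simpa [mul_comm] using this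
  obtain ⟨q, hq⟩ : Even ((M.card : ℤ) * ((M.card : ℤ) - 1)) := by
    have := Int.even_mul_succ_self ((M.card : ℤ) - 1)
    simpa [mul_comm] using this
  have hrd : (t:ℤ) * ((t:ℤ) - 1) / 2 = r := by omega
  have hqd : (M.card : ℤ) * ((M.card : ℤ) - 1) / 2 = q := by omega
  have part2 : ((StdGraph t a).edgeSet.ncard : ℤ) =
      (s : ℤ) * ((t : ℤ) * ((t : ℤ) - 1) / 2)
      + (M.card : ℤ) * ((M.card : ℤ) - 1) / 2 - (K : ℤ) := by
    rw [hEset, hrd, hqd]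
    rw [hr, hq] at key2
    linarith
  have part3 : s = n / (t + 1) := by
    have hlt : M.card < t + 1 := by omega
    have : n = M.card + (t+1) * s := by rw [part1]; ring
    rw [this, Nat.add_mul_div_left _ _ (by omega : 0 < t + 1), Nat.div_eq_of_lt hlt]
    omega
  have part4 : M.card = n - (t + 1) * (n / (t + 1)) := by
    rw [← part3]
    have : n = (t+1) * s + M.card := by rw [part1]; ring
    omega
  exact ⟨part1, part2, part3, part4⟩
end

section
/- Let t ≥ 3 and let n ≥ t + 1 be a multiple of t + 1. Let G be an n-vertex graph with lambda chromatic number t. Then G contains the maximum number of edges among all n-vertex graphs with lambda chromatic number t if and only if G is a member of the family 𝖦(t, n/(t+1)). -/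
open Finset SimpleGraph

namespace Stmt17


def pord (S : Finset ℕ) : ℕ :=
  ((S ×ˢ S).filter fun p => 2 ≤ Nat.dist p.1 p.2).card

def achain (S : Finset ℕ) : ℕ := (S.filter fun i => i + 1 ∈ S).card

lemma near_decomp (S : Finset ℕ) :
    ((S ×ˢ S).filter fun p => ¬ 2 ≤ Nat.dist p.1 p.2) =
      (S.image fun i => (i, i)) ∪ ((S.filter fun i => i + 1 ∈ S).image fun i => (i, i + 1))
        ∪ ((S.filter fun i => i + 1 ∈ S).image fun i => (i + 1, i)) := by
  ext ⟨a, b⟩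
  simp only [mem_filter, mem_product, mem_union, mem_image, Nat.dist, not_le]
  constructor
  · rintro ⟨⟨ha, hb⟩, hd⟩
    rcases Nat.lt_trichotomy a b with h | h | h
    · have : b = a + 1 := by omega
      subst this
      exact Or.inl (Or.inr ⟨a, ⟨ha, hb⟩, rfl⟩)
    · exact Or.inl (Or.inl ⟨a, ha, by simp [h]⟩)
    · have : a = b + 1 := by omega
      subst this
      exact Or.inr ⟨b, ⟨hb, ha⟩, rfl⟩
  · rintro ((⟨i, hi, h⟩ | ⟨i, ⟨hi, hi1⟩, h⟩) | ⟨i, ⟨hi, hi1⟩, h⟩) <;>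
      (cases h; constructor; constructor) <;> first | assumption | omega

lemma pord_partition (S : Finset ℕ) :
    S.card * S.card = pord S + (S.card + 2 * achain S) := by
  have h0 := Finset.card_filter_add_card_filter_not
    (s := S ×ˢ S) (p := fun p => 2 ≤ Nat.dist p.1 p.2)
  rw [near_decomp] at h0
  have hd1 : Disjoint ((S.image fun i => (i, i)) ∪
      ((S.filter fun i => i + 1 ∈ S).image fun i => (i, i + 1)))
      (((S.filter fun i => i + 1 ∈ S)).image fun i => (i + 1, i)) := by
    simp only [Finset.disjoint_left, mem_union, mem_image, mem_filter]
    rintro ⟨a, b⟩ (⟨i, _, h⟩ | ⟨i, _, h⟩) ⟨j, _, h'⟩ <;> cases h <;> cases h' <;> omega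
  have hd2 : Disjoint (S.image fun i => (i, i))
      ((S.filter fun i => i + 1 ∈ S).image fun i => (i, i + 1)) := by
    simp only [Finset.disjoint_left, mem_image, mem_filter]
    rintro ⟨a, b⟩ ⟨i, _, h⟩ ⟨j, _, h'⟩ <;> cases h <;> cases h' <;> omega
  rw [Finset.card_union_of_disjoint hd1, Finset.card_union_of_disjoint hd2,
    Finset.card_image_of_injective _ (fun x y h => by simpa [Prod.ext_iff] using h),
    Finset.card_image_of_injective _ (fun x y h => by simpa [Prod.ext_iff] using h),
    Finset.card_image_of_injective _ (fun x y h => by simpa [Prod.ext_iff] using h)] at h0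
  rw [Finset.card_product] at h0
  unfold pord achain
  omega

lemma achain_lb {t : ℕ} {S : Finset ℕ} (hS : S ⊆ range (t + 1)) :
    2 * S.card ≤ achain S + (t + 2) := by
  classical
  set X := S.erase t with hX
  set Y := (S.erase 0).image (· - 1) with hY
  have hXr : X ⊆ range t := by
    intro i hi
    have := hS (mem_of_mem_erase hi)
    simp only [mem_range] at this ⊢
    have := Finset.ne_of_mem_erase hi
    omega
  have hYr : Y ⊆ range t := by
    intro i hi
    simp only [hY, mem_image] at hi
    obtain ⟨j, hj, rfl⟩ := hi
    have h1 := hS (mem_of_mem_erase hj)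
    have h2 := Finset.ne_of_mem_erase hj
    simp only [mem_range] at h1 ⊢
    omega
  have hXc : S.card - 1 ≤ X.card := by
    have := Finset.card_erase_of_mem (a := t) (s := S)
    by_cases h : t ∈ S
    · rw [hX, Finset.card_erase_of_mem h]
    · rw [hX, Finset.erase_eq_of_notMem h]; omega
  have hYc : S.card - 1 ≤ Y.card := by
    have hinj : Set.InjOn (· - 1) (S.erase 0) := by
      intro a ha b hb h
      have ha' := Finset.ne_of_mem_erase ha
      have hb' := Finset.ne_of_mem_erase hb
      simp only at h; omega
    rw [hY, Finset.card_image_of_injOn hinj]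
    by_cases h : (0:ℕ) ∈ S
    · rw [Finset.card_erase_of_mem h]
    · rw [Finset.erase_eq_of_notMem h]; omega
  have hsub : X ∩ Y ⊆ S.filter fun i => i + 1 ∈ S := by
    intro i hi
    rw [mem_inter] at hi
    obtain ⟨hiX, hiY⟩ := hi
    simp only [hY, mem_image] at hiY
    obtain ⟨j, hj, hji⟩ := hiY
    have hj0 := Finset.ne_of_mem_erase hj
    have : j = i + 1 := by omega
    subst this
    exact mem_filter.2 ⟨mem_of_mem_erase hiX, mem_of_mem_erase hj⟩
  have h1 : X.card + Y.card = (X ∩ Y).card + (X ∪ Y).card :=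
    (Finset.card_inter_add_card_union X Y).symm
  have h2 : (X ∪ Y).card ≤ t := by
    have : X ∪ Y ⊆ range t := Finset.union_subset hXr hYr
    simpa using Finset.card_le_card this
  have h3 : (X ∩ Y).card ≤ achain S := Finset.card_le_card hsub
  omega

lemma arith_bound (e s P a : ℤ) (he : 1 ≤ e) (h0a : 0 ≤ a) (h0s : 0 ≤ s)
    (hs1 : s ≤ e + 3) (heq : s * s = P + (s + 2 * a)) (hach : 2 * s ≤ a + e + 4) :
    (e + 3) * P ≤ (e + 2) * (e + 1) * s ∧
      (1 ≤ s → s ≤ e + 2 → (e + 3) * P < (e + 2) * (e + 1) * s) := by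
  rcases lt_or_ge s (e + 2) with hlt | hge
  · constructor
    · nlinarith [mul_nonneg h0s (by linarith : (0:ℤ) ≤ e + 1 - s)]
    · intro hs0 _
      nlinarith [mul_nonneg h0s (by linarith : (0:ℤ) ≤ e + 1 - s)]
  · rcases lt_or_ge s (e + 3) with hlt2 | hge2
    · have hseq : s = e + 2 := by omega
      subst hseq
      constructor
      · nlinarith
      · intro _ _; nlinarith
    · have hseq : s = e + 3 := by omega
      subst hseq
      constructor
      · nlinarith
      · intro _ h; omega

lemma pord_bound {t : ℕ} (ht : 3 ≤ t) {S : Finset ℕ} (hS : S ⊆ range (t + 1)) :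
    (t + 1) * pord S ≤ t * (t - 1) * S.card ∧
      (S.Nonempty → S.card ≤ t → (t + 1) * pord S < t * (t - 1) * S.card) := by
  obtain ⟨e, rfl⟩ : ∃ e, t = e + 2 := ⟨t - 2, by omega⟩
  have he : (1:ℤ) ≤ (e:ℤ) := by omega
  have hs1 : S.card ≤ e + 3 := by simpa using Finset.card_le_card hS
  have heq := pord_partition S
  have hach := achain_lb hS
  have key := arith_bound (e : ℤ) (S.card : ℤ) (pord S : ℤ) (achain S : ℤ) he
    (by positivity) (by positivity) (by exact_mod_cast hs1)
    (by exact_mod_cast heq) (by omega)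
  have htt : (e + 2) * (e + 2 - 1) = (e + 2) * (e + 1) := by norm_num
  rw [htt]
  constructor
  · have := key.1
    have : ((e:ℤ) + 2 + 1) * (pord S : ℤ) ≤ ((e:ℤ) + 2) * ((e:ℤ) + 1) * (S.card : ℤ) := by
      linarith [key.1]
    exact_mod_cast this
  · intro hne hc
    have hs0 : (1:ℤ) ≤ (S.card : ℤ) := by exact_mod_cast Finset.card_pos.2 hne
    have hc' : (S.card : ℤ) ≤ (e:ℤ) + 2 := by exact_mod_cast hc
    have := key.2 hs0 hc'
    have h2 : ((e:ℤ) + 2 + 1) * (pord S : ℤ) < ((e:ℤ) + 2) * ((e:ℤ) + 1) * (S.card : ℤ) := by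
      linarith
    exact_mod_cast h2

lemma achain_range (t : ℕ) : achain (range (t + 1)) = t := by
  unfold achain
  have : (range (t + 1)).filter (fun i => i + 1 ∈ range (t + 1)) = range t := by
    ext i; simp only [mem_filter, mem_range]; omega
  rw [this, card_range]

lemma pord_range {t : ℕ} (ht : 1 ≤ t) : pord (range (t + 1)) = t * (t - 1) := by
  obtain ⟨u, rfl⟩ : ∃ u, t = u + 1 := ⟨t - 1, by omega⟩
  have h := pord_partition (range (u + 1 + 1))
  rw [achain_range, card_range] at h
  simp only [Nat.add_sub_cancel]
  have h3 : (u + 1 + 1) * (u + 1 + 1) = u * u + 4 * u + 4 := by ring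
  have h4 : (u + 1) * u = u * u + u := by ring
  rw [h3] at h
  rw [h4]
  generalize u * u = w at h ⊢
  omega



lemma dist_eq_two' {W : Type*} {G : SimpleGraph W} {u w v : W} (h1 : G.Adj u w)
    (h2 : G.Adj w v) (hne : u ≠ v) (hna : ¬ G.Adj u v) : G.dist u v = 2 := by
  have hle : G.dist u v ≤ 2 := by
    have := SimpleGraph.dist_le (SimpleGraph.Walk.cons h1 (SimpleGraph.Walk.cons h2 SimpleGraph.Walk.nil))
    simpa using this
  have h0 : G.dist u v ≠ 0 := by
    rw [Ne, SimpleGraph.dist_eq_zero_iff_eq_or_not_reachable]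
    push_neg
    exact ⟨hne, ⟨SimpleGraph.Walk.cons h1 (SimpleGraph.Walk.cons h2 SimpleGraph.Walk.nil)⟩⟩
  have h1' : G.dist u v ≠ 1 := fun h => hna (SimpleGraph.dist_eq_one_iff_adj.1 h)
  omega

lemma unique_nbr {W : Type*} {G : SimpleGraph W} {c : W → ℕ} (hc : IsLambdaColoring G c) :
    ∀ v y z, G.Adj v y → G.Adj v z → c y = c z → y = z := by
  intro v y z h1 h2 hcyz
  by_contra hne
  have hna : ¬ G.Adj y z := by
    intro h
    have := hc.1 y z h
    rw [hcyz, Nat.dist_self] at this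
    omega
  exact hc.2 y z (dist_eq_two' h1.symm h2 hne hna) hcyz




lemma main_bound {W : Type*} [Fintype W] {t l : ℕ} (ht : 3 ≤ t) (G : SimpleGraph W)
    (hcard : Fintype.card W = (t + 1) * l) {c : W → ℕ} (hc : IsLambdaColoring G c)
    (hct : ∀ v, c v ≤ t) :
    2 * G.edgeSet.ncard ≤ l * (t * (t - 1)) ∧
      (2 * G.edgeSet.ncard = l * (t * (t - 1)) → MemGFamily G t l c) := by
  classical
  set N := (t + 1) * l with hN
  set f : ℕ → ℕ := fun i => (univ.filter fun v => c v = i).card with hf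
  have hfN : ∀ i, f i ≤ N := fun i => by
    calc f i ≤ (univ : Finset W).card := Finset.card_filter_le _ _
    _ = N := by rw [Finset.card_univ, hcard]
  have hf_sum : ∑ i ∈ range (t + 1), f i = N := by
    rw [← hcard, ← Finset.card_univ]
    exact (Finset.card_eq_sum_card_fiberwise
      (fun v _ => Finset.mem_range.2 (Nat.lt_succ_of_le (hct v)))).symm
  -- the edge count via ordered adjacent pairs
  have hE : G.edgeSet.ncard = G.edgeFinset.card := by
    rw [← SimpleGraph.coe_edgeFinset, Set.ncard_coe_finset]
  set AP : Finset (W × W) := univ.filter (fun p : W × W => G.Adj p.1 p.2) with hAPdef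
  have hAP : 2 * G.edgeSet.ncard = AP.card := by
    rw [hE, SimpleGraph.two_mul_card_edgeFinset]
  set E2 : ℕ × ℕ → Finset (W × W) :=
    fun q => univ.filter (fun p : W × W => c p.1 = q.1 ∧ c p.2 = q.2 ∧ G.Adj p.1 p.2) with hE2
  have hsplit : AP.card = ∑ q ∈ (range (t + 1)) ×ˢ (range (t + 1)), (E2 q).card := by
    rw [Finset.card_eq_sum_card_fiberwise
      (f := fun p : W × W => (c p.1, c p.2)) (t := (range (t + 1)) ×ˢ (range (t + 1)))
      (fun p hp => Finset.mem_product.2 ⟨Finset.mem_range.2 (Nat.lt_succ_of_le (hct p.1)),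
        Finset.mem_range.2 (Nat.lt_succ_of_le (hct p.2))⟩)]
    apply Finset.sum_congr rfl
    intro q _
    congr 1
    ext p
    simp only [hAPdef, hE2, Finset.mem_filter, Finset.mem_univ, true_and, Prod.ext_iff]
    tauto
  have hE2f : ∀ q : ℕ × ℕ, (E2 q).card ≤ f q.1 ∧ (E2 q).card ≤ f q.2 := by
    intro q
    constructor
    · apply Finset.card_le_card_of_injOn Prod.fst
      · intro p hp
        simp only [hE2, Finset.mem_coe, Finset.mem_filter, Finset.mem_univ, true_and] at hp
        simp [hf, hp.1]
      · intro p hp p' hp' hpp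
        simp only [Finset.coe_filter, Set.mem_setOf_eq, Finset.mem_univ, true_and, hE2] at hp hp'
        have := unique_nbr hc p.1 p.2 p'.2 hp.2.2 (hpp ▸ hp'.2.2) (by rw [hp.2.1, hp'.2.1])
        exact Prod.ext hpp this
    · apply Finset.card_le_card_of_injOn Prod.snd
      · intro p hp
        simp only [hE2, Finset.mem_coe, Finset.mem_filter, Finset.mem_univ, true_and] at hp
        simp [hf, hp.2.1]
      · intro p hp p' hp' hpp
        simp only [Finset.coe_filter, Set.mem_setOf_eq, Finset.mem_univ, true_and, hE2] at hp hp'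
        have := unique_nbr hc p.2 p.1 p'.1 hp.2.2.symm (hpp ▸ hp'.2.2.symm)
          (by rw [hp.1, hp'.1])
        exact Prod.ext this hpp
  have hE2min : ∀ q : ℕ × ℕ, (E2 q).card ≤ min (f q.1) (f q.2) :=
    fun q => le_min (hE2f q).1 (hE2f q).2
  have hE2near : ∀ q : ℕ × ℕ, ¬ 2 ≤ Nat.dist q.1 q.2 → (E2 q).card = 0 := by
    intro q hq
    rw [Finset.card_eq_zero]
    ext p
    simp only [hE2, Finset.mem_filter, Finset.mem_univ, true_and, Finset.notMem_empty,
      iff_false]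
    rintro ⟨h1, h2, h3⟩
    exact hq (h1 ▸ h2 ▸ hc.1 p.1 p.2 h3)
  set FP : Finset (ℕ × ℕ) :=
    ((range (t + 1)) ×ˢ (range (t + 1))).filter (fun q => 2 ≤ Nat.dist q.1 q.2) with hFP
  have hsplit2 : AP.card = ∑ q ∈ FP, (E2 q).card := by
    rw [hsplit, ← Finset.sum_filter_add_sum_filter_not ((range (t + 1)) ×ˢ (range (t + 1)))
      (fun q => 2 ≤ Nat.dist q.1 q.2)]
    rw [Finset.sum_congr rfl (fun q hq => hE2near q (Finset.mem_filter.1 hq).2)]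
    simp
    rfl
  -- layer sets
  set S : ℕ → Finset ℕ := fun τ => (range (t + 1)).filter (fun i => τ ≤ f i) with hS
  have hmin_card : ∀ q ∈ FP, min (f q.1) (f q.2) =
      ((Icc 1 N).filter fun τ => τ ≤ f q.1 ∧ τ ≤ f q.2).card := by
    intro q _
    have : ((Icc 1 N).filter fun τ => τ ≤ f q.1 ∧ τ ≤ f q.2) = Icc 1 (min (f q.1) (f q.2)) := by
      ext τ
      have := hfN q.1
      have := hfN q.2
      simp only [Finset.mem_filter, Finset.mem_Icc, le_min_iff]
      omega
    rw [this, Nat.card_Icc]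
    omega
  have exchange1 : ∑ q ∈ FP, min (f q.1) (f q.2) = ∑ τ ∈ Icc 1 N, pord (S τ) := by
    rw [Finset.sum_congr rfl hmin_card]
    have h1 : ∀ q ∈ FP, ((Icc 1 N).filter fun τ => τ ≤ f q.1 ∧ τ ≤ f q.2).card
        = ∑ τ ∈ Icc 1 N, if τ ≤ f q.1 ∧ τ ≤ f q.2 then 1 else 0 :=
      fun q _ => Finset.card_filter _ _
    rw [Finset.sum_congr rfl h1, Finset.sum_comm]
    apply Finset.sum_congr rfl
    intro τ _
    have : pord (S τ) = ∑ q ∈ FP, if τ ≤ f q.1 ∧ τ ≤ f q.2 then 1 else 0 := by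
      rw [← Finset.card_filter]
      unfold pord
      congr 1
      ext q
      simp only [Finset.mem_filter, Finset.mem_product, hS, Finset.mem_range, hFP]
      tauto
    rw [this]
  have exchange2 : ∑ τ ∈ Icc 1 N, (S τ).card = N := by
    have h1 : ∀ τ ∈ Icc 1 N, (S τ).card = ∑ i ∈ range (t + 1), if τ ≤ f i then 1 else 0 :=
      fun τ _ => Finset.card_filter _ _
    have hmain : ∑ τ ∈ Icc 1 N, (S τ).card = ∑ i ∈ range (t + 1), f i := by
      rw [Finset.sum_congr rfl h1, Finset.sum_comm]
      apply Finset.sum_congr rfl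
      intro i _
      rw [← Finset.card_filter]
      have h2 : ((Icc 1 N).filter fun τ => τ ≤ f i) = Icc 1 (f i) := by
        ext τ
        have := hfN i
        simp only [Finset.mem_filter, Finset.mem_Icc]
        omega
      rw [h2, Nat.card_Icc]
      omega
    rw [hmain, hf_sum]
  have hSsub : ∀ τ, S τ ⊆ range (t + 1) := fun τ => Finset.filter_subset _ _
  have key1 : (t + 1) * ∑ τ ∈ Icc 1 N, pord (S τ) ≤ t * (t - 1) * N := by
    rw [Finset.mul_sum]
    calc ∑ τ ∈ Icc 1 N, (t + 1) * pord (S τ)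
        ≤ ∑ τ ∈ Icc 1 N, t * (t - 1) * (S τ).card :=
          Finset.sum_le_sum (fun τ _ => (pord_bound ht (hSsub τ)).1)
      _ = t * (t - 1) * N := by rw [← Finset.mul_sum, exchange2]
  have hchain : 2 * G.edgeSet.ncard ≤ ∑ q ∈ FP, min (f q.1) (f q.2) := by
    rw [hAP, hsplit2]
    exact Finset.sum_le_sum (fun q _ => hE2min q)
  have hbound : 2 * G.edgeSet.ncard ≤ l * (t * (t - 1)) := by
    have h2 : (t + 1) * (2 * G.edgeSet.ncard) ≤ (t + 1) * (l * (t * (t - 1)))  := by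
      calc (t + 1) * (2 * G.edgeSet.ncard) ≤ (t + 1) * ∑ q ∈ FP, min (f q.1) (f q.2) :=
            Nat.mul_le_mul_left _ hchain
        _ = (t + 1) * ∑ τ ∈ Icc 1 N, pord (S τ) := by rw [exchange1]
        _ ≤ t * (t - 1) * N := key1
        _ = (t + 1) * (l * (t * (t - 1))) := by rw [hN]; ring
    exact Nat.le_of_mul_le_mul_left h2 (by omega)
  refine ⟨hbound, ?_⟩
  intro heq
  -- equality analysis
  have hMeq : ∑ q ∈ FP, (E2 q).card = ∑ q ∈ FP, min (f q.1) (f q.2) := by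
    have hub : (t + 1) * ∑ q ∈ FP, min (f q.1) (f q.2) ≤ (t + 1) * (l * (t * (t - 1))) := by
      rw [exchange1]
      calc (t + 1) * ∑ τ ∈ Icc 1 N, pord (S τ) ≤ t * (t - 1) * N := key1
        _ = (t + 1) * (l * (t * (t - 1))) := by rw [hN]; ring
    have hub' : ∑ q ∈ FP, min (f q.1) (f q.2) ≤ l * (t * (t - 1)) :=
      Nat.le_of_mul_le_mul_left hub (by omega)
    have hlb : l * (t * (t - 1)) ≤ ∑ q ∈ FP, (E2 q).card := by
      rw [← heq, hAP, hsplit2]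
    have := Finset.sum_le_sum (s := FP) (fun q _ => hE2min q)
    omega
  have hE2eq : ∀ q ∈ FP, (E2 q).card = min (f q.1) (f q.2) :=
    (Finset.sum_eq_sum_iff_of_le (fun q _ => hE2min q)).1 hMeq
  -- each layer is empty or full
  have hlayer : ∀ τ ∈ Icc 1 N, S τ = ∅ ∨ S τ = range (t + 1) := by
    intro τ hτ
    have hsumeq : ∑ τ ∈ Icc 1 N, (t + 1) * pord (S τ)
        = ∑ τ ∈ Icc 1 N, t * (t - 1) * (S τ).card := by
      have h1 : ∑ q ∈ FP, min (f q.1) (f q.2) = l * (t * (t - 1)) := by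
        have hlb : l * (t * (t - 1)) ≤ ∑ q ∈ FP, (E2 q).card := by
          rw [← heq, hAP, hsplit2]
        have := Finset.sum_le_sum (s := FP) (fun q _ => hE2min q)
        omega
      have h2 : ∑ τ ∈ Icc 1 N, (t + 1) * pord (S τ) = (t + 1) * (l * (t * (t - 1))) := by
        rw [← Finset.mul_sum, ← exchange1, h1]
      have h3 : ∑ τ ∈ Icc 1 N, t * (t - 1) * (S τ).card = t * (t - 1) * N := by
        rw [← Finset.mul_sum, exchange2]
      rw [h2, h3, hN]; ring
    have hpt := (Finset.sum_eq_sum_iff_of_le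
      (fun τ _ => (pord_bound ht (hSsub τ)).1)).1 hsumeq τ hτ
    by_contra hcon
    push_neg at hcon
    obtain ⟨h1, h2⟩ := hcon
    have hne : (S τ).Nonempty := h1
    have hct' : (S τ).card ≤ t := by
      have hle : (S τ).card ≤ t + 1 := by
        have := Finset.card_le_card (hSsub τ)
        simpa using this
      rcases Nat.lt_or_ge (S τ).card (t + 1) with h | h
      · omega
      · exfalso
        exact h2 (Finset.eq_of_subset_of_card_le (hSsub τ) (by simpa using h))
    exact absurd hpt (Nat.ne_of_lt ((pord_bound ht (hSsub τ)).2 hne hct'))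
  -- f is constant = l on range (t+1)
  have hfconst : ∀ i ≤ t, ∀ j ≤ t, f i ≤ f j := by
    intro i hi j hj
    by_contra hcon
    push_neg at hcon
    set τ := f j + 1 with hτ
    have hτmem : τ ∈ Icc 1 N := Finset.mem_Icc.2 ⟨by omega, by have := hfN i; omega⟩
    have hiS : i ∈ S τ := Finset.mem_filter.2 ⟨Finset.mem_range.2 (by omega), by omega⟩
    have hjS : j ∉ S τ := by
      intro h
      have := (Finset.mem_filter.1 h).2
      omega
    rcases hlayer τ hτmem with h | h
    · rw [h] at hiS; simp at hiS
    · rw [h] at hjS; exact hjS (Finset.mem_range.2 (by omega))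
  have hfl : ∀ i ≤ t, f i = l := by
    have hall : ∀ i ≤ t, ∀ j ≤ t, f i = f j :=
      fun i hi j hj => le_antisymm (hfconst i hi j hj) (hfconst j hj i hi)
    intro i hi
    have : ∑ j ∈ range (t + 1), f j = (t + 1) * f i := by
      rw [Finset.sum_congr rfl (fun j hj => hall j (by
        have := Finset.mem_range.1 hj; omega) i hi)]
      simp [Finset.sum_const, Finset.card_range, mul_comm]
    rw [hf_sum, hN] at this
    have := Nat.eq_of_mul_eq_mul_left (show 0 < t + 1 by omega) this
    omega
  -- build MemGFamily
  refine ⟨hct, ?_, hc.1, ?_⟩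
  · intro m hm
    have : {v | c v = m} = ↑(univ.filter fun v => c v = m) := by
      ext v; simp
    rw [this, Set.ncard_coe_finset]
    exact hfl m hm
  · intro m p hm hp hdist x hx
    have hqFP : (m, p) ∈ FP := by
      rw [hFP]
      exact Finset.mem_filter.2 ⟨Finset.mem_product.2
        ⟨Finset.mem_range.2 (by omega), Finset.mem_range.2 (by omega)⟩, hdist⟩
    have hcardE2 : (E2 (m, p)).card = f m := by
      rw [hE2eq (m, p) hqFP]
      have := hfl m hm
      have := hfl p hp
      simp only []
      omega
    -- the fst-projection image of E2 (m,p) is the whole class m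
    have hinj : Set.InjOn Prod.fst (↑(E2 (m, p)) : Set (W × W)) := by
      intro q hq q' hq' hqq
      simp only [Finset.coe_filter, Set.mem_setOf_eq, Finset.mem_univ, true_and, hE2] at hq hq'
      have := unique_nbr hc q.1 q.2 q'.2 hq.2.2 (hqq ▸ hq'.2.2) (by rw [hq.2.1, hq'.2.1])
      exact Prod.ext hqq this
    have himg : (E2 (m, p)).image Prod.fst = univ.filter fun v => c v = m := by
      apply Finset.eq_of_subset_of_card_le
      · intro v hv
        simp only [Finset.mem_image] at hv
        obtain ⟨q, hq, rfl⟩ := hv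
        simp only [hE2, Finset.mem_filter, Finset.mem_univ, true_and] at hq
        simp [hq.1]
      · rw [Finset.card_image_of_injOn hinj, hcardE2]
    have hxmem : x ∈ (E2 (m, p)).image Prod.fst := by
      rw [himg]; simp [hx]
    simp only [Finset.mem_image] at hxmem
    obtain ⟨q, hq, hq1⟩ := hxmem
    simp only [hE2, Finset.mem_filter, Finset.mem_univ, true_and] at hq
    refine ⟨q.2, ⟨hq.2.1, hq1 ▸ hq.2.2⟩, ?_⟩
    intro y ⟨hy1, hy2⟩
    exact unique_nbr hc x y q.2 hy2 (hq1 ▸ hq.2.2) (by rw [hy1, hq.2.1])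




/-- distance two gives a common neighbour -/
lemma common_of_dist_two {W : Type*} {G : SimpleGraph W} {u v : W} (h : G.dist u v = 2) :
    ∃ w, G.Adj u w ∧ G.Adj w v := by
  have hr : G.Reachable u v := by
    by_contra hnr
    rw [(SimpleGraph.dist_eq_zero_iff_eq_or_not_reachable).2 (Or.inr hnr)] at h
    omega
  obtain ⟨p, hp⟩ := hr.exists_walk_length_eq_dist
  rw [h] at hp
  match p, hp with
  | SimpleGraph.Walk.cons h1 (SimpleGraph.Walk.cons h2 SimpleGraph.Walk.nil), _ =>
    exact ⟨_, h1, h2⟩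

lemma memG_coloring {W : Type*} {G : SimpleGraph W} {t l : ℕ} {part : W → ℕ}
    (hmem : MemGFamily G t l part) : IsLambdaColoring G part := by
  obtain ⟨h1, h2, h3, h4⟩ := hmem
  refine ⟨h3, ?_⟩
  intro u v hd hcc
  obtain ⟨w, hw1, hw2⟩ := common_of_dist_two hd
  have huv : u ≠ v := by
    intro h; rw [h, SimpleGraph.dist_self] at hd; omega
  have hdw : 2 ≤ Nat.dist (part w) (part u) := h3 w u hw1.symm
  obtain ⟨y, _, hy2⟩ := h4 (part w) (part u) (h1 w) (h1 u) hdw w rfl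
  exact huv ((hy2 u ⟨rfl, hw1.symm⟩).trans (hy2 v ⟨hcc.symm, hw2⟩).symm)

lemma memG_edges {W : Type*} [Fintype W] {t l : ℕ} (ht : 3 ≤ t) (G : SimpleGraph W)
    {part : W → ℕ} (hmem : MemGFamily G t l part) :
    2 * G.edgeSet.ncard = l * (t * (t - 1)) := by
  classical
  have hc : IsLambdaColoring G part := memG_coloring hmem
  obtain ⟨h1, h2, h3, h4⟩ := hmem
  set f : ℕ → ℕ := fun i => (univ.filter fun v => part v = i).card with hf
  have hfl : ∀ i ≤ t, f i = l := by
    intro i hi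
    have := h2 i hi
    have hset : {v | part v = i} = ↑(univ.filter fun v => part v = i) := by ext v; simp
    rw [hset, Set.ncard_coe_finset] at this
    exact this
  have hE : G.edgeSet.ncard = G.edgeFinset.card := by
    rw [← SimpleGraph.coe_edgeFinset, Set.ncard_coe_finset]
  set AP : Finset (W × W) := univ.filter (fun p : W × W => G.Adj p.1 p.2) with hAPdef
  have hAP : 2 * G.edgeSet.ncard = AP.card := by
    rw [hE, SimpleGraph.two_mul_card_edgeFinset]
  set E2 : ℕ × ℕ → Finset (W × W) :=
    fun q => univ.filter (fun p : W × W => part p.1 = q.1 ∧ part p.2 = q.2 ∧ G.Adj p.1 p.2)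
    with hE2
  set FP : Finset (ℕ × ℕ) :=
    ((range (t + 1)) ×ˢ (range (t + 1))).filter (fun q => 2 ≤ Nat.dist q.1 q.2) with hFP
  have hsplit : AP.card = ∑ q ∈ (range (t + 1)) ×ˢ (range (t + 1)), (E2 q).card := by
    rw [Finset.card_eq_sum_card_fiberwise
      (f := fun p : W × W => (part p.1, part p.2)) (t := (range (t + 1)) ×ˢ (range (t + 1)))
      (fun p hp => Finset.mem_product.2 ⟨Finset.mem_range.2 (Nat.lt_succ_of_le (h1 p.1)),
        Finset.mem_range.2 (Nat.lt_succ_of_le (h1 p.2))⟩)]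
    apply Finset.sum_congr rfl
    intro q _
    congr 1
    ext p
    simp only [hAPdef, hE2, Finset.mem_filter, Finset.mem_univ, true_and, Prod.ext_iff]
    tauto
  have hE2near : ∀ q : ℕ × ℕ, ¬ 2 ≤ Nat.dist q.1 q.2 → (E2 q).card = 0 := by
    intro q hq
    rw [Finset.card_eq_zero]
    ext p
    simp only [hE2, Finset.mem_filter, Finset.mem_univ, true_and, Finset.notMem_empty,
      iff_false]
    rintro ⟨ha, hb, hadj⟩
    exact hq (ha ▸ hb ▸ h3 p.1 p.2 hadj)
  have hsplit2 : AP.card = ∑ q ∈ FP, (E2 q).card := by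
    rw [hsplit, ← Finset.sum_filter_add_sum_filter_not ((range (t + 1)) ×ˢ (range (t + 1)))
      (fun q => 2 ≤ Nat.dist q.1 q.2)]
    rw [Finset.sum_congr rfl (fun q hq => hE2near q (Finset.mem_filter.1 hq).2)]
    simp
    rfl
  have hE2card : ∀ q ∈ FP, (E2 q).card = l := by
    rintro ⟨m, p⟩ hq
    rw [hFP, Finset.mem_filter, Finset.mem_product, Finset.mem_range, Finset.mem_range] at hq
    obtain ⟨⟨hm, hp⟩, hdist⟩ := hq
    have hm' : m ≤ t := by omega
    have hp' : p ≤ t := by omega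
    rw [← hfl m hm']
    apply Finset.card_bij (fun (pr : W × W) _ => pr.1)
    · intro pr hpr
      simp only [hE2, Finset.mem_filter, Finset.mem_univ, true_and] at hpr
      simp [hpr.1]
    · intro pr hpr pr' hpr' hpp
      simp only [hE2, Finset.mem_filter, Finset.mem_univ, true_and] at hpr hpr'
      have := unique_nbr hc pr.1 pr.2 pr'.2 hpr.2.2 (hpp ▸ hpr'.2.2)
        (by rw [hpr.2.1, hpr'.2.1])
      exact Prod.ext hpp this
    · intro x hx
      simp only [Finset.mem_filter, Finset.mem_univ, true_and] at hx
      obtain ⟨y, ⟨hy1, hy2⟩, _⟩ := h4 m p hm' hp' hdist x hx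
      refine ⟨(x, y), ?_, rfl⟩
      simp only [hE2, Finset.mem_filter, Finset.mem_univ, true_and]
      exact ⟨hx, hy1, hy2⟩
  have hFPcard : FP.card = t * (t - 1) := by
    rw [← pord_range (show 1 ≤ t by omega)]
    rfl
  rw [hAP, hsplit2, Finset.sum_congr rfl hE2card, Finset.sum_const, hFPcard]
  simp [mul_comm]

lemma lc_spec {V : Type*} [Fintype V] (G : SimpleGraph V) :
    ∃ c, IsLambdaColoring G c ∧ ∀ v, c v ≤ lambdaChromatic G := by
  classical
  have hne : {t : ℕ | ∃ c : V → ℕ, IsLambdaColoring G c ∧ ∀ v, c v ≤ t}.Nonempty := by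
    refine ⟨2 * Fintype.card V, fun v => 2 * ((Fintype.equivFin V) v : ℕ), ⟨?_, ?_⟩, ?_⟩
    · intro u v huv
      have hne : u ≠ v := huv.ne
      have : ((Fintype.equivFin V) u : ℕ) ≠ ((Fintype.equivFin V) v : ℕ) := by
        intro h
        exact hne ((Fintype.equivFin V).injective (Fin.ext h))
      simp only [Nat.dist]
      omega
    · intro u v hd
      have hne : u ≠ v := by
        intro h; rw [h, SimpleGraph.dist_self] at hd; omega
      have : ((Fintype.equivFin V) u : ℕ) ≠ ((Fintype.equivFin V) v : ℕ) := by
        intro h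
        exact hne ((Fintype.equivFin V).injective (Fin.ext h))
      intro h
      simp only at h
      omega
    · intro v
      have := ((Fintype.equivFin V) v).isLt
      simp only
      omega
  exact Nat.sInf_mem hne



def modGraph (t n : ℕ) : SimpleGraph (Fin n) where
  Adj u v := (u : ℕ) / (t + 1) = (v : ℕ) / (t + 1) ∧
    2 ≤ Nat.dist ((u : ℕ) % (t + 1)) ((v : ℕ) % (t + 1))
  symm := ⟨fun u v h => ⟨h.1.symm, by rw [Nat.dist_comm]; exact h.2⟩⟩
  loopless := ⟨fun u h => by simp [Nat.dist_self] at h⟩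

lemma modGraph_mem (t l n : ℕ) (hn : n = (t + 1) * l) :
    MemGFamily (modGraph t n) t l (fun v : Fin n => (v : ℕ) % (t + 1)) := by
  classical
  have htpos : 0 < t + 1 := by omega
  refine ⟨fun v => Nat.lt_succ_iff.1 (Nat.mod_lt _ htpos), ?_, fun u v h => h.2, ?_⟩
  · intro m hm
    have hset : {v : Fin n | (v : ℕ) % (t + 1) = m} =
        ↑(univ.filter fun v : Fin n => (v : ℕ) % (t + 1) = m) := by ext v; simp
    rw [hset, Set.ncard_coe_finset, show l = (range l).card from (card_range l).symm]
    refine Finset.card_bij (fun v _ => (v : ℕ) / (t + 1)) ?_ ?_ ?_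
    · intro v _
      exact mem_range.2 (Nat.div_lt_of_lt_mul (v.isLt.trans_eq hn))
    · intro v hv v' hv' hq
      simp only [mem_filter, mem_univ, true_and] at hv hv'
      have hq' : (v : ℕ) / (t + 1) = (v' : ℕ) / (t + 1) := hq
      apply Fin.ext
      calc (v : ℕ) = (t + 1) * ((v : ℕ) / (t + 1)) + (v : ℕ) % (t + 1) :=
            (Nat.div_add_mod _ _).symm
        _ = (t + 1) * ((v' : ℕ) / (t + 1)) + (v' : ℕ) % (t + 1) := by rw [hq', hv, hv']
        _ = (v' : ℕ) := Nat.div_add_mod _ _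
    · intro q hq
      have hqlt : q < l := mem_range.1 hq
      have hbound : (t + 1) * q + m < n := by
        calc (t + 1) * q + m < (t + 1) * q + (t + 1) := by omega
          _ = (t + 1) * (q + 1) := by ring
          _ ≤ (t + 1) * l := Nat.mul_le_mul_left _ (by omega)
          _ = n := hn.symm
      refine ⟨⟨(t + 1) * q + m, hbound⟩, ?_, ?_⟩
      · simp only [mem_filter, mem_univ, true_and]
        show ((t + 1) * q + m) % (t + 1) = m
        rw [Nat.mul_add_mod, Nat.mod_eq_of_lt (by omega)]
      · show ((t + 1) * q + m) / (t + 1) = q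
        rw [Nat.mul_add_div htpos, Nat.div_eq_of_lt (show m < t + 1 by omega)]
        omega
  · intro m p hm hp hdist x hx
    simp only at hx
    have hxd : (x : ℕ) / (t + 1) < l := Nat.div_lt_of_lt_mul (x.isLt.trans_eq hn)
    have hbound : (t + 1) * ((x : ℕ) / (t + 1)) + p < n := by
      calc (t + 1) * ((x : ℕ) / (t + 1)) + p
          < (t + 1) * ((x : ℕ) / (t + 1)) + (t + 1) := by omega
        _ = (t + 1) * ((x : ℕ) / (t + 1) + 1) := by ring
        _ ≤ (t + 1) * l := Nat.mul_le_mul_left _ (by omega)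
        _ = n := hn.symm
    set y : Fin n := ⟨(t + 1) * ((x : ℕ) / (t + 1)) + p, hbound⟩ with hy
    have hymod : (y : ℕ) % (t + 1) = p := by
      show ((t + 1) * ((x : ℕ) / (t + 1)) + p) % (t + 1) = p
      rw [Nat.mul_add_mod, Nat.mod_eq_of_lt (show p < t + 1 by omega)]
    have hydiv : (y : ℕ) / (t + 1) = (x : ℕ) / (t + 1) := by
      show ((t + 1) * ((x : ℕ) / (t + 1)) + p) / (t + 1) = (x : ℕ) / (t + 1)
      rw [Nat.mul_add_div htpos, Nat.div_eq_of_lt (show p < t + 1 by omega)]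
      omega
    refine ⟨y, ⟨hymod, ?_, ?_⟩, ?_⟩
    · exact hydiv.symm
    · rw [hx, hymod]; exact hdist
    · rintro y' ⟨hy'm, hy'd, hy'dist⟩
      simp only at hy'm
      apply Fin.ext
      calc (y' : ℕ) = (t + 1) * ((y' : ℕ) / (t + 1)) + (y' : ℕ) % (t + 1) :=
            (Nat.div_add_mod _ _).symm
        _ = (t + 1) * ((y : ℕ) / (t + 1)) + (y : ℕ) % (t + 1) := by
            rw [hy'm, hymod, ← hy'd, hydiv]
        _ = (y : ℕ) := Nat.div_add_mod _ _

lemma modGraph_no_small (t n : ℕ) (ht : 3 ≤ t) (hn : t + 1 ≤ n) {c : Fin n → ℕ}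
    (hc : IsLambdaColoring (modGraph t n) c) : ∃ v, t ≤ c v := by
  by_contra hcon
  push_neg at hcon
  set w : Fin (t + 1) → Fin n := fun m => ⟨(m : ℕ), by omega⟩ with hw
  have hAdjIff : ∀ a b : Fin (t + 1),
      ((modGraph t n).Adj (w a) (w b) ↔ 2 ≤ Nat.dist (a : ℕ) (b : ℕ)) := by
    intro a b
    show ((a : ℕ) / (t + 1) = (b : ℕ) / (t + 1) ∧
      2 ≤ Nat.dist ((a : ℕ) % (t + 1)) ((b : ℕ) % (t + 1))) ↔ _
    rw [Nat.div_eq_of_lt a.isLt, Nat.div_eq_of_lt b.isLt,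
      Nat.mod_eq_of_lt a.isLt, Nat.mod_eq_of_lt b.isLt]
    simp
  have hwne : ∀ a b : Fin (t + 1), a ≠ b → w a ≠ w b := by
    intro a b hab h
    exact hab (Fin.ext (by simpa [hw] using congrArg Fin.val h))
  -- distinct colours for consecutive or far classes
  have hkey : ∀ a b k : Fin (t + 1), a ≠ b →
      2 ≤ Nat.dist (a : ℕ) (k : ℕ) → 2 ≤ Nat.dist (k : ℕ) (b : ℕ) →
      c (w a) ≠ c (w b) := by
    intro a b k hab hk1 hk2
    rcases Nat.lt_or_ge (Nat.dist (a : ℕ) (b : ℕ)) 2 with hd | hd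
    · have h2 : (modGraph t n).dist (w a) (w b) = 2 :=
        dist_eq_two' ((hAdjIff a k).2 hk1) ((hAdjIff k b).2 hk2) (hwne a b hab)
          (fun h => by rw [hAdjIff] at h; omega)
      exact hc.2 (w a) (w b) h2
    · intro h
      have := hc.1 (w a) (w b) ((hAdjIff a b).2 hd)
      rw [h, Nat.dist_self] at this
      omega
  rcases Nat.lt_or_ge t 4 with ht3 | ht4
  · -- t = 3
    have ht' : t = 3 := by omega
    subst ht'
    have a0 : Fin (3 + 1) := ⟨0, by omega⟩
    have h01 : c (w ⟨0, by omega⟩) ≠ c (w ⟨1, by omega⟩) :=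
      hkey ⟨0, by omega⟩ ⟨1, by omega⟩ ⟨3, by omega⟩ (Fin.ne_of_val_ne (by norm_num))
        (by show 2 ≤ Nat.dist 0 3; simp [Nat.dist])
        (by show 2 ≤ Nat.dist 3 1; simp [Nat.dist])
    have h23 : c (w ⟨2, by omega⟩) ≠ c (w ⟨3, by omega⟩) :=
      hkey ⟨2, by omega⟩ ⟨3, by omega⟩ ⟨0, by omega⟩ (Fin.ne_of_val_ne (by norm_num))
        (by show 2 ≤ Nat.dist 2 0; simp [Nat.dist])
        (by show 2 ≤ Nat.dist 0 3; simp [Nat.dist])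
    have ha02 := hc.1 _ _ ((hAdjIff ⟨0, by omega⟩ ⟨2, by omega⟩).2
      (by show 2 ≤ Nat.dist 0 2; simp [Nat.dist]))
    have ha03 := hc.1 _ _ ((hAdjIff ⟨0, by omega⟩ ⟨3, by omega⟩).2
      (by show 2 ≤ Nat.dist 0 3; simp [Nat.dist]))
    have ha13 := hc.1 _ _ ((hAdjIff ⟨1, by omega⟩ ⟨3, by omega⟩).2
      (by show 2 ≤ Nat.dist 1 3; simp [Nat.dist]))
    have hb0 := hcon (w ⟨0, by omega⟩)
    have hb1 := hcon (w ⟨1, by omega⟩)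
    have hb2 := hcon (w ⟨2, by omega⟩)
    have hb3 := hcon (w ⟨3, by omega⟩)
    simp only [Nat.dist] at ha02 ha03 ha13
    omega
  · -- t ≥ 4 : the colouring is injective on w
    have hinj : Function.Injective (fun m : Fin (t + 1) => (⟨c (w m), hcon _⟩ : Fin t)) := by
      intro a b hab
      by_contra hne
      have hcc : c (w a) = c (w b) := by
        have := congrArg Fin.val hab
        simpa using this
      rcases Nat.lt_or_ge (Nat.dist (a : ℕ) (b : ℕ)) 2 with hd | hd
      · -- consecutive : find a common neighbour
        have habv : (a : ℕ) ≠ (b : ℕ) := fun h => hne (Fin.ext h)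
        have hex : ∃ k : ℕ, k < t + 1 ∧ 2 ≤ Nat.dist (a : ℕ) k ∧ 2 ≤ Nat.dist k (b : ℕ) := by
          have ha' := a.isLt
          have hb' := b.isLt
          rcases Nat.lt_or_ge ((a : ℕ) ⊓ (b : ℕ)) 2 with hmin | hmin
          · exact ⟨(a : ℕ) ⊓ (b : ℕ) + 3, by simp [Nat.dist] at hd ⊢; omega⟩
          · exact ⟨(a : ℕ) ⊓ (b : ℕ) - 2, by simp [Nat.dist] at hd ⊢; omega⟩
        obtain ⟨k, hk1, hk2, hk3⟩ := hex
        exact hkey a b ⟨k, hk1⟩ (fun h => hne h) hk2 hk3 hcc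
      · have := hc.1 (w a) (w b) ((hAdjIff a b).2 hd)
        rw [hcc, Nat.dist_self] at this
        omega
    have hcard2 : t + 1 ≤ t := by
      simpa using Fintype.card_le_of_injective _ hinj
    omega

lemma modGraph_lambda (t l n : ℕ) (ht : 3 ≤ t) (hn : n = (t + 1) * l) (hl : 1 ≤ l) :
    lambdaChromatic (modGraph t n) = t := by
  have hmem := modGraph_mem t l n hn
  have hn' : t + 1 ≤ n := by
    rw [hn]; calc t + 1 = (t + 1) * 1 := by ring
      _ ≤ (t + 1) * l := Nat.mul_le_mul_left _ hl
  apply le_antisymm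
  · apply Nat.sInf_le
    exact ⟨fun v : Fin n => (v : ℕ) % (t + 1), memG_coloring hmem,
      fun v => Nat.lt_succ_iff.1 (Nat.mod_lt _ (by omega))⟩
  · by_contra hlt
    push_neg at hlt
    obtain ⟨c, hc, hcb⟩ := lc_spec (modGraph t n)
    obtain ⟨v, hv⟩ := modGraph_no_small t n ht hn' hc
    have := hcb v
    omega


end Stmt17

/-- If `n ≥ t + 1` is a multiple of `t + 1`, an `n`-vertex graph `G` with lambda
chromatic number `t ≥ 3` has the maximum number of edges among all `n`-vertex graphs
with lambda chromatic number `t` iff `G` is a member of `𝖦(t, n/(t+1))`. -/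
theorem stmt_17 {V : Type} [Fintype V] (G : SimpleGraph V) (t n : ℕ) (ht : 3 ≤ t)
    (hn : t + 1 ≤ n) (hdvd : (t + 1) ∣ n) (hcard : Fintype.card V = n)
    (hG : lambdaChromatic G = t) :
    (∀ H : SimpleGraph (Fin n), lambdaChromatic H = t →
        H.edgeSet.ncard ≤ G.edgeSet.ncard) ↔
    (∃ part : V → ℕ, MemGFamily G t (n / (t + 1)) part) := by
  classical
  set l := n / (t + 1) with hl
  have hn' : n = (t + 1) * l := by rw [hl, Nat.mul_div_cancel' hdvd]
  have hl1 : 1 ≤ l := by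
    rcases Nat.eq_zero_or_pos l with h | h
    · rw [h, mul_zero] at hn'; omega
    · exact h
  obtain ⟨c, hc, hcb⟩ := Stmt17.lc_spec G
  rw [hG] at hcb
  have hmbG := Stmt17.main_bound ht G (by rw [hcard, hn']) hc hcb
  constructor
  · intro hmax
    have hmem0 := Stmt17.modGraph_mem t l n hn'
    have hlam0 := Stmt17.modGraph_lambda t l n ht hn' hl1
    have hE0 := Stmt17.memG_edges ht (Stmt17.modGraph t n) hmem0
    have hle := hmax _ hlam0
    have heq : 2 * G.edgeSet.ncard = l * (t * (t - 1)) := by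
      have := hmbG.1
      omega
    exact ⟨c, hmbG.2 heq⟩
  · rintro ⟨part, hpart⟩ H hH
    obtain ⟨cH, hcH, hcHb⟩ := Stmt17.lc_spec H
    rw [hH] at hcHb
    have h1 := (Stmt17.main_bound (l := l) ht H (by rw [Fintype.card_fin, hn']) hcH hcHb).1
    have h2 := Stmt17.memG_edges ht G hpart
    omega
end
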